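/- arXiv:1901.01011 — 9 statements merged into one kernel-verified Lean document; each statement's English description precedes it below -/
import Mathlib

section
/- Let f ∈ L¹(ℝ) and let C > 1 be a real number. Then the set {x ∈ ℝ : |x|/(2C) ≤ Tf(x) ≤ |x|/C} is bounded. -/
open MeasureTheory Filter Set Topology
open scoped Classical

/-- The average of `f` over the interval of radius `r` centered at `x`. -/
noncomputable def avgFn (f : ℝ → ℝ) (x r : ℝ) : ℝ :=
  (1 / (2 * r)) * ∫ y in (-r)..r, f (x + y)

/-- The (uncentered-in-value, centered-in-interval) Hardy–Littlewood maximal function,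
taking values in `[0,∞]`. -/
noncomputable def maxFn (f : ℝ → ℝ) (x : ℝ) : ENNReal :=
  ⨆ (r : ℝ) (_ : 0 < r), ENNReal.ofReal (avgFn (fun y => |f y|) x r)

/-- The set `E_{f,x}` of radii attaining the maximal value. -/
def freqSet (f : ℝ → ℝ) (x : ℝ) : Set ℝ :=
  {r : ℝ | 0 < r ∧ maxFn f x = ENNReal.ofReal (avgFn (fun y => |f y|) x r)}

/-- The frequency function `Tf`. -/
noncomputable def freqFn (f : ℝ → ℝ) (x : ℝ) : ℝ :=
  if (freqSet f x).Nonempty then sInf (freqSet f x) else 0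

lemma avgFn_translate (g : ℝ → ℝ) (x r : ℝ) :
    avgFn g x r = (1 / (2 * r)) * ∫ t in (x - r)..(x + r), g t := by
  unfold avgFn
  rw [intervalIntegral.integral_comp_add_left g x, sub_eq_add_neg]

lemma avgFn_abs_nonneg (f : ℝ → ℝ) (x : ℝ) {r : ℝ} (hr : 0 ≤ r) :
    0 ≤ avgFn (fun y => |f y|) x r := by
  apply mul_nonneg (by positivity)
  exact intervalIntegral.integral_nonneg (by linarith) (fun y _ => abs_nonneg _)

lemma ofReal_avg_le_maxFn (f : ℝ → ℝ) (x : ℝ) {r : ℝ} (hr : 0 < r) :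
    ENNReal.ofReal (avgFn (fun y => |f y|) x r) ≤ maxFn f x :=
  le_iSup₂ (f := fun r (_ : 0 < r) => ENNReal.ofReal (avgFn (fun y => |f y|) x r)) r hr

theorem frequency_level_set_bounded (f : ℝ → ℝ) (hf : Integrable f)
    (C : ℝ) (hC : 1 < C) :
    Bornology.IsBounded {x : ℝ | |x| / (2 * C) ≤ freqFn f x ∧ freqFn f x ≤ |x| / C} := by
  have hC0 : (0 : ℝ) < C := lt_trans one_pos hC
  set g : ℝ → ℝ := fun y => |f y| with hgdef
  have hgnn : ∀ y, 0 ≤ g y := fun y => abs_nonneg _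
  have hgint : Integrable g := hf.abs
  set m : ℝ := ∫ y, g y with hmdef
  by_cases hm : m = 0
  · -- degenerate case: f = 0 a.e.
    have hae : g =ᵐ[volume] 0 := by
      rw [← MeasureTheory.integral_eq_zero_iff_of_nonneg hgnn hgint]
      exact hm.symm ▸ rfl
    have hint0 : ∀ a b : ℝ, (∫ t in a..b, g t) = 0 := by
      intro a b
      have h1 : ∀ c d : ℝ, (∫ t in Set.Ioc c d, g t) = 0 := fun c d =>
        MeasureTheory.integral_eq_zero_of_ae (ae_restrict_of_ae hae)
      rw [intervalIntegral, h1, h1, sub_zero]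
    have havg : ∀ x r : ℝ, avgFn g x r = 0 := by
      intro x r
      rw [avgFn_translate, hint0, mul_zero]
    have hmax : ∀ x, maxFn f x = 0 := by
      intro x
      simp [maxFn, ← hgdef, havg]
    have hfreq : ∀ x, freqFn f x = 0 := by
      intro x
      have hS : freqSet f x = Set.Ioi 0 := by
        ext r
        simp [freqSet, hmax, ← hgdef, havg, Set.mem_Ioi]
      rw [freqFn, if_pos (hS ▸ ⟨1, Set.mem_Ioi.mpr one_pos⟩), hS, csInf_Ioi]
    apply Bornology.IsBounded.subset (Metric.isBounded_closedBall (x := (0:ℝ)) (r := 1))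
    intro x hx
    have h1 := hx.1
    rw [hfreq x] at h1
    have : |x| ≤ 0 := by
      by_contra h
      push_neg at h
      have := div_pos h (by linarith : (0:ℝ) < 2 * C)
      linarith
    simp only [Metric.mem_closedBall, Real.dist_eq, sub_zero]
    linarith [abs_nonneg x]
  · -- main case: m > 0
    have hm0 : 0 < m := lt_of_le_of_ne (MeasureTheory.integral_nonneg hgnn) (Ne.symm hm)
    set ε : ℝ := min (m / 4) (m / (8 * C)) with hεdef
    have hε0 : 0 < ε := lt_min (by linarith) (by positivity)
    -- find R with ∫_{-R}^R g > m - ε and R ≥ 1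
    have htend : Tendsto (fun t : ℝ => ∫ s in (-t)..t, g s) atTop (𝓝 m) :=
      MeasureTheory.intervalIntegral_tendsto_integral hgint tendsto_neg_atTop_atBot tendsto_id
    have hev : ∀ᶠ t : ℝ in atTop, m - ε < ∫ s in (-t)..t, g s :=
      htend.eventually (eventually_gt_nhds (by linarith))
    obtain ⟨R, hRI, hR1⟩ := (hev.and (eventually_ge_atTop (1:ℝ))).exists
    have hR0 : 0 < R := lt_of_lt_of_le one_pos hR1
    set I : ℝ := ∫ s in (-R)..R, g s with hIdef
    set B : ℝ := max R (2 * C * R / (C - 1)) with hBdef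
    apply Bornology.IsBounded.subset (Metric.isBounded_closedBall (x := (0:ℝ)) (r := B))
    intro x hx
    simp only [Set.mem_setOf_eq] at hx
    simp only [Metric.mem_closedBall, Real.dist_eq, sub_zero]
    by_contra hxB
    push_neg at hxB
    have hxR : R < |x| := lt_of_le_of_lt (le_max_left _ _) hxB
    have hx0 : 0 < |x| := lt_trans hR0 hxR
    have hxC : 2 * C * R / (C - 1) < |x| := lt_of_le_of_lt (le_max_right _ _) hxB
    -- freqSet is nonempty
    have hne : (freqSet f x).Nonempty := by
      by_contra hemp
      rw [freqFn, if_neg hemp] at hx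
      have := hx.1
      have h2 : 0 < |x| / (2 * C) := div_pos hx0 (by linarith)
      linarith
    have hbdd : BddBelow (freqSet f x) := ⟨0, fun r hr => hr.1.le⟩
    rw [freqFn, if_pos hne] at hx
    -- obtain a nearly-minimal radius r
    have hlt : sInf (freqSet f x) < |x| * (C + 1) / (2 * C) := by
      apply lt_of_le_of_lt hx.2
      rw [div_lt_div_iff₀ hC0 (by linarith)]
      nlinarith [mul_pos (mul_pos hx0 hC0) (sub_pos.mpr hC)]
    obtain ⟨r, hrS, hrb⟩ := (csInf_lt_iff hbdd hne).mp hlt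
    have hr0 : 0 < r := hrS.1
    have hrge : |x| / (2 * C) ≤ r := le_trans hx.1 (csInf_le hbdd hrS)
    have hrx : r < |x| := by
      apply lt_of_lt_of_le hrb
      rw [div_le_iff₀ (by linarith)]
      nlinarith
    -- the interval [x - r, x + r] avoids [-R, R]
    have hgap : R < |x| - r := by
      have h1 : |x| * (C - 1) / (2 * C) > R := by
        rw [gt_iff_lt, lt_div_iff₀ (by linarith)]
        rw [div_lt_iff₀ (by linarith)] at hxC
        nlinarith
      have h2 : |x| - r > |x| * (C - 1) / (2 * C) := by
        have : r < |x| * (C + 1) / (2 * C) := hrb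
        have hexp : |x| - |x| * (C + 1) / (2 * C) = |x| * (C - 1) / (2 * C) := by
          field_simp; ring
        linarith [sub_lt_sub_left this |x|, hexp ▸ (le_refl (|x| - |x| * (C + 1) / (2 * C)))]
      linarith
    -- upper bound on the integral over [x-r, x+r]
    have hsub : Set.Ioc (x - r) (x + r) ⊆ (Set.Icc (-R) R)ᶜ := by
      intro y hy
      simp only [Set.mem_compl_iff, Set.mem_Icc, not_and_or, not_le]
      rcases le_or_gt 0 x with hxs | hxs
      · right
        have : |x| = x := abs_of_nonneg hxs
        have := hy.1
        linarith [hgap, this]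
      · left
        have : |x| = -x := abs_of_neg hxs
        have := hy.2
        linarith [hgap, this]
    have hIcc : I ≤ ∫ t in Set.Icc (-R) R, g t := by
      rw [MeasureTheory.integral_Icc_eq_integral_Ioc, hIdef,
        intervalIntegral.integral_of_le (by linarith : -R ≤ R)]
    have hcompl : (∫ t in (Set.Icc (-R) R)ᶜ, g t) = m - ∫ t in Set.Icc (-R) R, g t := by
      have := MeasureTheory.integral_add_compl (measurableSet_Icc (a := -R) (b := R)) hgint
      linarith [this]
    have hup : (∫ t in (x - r)..(x + r), g t) < ε := by
      rw [intervalIntegral.integral_of_le (by linarith : x - r ≤ x + r)]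
      calc (∫ t in Set.Ioc (x - r) (x + r), g t)
          ≤ ∫ t in (Set.Icc (-R) R)ᶜ, g t := by
            apply MeasureTheory.setIntegral_mono_set (hgint.integrableOn)
              (Filter.Eventually.of_forall hgnn) (HasSubset.Subset.eventuallyLE hsub)
        _ = m - ∫ t in Set.Icc (-R) R, g t := hcompl
        _ ≤ m - I := by linarith
        _ < ε := by linarith [hRI]
    -- upper bound on avg at r
    have havgr : avgFn g x r < m / (8 * |x|) := by
      rw [avgFn_translate]
      have h1 : (1 : ℝ) / (2 * r) > 0 := by positivity
      calc (1 / (2 * r)) * ∫ t in (x - r)..(x + r), g t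
          < (1 / (2 * r)) * ε := by
            apply mul_lt_mul_of_pos_left hup h1
        _ ≤ (1 / (2 * (|x| / (2 * C)))) * (m / (8 * C)) := by
            apply mul_le_mul
            · apply one_div_le_one_div_of_le (by positivity) (by linarith)
            · exact min_le_right _ _
            · exact hε0.le
            · positivity
        _ = m / (8 * |x|) := by field_simp
    -- lower bound on avg at r₀ = |x| + R
    set r₀ : ℝ := |x| + R with hr₀def
    have hr₀0 : 0 < r₀ := by positivity
    have havgr₀ : m / (8 * |x|) < avgFn g x r₀ := by
      rw [avgFn_translate]
      have hmono : I ≤ ∫ t in (x - r₀)..(x + r₀), g t := by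
        apply intervalIntegral.integral_mono_interval (c := x - r₀) (d := x + r₀)
          _ (by linarith : -R ≤ R) _
          (Filter.Eventually.of_forall hgnn) (hgint.intervalIntegrable)
        · rcases abs_cases x with ⟨h, _⟩ | ⟨h, _⟩ <;> simp only [hr₀def] <;> linarith
        · rcases abs_cases x with ⟨h, _⟩ | ⟨h, _⟩ <;> simp only [hr₀def] <;> linarith
      have hεm : ε ≤ m / 4 := min_le_left _ _
      have hIlow : 3 * m / 4 < I := by linarith
      have key : m / (8 * |x|) < (1 / (2 * r₀)) * I := by
        rw [one_div, ← div_eq_inv_mul, div_lt_div_iff₀ (by positivity) (by positivity),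
          hr₀def]
        nlinarith [mul_lt_mul_of_pos_left hxR hm0,
          mul_lt_mul_of_pos_right hIlow (by positivity : (0:ℝ) < 8 * |x|)]
      calc m / (8 * |x|) < (1 / (2 * r₀)) * I := key
        _ ≤ (1 / (2 * r₀)) * ∫ t in (x - r₀)..(x + r₀), g t := by
            apply mul_le_mul_of_nonneg_left hmono (by positivity)
    -- contradiction via maximality
    have hle : ENNReal.ofReal (avgFn g x r₀) ≤ ENNReal.ofReal (avgFn g x r) := by
      rw [← hrS.2]
      exact ofReal_avg_le_maxFn f x hr₀0
    have hfin : avgFn g x r₀ ≤ avgFn g x r :=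
      (ENNReal.ofReal_le_ofReal_iff (avgFn_abs_nonneg f x hr0.le)).mp hle
    have hpos : 0 < m / (8 * |x|) := by positivity
    linarith
end

section
/- Let f ∈ L¹(ℝ) be a function that is not almost everywhere zero, and let C > 1 be a real number. Then lim_{N→∞} |{x ∈ ℝ : |x| ≤ N and Tf(x) ≤ |x|/C}| / N = 0, where N ranges over the natural numbers and |·| denotes Lebesgue measure. -/
open MeasureTheory Filter Set Topology
open scoped Classical
open scoped ENNReal NNReal

section Aux

variable {f : ℝ → ℝ}

/-- The average as a set integral over a closed ball. -/
lemma avgFn_eq_setIntegral (hf : Integrable f) (x : ℝ) {r : ℝ} (hr : 0 < r) :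
    avgFn (fun y => |f y|) x r = (1 / (2 * r)) * ∫ y in Metric.closedBall x r, |f y| := by
  unfold avgFn
  congr 1
  have h1 : (∫ y in (-r)..r, |f (x + y)|) = ∫ y in (x + -r)..(x + r), |f y| :=
    intervalIntegral.integral_comp_add_left (fun y => |f y|) x
  rw [h1, intervalIntegral.integral_of_le (by linarith), Real.closedBall_eq_Icc,
    ← MeasureTheory.integral_Icc_eq_integral_Ioc]
  congr 1

lemma avgFn_nonneg (x : ℝ) {r : ℝ} (hr : 0 < r) :
    0 ≤ avgFn (fun y => |f y|) x r := by
  unfold avgFn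
  have h1 : 0 ≤ ∫ y in (-r)..r, |f (x + y)| :=
    intervalIntegral.integral_nonneg (by linarith) (fun u _ => abs_nonneg _)
  positivity

lemma le_maxFn (x : ℝ) {r : ℝ} (hr : 0 < r) :
    ENNReal.ofReal (avgFn (fun y => |f y|) x r) ≤ maxFn f x := by
  exact le_iSup₂ (f := fun (r : ℝ) (_ : 0 < r) =>
    ENNReal.ofReal (avgFn (fun y => |f y|) x r)) r hr

lemma avgFn_le (hf : Integrable f) (x : ℝ) {r : ℝ} (hr : 0 < r) :
    avgFn (fun y => |f y|) x r ≤ (∫ y, |f y|) / (2 * r) := by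
  rw [avgFn_eq_setIntegral hf x hr]
  have h2 : (∫ y in Metric.closedBall x r, |f y|) ≤ ∫ y, |f y| :=
    setIntegral_le_integral hf.abs (Filter.Eventually.of_forall fun y => abs_nonneg _)
  have h3 : (0:ℝ) ≤ 1 / (2*r) := by positivity
  calc (1 / (2*r)) * ∫ y in Metric.closedBall x r, |f y|
      ≤ (1 / (2*r)) * ∫ y, |f y| := mul_le_mul_of_nonneg_left h2 h3
    _ = (∫ y, |f y|) / (2 * r) := by ring

/-- Continuity of the averages in the radius, on `(0, ∞)`. -/
lemma continuousOn_avgFn (hf : Integrable f) (x : ℝ) :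
    ContinuousOn (fun r => avgFn (fun y => |f y|) x r) (Set.Ioi 0) := by
  have hint : Integrable (fun y => |f (x + y)|) := (hf.comp_add_left x).abs
  have hP : Continuous (fun t => ∫ y in (0:ℝ)..t, |f (x + y)|) :=
    intervalIntegral.continuous_primitive
      (fun a b => hint.intervalIntegrable) 0
  have hPc : Continuous (fun r : ℝ => (∫ y in (0:ℝ)..r, |f (x + y)|)
      - ∫ y in (0:ℝ)..(-r), |f (x + y)|) := (hP.sub (hP.comp continuous_neg))
  have heq : ∀ r ∈ Set.Ioi (0:ℝ), (1 / (2*r)) * ((∫ y in (0:ℝ)..r, |f (x + y)|)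
      - ∫ y in (0:ℝ)..(-r), |f (x + y)|) = avgFn (fun y => |f y|) x r := by
    intro r _
    unfold avgFn
    congr 1
    have hsymm : (∫ y in (0:ℝ)..(-r), |f (x + y)|)
        = - ∫ y in (-r)..(0:ℝ), |f (x + y)| := intervalIntegral.integral_symm _ _
    have hadd := intervalIntegral.integral_add_adjacent_intervals
      (a := -r) (b := 0) (c := r) (f := fun y => |f (x + y)|) (μ := volume)
      hint.intervalIntegrable hint.intervalIntegrable
    show (∫ y in (0:ℝ)..r, |f (x + y)|) - (∫ y in (0:ℝ)..(-r), |f (x + y)|)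
        = ∫ y in (-r)..r, |f (x + y)|
    linarith
  refine ContinuousOn.congr ?_ (fun r hr => (heq r hr).symm)
  apply ContinuousOn.mul
  · apply ContinuousOn.div continuousOn_const (by fun_prop)
    intro r hr
    have : (0:ℝ) < r := hr
    positivity
  · exact hPc.continuousOn

/-- Almost everywhere, the averages tend to `|f x|` as the radius tends to `0`. -/
lemma ae_tendsto_avgFn (hf : Integrable f) :
    ∀ᵐ x : ℝ, Tendsto (fun r => avgFn (fun y => |f y|) x r) (𝓝[>] 0) (𝓝 |f x|) := by
  filter_upwards [IsUnifLocDoublingMeasure.ae_tendsto_average (μ := (volume : Measure ℝ))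
    (hf.abs.locallyIntegrable) 1] with x hx
  have hmem : ∀ᶠ r in 𝓝[>] (0:ℝ), x ∈ Metric.closedBall x (1 * r) := by
    filter_upwards [self_mem_nhdsWithin] with r hr
    have : (0:ℝ) < r := hr
    exact Metric.mem_closedBall_self (by linarith)
  have h := hx (fun r : ℝ => x) id tendsto_id hmem
  refine h.congr' ?_
  filter_upwards [self_mem_nhdsWithin] with r hr
  have hrpos : (0:ℝ) < r := hr
  show (⨍ y in Metric.closedBall x (id r), |f y|) = avgFn (fun y => |f y|) x r
  simp only [id]
  rw [setAverage_eq, Real.volume_real_closedBall hrpos.le, avgFn_eq_setIntegral hf x hrpos,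
    smul_eq_mul, one_div]

/-- If the supremum is not attained, then (a.e.) the maximal function is at most `|f x|`. -/
lemma maxFn_le_of_not_attained (hf : Integrable f) :
    ∀ᵐ x : ℝ, ¬ (freqSet f x).Nonempty → maxFn f x ≤ ENNReal.ofReal |f x| := by
  filter_upwards [ae_tendsto_avgFn hf] with x hx hemp
  set A : ℝ → ℝ := fun r => avgFn (fun y => |f y|) x r with hA
  by_contra hcon
  push_neg at hcon
  -- there is a radius with average exceeding |f x|
  obtain ⟨r₀, hr₀pos, hr₀⟩ : ∃ r₀ > 0, |f x| < A r₀ := by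
    by_contra h
    push_neg at h
    refine absurd (iSup₂_le (fun r hr => ENNReal.ofReal_le_ofReal (h r hr))) ?_
    exact not_le_of_gt hcon
  have hAr₀pos : 0 < A r₀ := lt_of_le_of_lt (abs_nonneg _) hr₀
  set I : ℝ := ∫ y, |f y| with hI
  have hInonneg : 0 ≤ I := integral_nonneg fun y => abs_nonneg _
  -- small radii have small averages
  obtain ⟨δ₁, hδ₁pos, hδ₁⟩ : ∃ δ₁ > 0, ∀ r, 0 < r → r < δ₁ → A r < A r₀ := by
    have hev : ∀ᶠ r in 𝓝[>] (0:ℝ), A r < A r₀ := hx.eventually_lt_const hr₀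
    rw [eventually_nhdsWithin_iff] at hev
    obtain ⟨ε, hεpos, hε⟩ := Metric.eventually_nhds_iff.1 hev
    exact ⟨ε, hεpos, fun r h1 h2 => hε (by
      simpa [Real.dist_eq, abs_of_pos h1] using h2) h1⟩
  set δ := min δ₁ r₀ with hδ
  have hδpos : 0 < δ := lt_min hδ₁pos hr₀pos
  set R₁ : ℝ := max r₀ (I / A r₀) with hR₁
  have hr₀R₁ : r₀ ≤ R₁ := le_max_left _ _
  have hδR₁ : δ ≤ R₁ := le_trans (min_le_right _ _) hr₀R₁
  have hlarge : ∀ r, R₁ < r → A r < A r₀ := by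
    intro r hr
    have hrpos : 0 < r := lt_of_lt_of_le hr₀pos (le_trans hr₀R₁ hr.le)
    have h1 : A r ≤ I / (2 * r) := avgFn_le hf x hrpos
    have h2 : I / A r₀ < r := lt_of_le_of_lt (le_max_right _ _) hr
    have h3 : I < r * A r₀ := by
      rw [div_lt_iff₀ hAr₀pos] at h2; linarith
    calc A r ≤ I / (2 * r) := h1
      _ < A r₀ := by rw [div_lt_iff₀ (by positivity)]; nlinarith
  -- maximum on the compact interval
  have hcomp : IsCompact (Set.Icc δ R₁) := isCompact_Icc
  have hsub : Set.Icc δ R₁ ⊆ Set.Ioi 0 := fun r hr => lt_of_lt_of_le hδpos hr.1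
  obtain ⟨rs, hrsmem, hrsmax⟩ := hcomp.exists_isMaxOn ⟨r₀, ⟨min_le_right _ _, hr₀R₁⟩⟩
    ((continuousOn_avgFn hf x).mono hsub)
  have hrspos : 0 < rs := lt_of_lt_of_le hδpos hrsmem.1
  have hr₀rs : A r₀ ≤ A rs := hrsmax ⟨min_le_right _ _, hr₀R₁⟩
  have hkey : ∀ r, 0 < r → A r ≤ A rs := by
    intro r hrpos
    rcases lt_or_ge r δ with h | h
    · exact le_trans (hδ₁ r hrpos (lt_of_lt_of_le h (min_le_left _ _))).le hr₀rs
    rcases le_or_gt r R₁ with h' | h'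
    · exact hrsmax ⟨h, h'⟩
    · exact le_trans (hlarge r h').le hr₀rs
  have hattained : maxFn f x = ENNReal.ofReal (A rs) := by
    refine le_antisymm (iSup₂_le fun r hr => ENNReal.ofReal_le_ofReal (hkey r hr)) ?_
    exact le_maxFn x hrspos
  exact hemp ⟨rs, hrspos, hattained⟩

/-- Vitali-type weak estimate. -/
lemma vitali_weak (ν : Measure ℝ) (lam R : ℝ) (hlam : 0 < lam) (s : Set ℝ)
    (hs : ∀ x ∈ s, ∃ r, 0 < r ∧ r ≤ R ∧
      ENNReal.ofReal (lam * (2 * r)) ≤ ν (Metric.closedBall x r)) :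
    volume s ≤ ENNReal.ofReal (4 / lam) * ν Set.univ := by
  choose! r hrpos hrR hrν using hs
  obtain ⟨u, hus, hdisj, hcov⟩ := Vitali.exists_disjoint_subfamily_covering_enlargement_closedBall
    s id r R (fun a ha => hrR a ha) 4 (by norm_num)
  simp only [id] at hdisj hcov
  have hucnt : u.Countable := by
    apply hdisj.countable_of_nonempty_interior
    intro b hb
    refine ⟨b, ?_⟩
    exact Metric.ball_subset_interior_closedBall (Metric.mem_ball_self (hrpos b (hus hb)))
  have hcover : s ⊆ ⋃ b ∈ u, Metric.closedBall b (4 * r b) := by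
    intro a ha
    obtain ⟨b, hbu, hsub⟩ := hcov a ha
    exact Set.mem_biUnion hbu (hsub (Metric.mem_closedBall_self (hrpos a ha).le))
  calc volume s ≤ volume (⋃ b ∈ u, Metric.closedBall b (4 * r b)) := measure_mono hcover
    _ ≤ ∑' b : u, volume (Metric.closedBall (b : ℝ) (4 * r b)) :=
        measure_biUnion_le volume hucnt _
    _ ≤ ∑' b : u, ENNReal.ofReal (4 / lam) * ν (Metric.closedBall (b : ℝ) (r b)) := by
        refine ENNReal.tsum_le_tsum fun b => ?_
        have hb : (b : ℝ) ∈ s := hus b.2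
        have h1 : volume (Metric.closedBall (b : ℝ) (4 * r b))
            = ENNReal.ofReal (2 * (4 * r b)) := Real.volume_closedBall _ _
        have h2 : ENNReal.ofReal (2 * (4 * r b))
            ≤ ENNReal.ofReal (4 / lam) * ENNReal.ofReal (lam * (2 * r b)) := by
          rw [← ENNReal.ofReal_mul (by positivity)]
          apply ENNReal.ofReal_le_ofReal
          have heq : 4 / lam * (lam * (2 * r b)) = 8 * r b := by
            field_simp
            ring
          rw [heq]
          linarith
        calc volume (Metric.closedBall (b : ℝ) (4 * r b))
            = ENNReal.ofReal (2 * (4 * r b)) := h1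
          _ ≤ ENNReal.ofReal (4 / lam) * ENNReal.ofReal (lam * (2 * r b)) := h2
          _ ≤ ENNReal.ofReal (4 / lam) * ν (Metric.closedBall (b : ℝ) (r b)) :=
              mul_le_mul_right (hrν b hb) _
    _ = ENNReal.ofReal (4 / lam) * ∑' b : u, ν (Metric.closedBall (b : ℝ) (r b)) :=
        ENNReal.tsum_mul_left
    _ ≤ ENNReal.ofReal (4 / lam) * ν Set.univ := by
        apply mul_le_mul_right
        rw [← measure_biUnion hucnt hdisj (fun b _ => Metric.isClosed_closedBall.measurableSet)]
        exact measure_mono (Set.subset_univ _)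

lemma integral_abs_pos' (hf : Integrable f) (hf0 : ¬ f =ᵐ[volume] 0) :
    0 < ∫ y, |f y| := by
  rcases (integral_nonneg (f := fun y => |f y|) (fun y => abs_nonneg (f y))).lt_or_eq with h | h
  · exact h
  exfalso
  have h0 : (fun y => |f y|) =ᵐ[volume] 0 :=
    (integral_eq_zero_iff_of_nonneg (fun y => abs_nonneg (f y)) hf.abs).1 h.symm
  apply hf0
  filter_upwards [h0] with y hy
  simpa using hy

lemma tendsto_setIntegral_Icc' (hf : Integrable f) :
    Tendsto (fun n : ℕ => ∫ y in Set.Icc (-(n:ℝ)) n, |f y|) atTop (𝓝 (∫ y, |f y|)) := by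
  have hU : ⋃ n : ℕ, Set.Icc (-(n:ℝ)) (n:ℝ) = Set.univ := by
    ext y
    simp only [Set.mem_iUnion, Set.mem_Icc, Set.mem_univ, iff_true]
    obtain ⟨n, hn⟩ := exists_nat_ge |y|
    exact ⟨n, by cases abs_cases y <;> linarith, by cases abs_cases y <;> linarith⟩
  have hmono : Monotone (fun n : ℕ => Set.Icc (-(n:ℝ)) (n:ℝ)) := by
    intro m n hmn
    exact Set.Icc_subset_Icc (neg_le_neg (by exact_mod_cast hmn)) (by exact_mod_cast hmn)
  have h := tendsto_setIntegral_of_monotone (μ := volume) (f := fun y => |f y|)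
    (fun n : ℕ => measurableSet_Icc) hmono (by rw [hU]; exact hf.abs.integrableOn)
  rwa [hU, setIntegral_univ] at h

lemma maxFn_lower (hf : Integrable f) {R₀ x NR c : ℝ} (hc : 0 ≤ c) (hR₀ : 0 < R₀)
    (hR : R₀ ≤ |x|) (hxN : |x| ≤ NR)
    (hhalf : c ≤ ∫ y in Set.Icc (-R₀) R₀, |f y|) :
    ENNReal.ofReal (c / (4 * NR)) ≤ maxFn f x := by
  have hxpos : 0 < |x| := lt_of_lt_of_le hR₀ hR
  have h2x : 0 < 2 * |x| := by linarith
  refine le_trans ?_ (le_maxFn x h2x)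
  apply ENNReal.ofReal_le_ofReal
  rw [avgFn_eq_setIntegral hf x h2x]
  have hsub : Set.Icc (-R₀) R₀ ⊆ Metric.closedBall x (2 * |x|) := by
    rw [Real.closedBall_eq_Icc]
    apply Set.Icc_subset_Icc
    · rcases abs_cases x with ⟨e1, e2⟩ | ⟨e1, e2⟩ <;> linarith
    · rcases abs_cases x with ⟨e1, e2⟩ | ⟨e1, e2⟩ <;> linarith
  have hmono : (∫ y in Set.Icc (-R₀) R₀, |f y|)
      ≤ ∫ y in Metric.closedBall x (2 * |x|), |f y| :=
    setIntegral_mono_set hf.abs.integrableOn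
      (Filter.Eventually.of_forall fun y => abs_nonneg _) (HasSubset.Subset.eventuallyLE hsub)
  have key : c ≤ ∫ y in Metric.closedBall x (2 * |x|), |f y| := le_trans hhalf hmono
  have hNRpos : 0 < NR := lt_of_lt_of_le hxpos hxN
  have hnn : 0 ≤ ∫ y in Metric.closedBall x (2 * |x|), |f y| := le_trans hc key
  calc c / (4 * NR) ≤ (∫ y in Metric.closedBall x (2 * |x|), |f y|) / (4 * |x|) :=
        div_le_div₀ hnn key (by linarith) (by linarith)
    _ = 1 / (2 * (2 * |x|)) * ∫ y in Metric.closedBall x (2 * |x|), |f y| := by ring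

lemma tendsto_tail' (hf : Integrable f) :
    Tendsto (fun n : ℕ =>
      (volume.withDensity fun y : ℝ => (‖f y‖₊ : ℝ≥0∞)) {y : ℝ | (n:ℝ) ≤ |y|})
      atTop (𝓝 0) := by
  set ν := volume.withDensity fun y : ℝ => (‖f y‖₊ : ℝ≥0∞) with hν
  have hmeas : ∀ n : ℕ, MeasurableSet {y : ℝ | (n:ℝ) ≤ |y|} := fun n =>
    (isClosed_le continuous_const _root_.continuous_abs).measurableSet
  have hanti : Antitone (fun n : ℕ => {y : ℝ | (n:ℝ) ≤ |y|}) := by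
    intro m n hmn y hy
    have hmn' : (m:ℝ) ≤ (n:ℝ) := Nat.cast_le.mpr hmn
    exact le_trans hmn' hy
  have hfin : ν {y : ℝ | ((0:ℕ):ℝ) ≤ |y|} ≠ ⊤ := by
    have huniv : ν Set.univ = ∫⁻ y, (‖f y‖₊ : ℝ≥0∞) := by
      rw [hν, withDensity_apply _ MeasurableSet.univ, Measure.restrict_univ]
    refine ne_top_of_le_ne_top ?_ (measure_mono (Set.subset_univ _))
    rw [huniv]
    exact hf.2.ne
  have h := tendsto_measure_iInter_atTop (μ := ν)
    (fun n => (hmeas n).nullMeasurableSet) hanti ⟨0, hfin⟩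
  have hempty : ⋂ n : ℕ, {y : ℝ | (n:ℝ) ≤ |y|} = (∅ : Set ℝ) := by
    ext y
    simp only [Set.mem_iInter, Set.mem_setOf_eq, Set.mem_empty_iff_false, iff_false,
      not_forall, not_le]
    obtain ⟨n, hn⟩ := exists_nat_gt |y|
    exact ⟨n, hn⟩
  rw [hempty, measure_empty] at h
  exact h

end Aux

set_option maxHeartbeats 2000000 in
theorem frequency_level_set_density_zero (f : ℝ → ℝ) (hf : Integrable f)
    (hf0 : ¬ f =ᵐ[volume] 0) (C : ℝ) (hC : 1 < C) :
    Tendsto (fun N : ℕ =>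
        (volume {x : ℝ | |x| ≤ (N : ℝ) ∧ freqFn f x ≤ |x| / C}).toReal / (N : ℝ))
      atTop (nhds 0) := by
  have hFi : Integrable (fun y => |f y|) := hf.abs
  set I : ℝ := ∫ y, |f y| with hIdef
  have hI : 0 < I := integral_abs_pos' hf hf0
  -- choice of R₀ capturing half the mass
  obtain ⟨R₀, hR₀pos, hR₀half⟩ : ∃ R₀ : ℝ, 0 < R₀ ∧ I/2 ≤ ∫ y in Set.Icc (-R₀) R₀, |f y| := by
    have h := tendsto_setIntegral_Icc' hf
    have hev : ∀ᶠ n : ℕ in atTop, I/2 < ∫ y in Set.Icc (-(n:ℝ)) (n:ℝ), |f y| :=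
      h.eventually_const_lt (by linarith)
    obtain ⟨n, hn1, hn2⟩ := ((eventually_ge_atTop 1).and hev).exists
    exact ⟨n, by exact_mod_cast Nat.lt_of_lt_of_le Nat.zero_lt_one hn1, hn2.le⟩
  set ν' := volume.withDensity fun y : ℝ => (‖f y‖₊ : ℝ≥0∞) with hν'
  rw [NormedAddCommGroup.tendsto_nhds_zero]
  intro ε hε
  set δ : ℝ := min (1/2) (ε/8) with hδdef
  have hδpos : 0 < δ := lt_min (by norm_num) (by linarith)
  have hδle : δ ≤ ε/8 := min_le_right _ _
  have hδ1 : δ ≤ 1/2 := min_le_left _ _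
  have hCpos : 0 < C := by linarith
  have hCinv : 1/C < 1 := by rw [div_lt_one hCpos]; exact hC
  have hCinvpos : 0 < 1/C := by positivity
  set κ : ℝ := δ * (1 - 1/C) / 2 with hκdef
  have hκpos : 0 < κ := by
    apply div_pos (mul_pos hδpos (by linarith)) two_pos
  have hκδ : κ < δ := by nlinarith
  -- tail cutoff
  obtain ⟨m, hm⟩ : ∃ m : ℕ, ν' {y : ℝ | (m:ℝ) ≤ |y|} < ENNReal.ofReal (ε * I / 80) := by
    have ht := tendsto_tail' hf
    have hpos : (0:ℝ≥0∞) < ENNReal.ofReal (ε * I / 80) := by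
      rw [ENNReal.ofReal_pos]; positivity
    exact (ht.eventually_lt_const hpos).exists
  -- eventual conditions on N
  have hev1 : ∀ᶠ N : ℕ in atTop, R₀ ≤ δ * (N:ℝ) := by
    have h := (tendsto_natCast_atTop_atTop (R := ℝ)).const_mul_atTop hδpos
    exact h.eventually_ge_atTop R₀
  have hev2 : ∀ᶠ N : ℕ in atTop, (m:ℝ) ≤ κ * (N:ℝ) := by
    have h := (tendsto_natCast_atTop_atTop (R := ℝ)).const_mul_atTop hκpos
    exact h.eventually_ge_atTop (m:ℝ)
  filter_upwards [hev1, hev2, eventually_ge_atTop 1] with N h1 h2 hN1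
  -- notation for this fixed N
  have hNpos : (0:ℝ) < (N:ℝ) := by exact_mod_cast Nat.lt_of_lt_of_le Nat.zero_lt_one hN1
  set NR : ℝ := (N:ℝ) with hNR
  set lam : ℝ := I / (8 * NR) with hlam
  have hlampos : 0 < lam := by positivity
  set c : ℝ := κ * NR with hcdef
  have hcpos : 0 < c := mul_pos hκpos hNpos
  have hcm : (m:ℝ) ≤ c := h2
  set region : Set ℝ := {y : ℝ | c ≤ |y|} with hregion
  have hregmeas : MeasurableSet region :=
    (isClosed_le continuous_const _root_.continuous_abs).measurableSet
  set ν : Measure ℝ := ν'.restrict region with hνdef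
  -- lower bound for the maximal function in the relevant range
  have hlower : ∀ x : ℝ, R₀ ≤ |x| → |x| ≤ NR → ENNReal.ofReal lam ≤ maxFn f x := by
    intro x hx1 hx2
    have heq : lam = (I/2) / (4 * NR) := by rw [hlam]; ring
    rw [heq]
    exact maxFn_lower hf (by positivity) hR₀pos hx1 hx2 hR₀half
  -- total mass of ν is small
  have hν_le : ν Set.univ ≤ ENNReal.ofReal (ε * I / 80) := by
    calc ν Set.univ = ν' region := by
          rw [hνdef, Measure.restrict_apply' hregmeas, Set.univ_inter]
      _ ≤ ν' {y : ℝ | (m:ℝ) ≤ |y|} := measure_mono (fun y hy => le_trans hcm hy)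
      _ ≤ ENNReal.ofReal (ε * I / 80) := hm.le
  set E := {x : ℝ | |x| ≤ NR ∧ freqFn f x ≤ |x| / C} with hEdef
  set Z := {x : ℝ | ¬ (¬ (freqSet f x).Nonempty → maxFn f x ≤ ENNReal.ofReal |f x|)} with hZdef
  have hZ0 : volume Z = 0 := ae_iff.1 (maxFn_le_of_not_attained hf)
  set s₂ := {x : ℝ | ENNReal.ofReal lam ≤ (‖f x‖₊ : ℝ≥0∞)} ∩ region with hs₂def
  set sA := {x : ℝ | x ∈ E ∧ δ * NR < |x| ∧ (freqSet f x).Nonempty} with hsAdef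
  -- case A: weak type bound via Vitali
  have hA : ∀ x ∈ sA, ∃ r, 0 < r ∧ r ≤ 2 * NR ∧
      ENNReal.ofReal (lam * (2 * r)) ≤ ν (Metric.closedBall x r) := by
    rintro x ⟨hxE, hxd, hne⟩
    obtain ⟨hxN, hxT⟩ := hxE
    have hxT' : sInf (freqSet f x) ≤ |x| / C := by
      unfold freqFn at hxT
      rwa [if_pos hne] at hxT
    obtain ⟨r, hrmem, hrlt⟩ := Real.lt_sInf_add_pos hne hcpos
    obtain ⟨hrpos, hrattain⟩ := hrmem
    have hrub : r < |x| / C + c := by linarith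
    have hxR₀ : R₀ ≤ |x| := by linarith
    have hball : Metric.closedBall x r ⊆ region := by
      intro y hy
      rw [Metric.mem_closedBall, Real.dist_eq] at hy
      show c ≤ |y|
      have e3 : |x| - r ≤ |y| := by
        have h := abs_sub_abs_le_abs_sub x y
        rw [abs_sub_comm x y] at h
        linarith
      have e1 : δ * NR * (1 - 1/C) < |x| * (1 - 1/C) :=
        mul_lt_mul_of_pos_right hxd (by linarith)
      have e2 : δ * NR * (1 - 1/C) = 2 * c := by rw [hcdef, hκdef]; ring
      have e4 : |x| * (1 - 1/C) = |x| - |x| / C := by ring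
      linarith
    have hrle : r ≤ 2 * NR := by
      have hd1 : |x| / C ≤ |x| := div_le_self (abs_nonneg x) hC.le
      have hd2 : c ≤ NR := by nlinarith
      linarith
    refine ⟨r, hrpos, hrle, ?_⟩
    have havg0 : 0 ≤ avgFn (fun y => |f y|) x r := avgFn_nonneg x hrpos
    have hml : ENNReal.ofReal lam ≤ ENNReal.ofReal (avgFn (fun y => |f y|) x r) := by
      rw [← hrattain]
      exact hlower x hxR₀ hxN
    have hlam_le : lam ≤ avgFn (fun y => |f y|) x r :=
      (ENNReal.ofReal_le_ofReal_iff havg0).1 hml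
    rw [avgFn_eq_setIntegral hf x hrpos] at hlam_le
    have h2r : (0:ℝ) < 2 * r := by linarith
    have hint : lam * (2 * r) ≤ ∫ y in Metric.closedBall x r, |f y| := by
      have := mul_le_mul_of_nonneg_right hlam_le h2r.le
      calc lam * (2 * r) ≤ (1 / (2*r) * ∫ y in Metric.closedBall x r, |f y|) * (2*r) := this
        _ = ∫ y in Metric.closedBall x r, |f y| := by field_simp
    have hballmeas : MeasurableSet (Metric.closedBall x r) :=
      Metric.isClosed_closedBall.measurableSet
    have hofReal : ENNReal.ofReal (∫ y in Metric.closedBall x r, |f y|)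
        = ∫⁻ y in Metric.closedBall x r, (‖f y‖₊ : ℝ≥0∞) := by
      rw [ofReal_integral_eq_lintegral_ofReal hFi.restrict
        (Filter.Eventually.of_forall fun y => abs_nonneg _)]
      exact lintegral_congr fun y => (Real.enorm_eq_ofReal_abs (f y)).symm
    have hνball : ν (Metric.closedBall x r)
        = ∫⁻ y in Metric.closedBall x r, (‖f y‖₊ : ℝ≥0∞) := by
      rw [hνdef, Measure.restrict_apply' hregmeas, Set.inter_eq_left.2 hball, hν',
        withDensity_apply _ hballmeas]
    calc ENNReal.ofReal (lam * (2 * r))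
        ≤ ENNReal.ofReal (∫ y in Metric.closedBall x r, |f y|) :=
          ENNReal.ofReal_le_ofReal hint
      _ = ∫⁻ y in Metric.closedBall x r, (‖f y‖₊ : ℝ≥0∞) := hofReal
      _ = ν (Metric.closedBall x r) := hνball.symm
  have hsA : volume sA ≤ ENNReal.ofReal (4 / lam) * ν Set.univ :=
    vitali_weak ν lam (2 * NR) hlampos sA hA
  -- case B: Markov bound
  have hmarkov : volume s₂ ≤ ENNReal.ofReal (1 / lam) * ν Set.univ := by
    have hν_univ : ν Set.univ = ∫⁻ y in region, (‖f y‖₊ : ℝ≥0∞) := by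
      rw [hνdef, Measure.restrict_apply' hregmeas, Set.univ_inter, hν',
        withDensity_apply _ hregmeas]
    have hfr : AEStronglyMeasurable f (volume.restrict region) := hf.1.restrict
    have hmk := mul_meas_ge_le_lintegral₀ (μ := volume.restrict region)
      (hfr.enorm) (ENNReal.ofReal lam)
    have hs₂vol : volume s₂
        = (volume.restrict region) {x : ℝ | ENNReal.ofReal lam ≤ (‖f x‖₊ : ℝ≥0∞)} := by
      rw [Measure.restrict_apply' hregmeas]
    rw [hs₂vol, hν_univ]
    rw [mul_comm] at hmk
    rw [← ENNReal.le_div_iff_mul_le (Or.inl (by simp [ENNReal.ofReal_eq_zero]; linarith))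
      (Or.inl ENNReal.ofReal_ne_top)] at hmk
    refine le_trans hmk ?_
    rw [ENNReal.div_eq_inv_mul, ← ENNReal.ofReal_inv_of_pos hlampos, one_div]
    exact le_rfl
  -- covering of E
  have hEsub : E ⊆ Set.Icc (-(δ * NR)) (δ * NR) ∪ (sA ∪ (s₂ ∪ Z)) := by
    intro x hx
    rcases le_or_gt |x| (δ * NR) with hle | hgt
    · exact Or.inl (⟨neg_le_of_abs_le hle, le_of_abs_le hle⟩)
    right
    by_cases hne : (freqSet f x).Nonempty
    · exact Or.inl ⟨hx, hgt, hne⟩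
    right
    by_cases hz : x ∈ Z
    · exact Or.inr hz
    left
    have hP : maxFn f x ≤ ENNReal.ofReal |f x| := by
      rw [hZdef, Set.mem_setOf_eq, not_not] at hz
      exact hz hne
    have hxR₀ : R₀ ≤ |x| := by linarith
    have hlow := hlower x hxR₀ hx.1
    have hfl : ENNReal.ofReal lam ≤ ENNReal.ofReal |f x| := le_trans hlow hP
    constructor
    · show ENNReal.ofReal lam ≤ (‖f x‖₊ : ℝ≥0∞)
      rwa [← enorm_eq_nnnorm, Real.enorm_eq_ofReal_abs]
    · show c ≤ |x|
      have hcd : c < δ * NR := by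
        rw [hcdef]
        exact mul_lt_mul_of_pos_right hκδ hNpos
      linarith
  -- measure bound
  have hvol : volume E ≤ ENNReal.ofReal (2 * (δ * NR))
      + (ENNReal.ofReal (4 / lam) * ν Set.univ
        + (ENNReal.ofReal (1 / lam) * ν Set.univ + 0)) := by
    refine le_trans (measure_mono hEsub) ?_
    refine le_trans (measure_union_le _ _) (add_le_add ?_ ?_)
    · rw [Real.volume_Icc]
      apply ENNReal.ofReal_le_ofReal
      linarith
    refine le_trans (measure_union_le _ _) (add_le_add hsA ?_)
    refine le_trans (measure_union_le _ _) (add_le_add hmarkov (le_of_eq hZ0))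
  -- pass to real numbers
  have hT : volume E ≤ ENNReal.ofReal (2 * (δ * NR) + (5 / lam) * (ε * I / 80)) := by
    refine le_trans hvol ?_
    have h5 : ENNReal.ofReal (4 / lam) * ν Set.univ
        + (ENNReal.ofReal (1 / lam) * ν Set.univ + 0)
        = ENNReal.ofReal (5 / lam) * ν Set.univ := by
      have h45 : (4:ℝ)/lam + 1/lam = 5/lam := by
        rw [← add_div]
        norm_num
      rw [add_zero, ← add_mul, ← ENNReal.ofReal_add (by positivity) (by positivity), h45]
    rw [h5]
    calc ENNReal.ofReal (2*(δ*NR)) + ENNReal.ofReal (5/lam) * ν Set.univ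
        ≤ ENNReal.ofReal (2*(δ*NR)) + ENNReal.ofReal ((5/lam) * (ε*I/80)) := by
          apply add_le_add_right
          calc ENNReal.ofReal (5 / lam) * ν Set.univ
              ≤ ENNReal.ofReal (5 / lam) * ENNReal.ofReal (ε * I / 80) :=
                mul_le_mul_right hν_le _
            _ = ENNReal.ofReal ((5 / lam) * (ε * I / 80)) :=
                (ENNReal.ofReal_mul (by positivity)).symm
      _ = ENNReal.ofReal (2*(δ*NR) + (5/lam)*(ε*I/80)) :=
          (ENNReal.ofReal_add (by positivity) (by positivity)).symm
  have hTnn : (0:ℝ) ≤ 2 * (δ * NR) + (5 / lam) * (ε * I / 80) := by positivity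
  have hEreal : (volume E).toReal ≤ 2 * (δ * NR) + (5 / lam) * (ε * I / 80) :=
    ENNReal.toReal_le_of_le_ofReal hTnn hT
  -- final numeric computation
  have hq0 : (0:ℝ) ≤ (volume E).toReal / NR := by positivity
  rw [Real.norm_eq_abs, abs_of_nonneg hq0]
  have hdiv : (volume E).toReal / NR ≤ (2 * (δ * NR) + (5 / lam) * (ε * I / 80)) / NR := by
    gcongr
  have hcalc : (2 * (δ * NR) + (5 / lam) * (ε * I / 80)) / NR = 2 * δ + ε / 2 := by
    rw [hlam]
    field_simp
    ring
  rw [hcalc] at hdiv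
  have : 2 * δ ≤ ε / 4 := by linarith
  linarith
end

section
/- Let f ∈ L¹(ℝ) be a simple function and let x ∈ ℝ be a point at which the Hardy–Littlewood maximal function Mf is discontinuous. Then for every r > 0 there exists y ∈ (x−r, x+r) such that Tf(y) = 0. -/
open MeasureTheory Filter Set Topology
open scoped Classical

section Basic

variable (f : ℝ → ℝ)

lemma avg_translate (z r : ℝ) :
    avgFn f z r = (1 / (2 * r)) * ∫ t in (z - r)..(z + r), f t := by
  unfold avgFn
  rw [intervalIntegral.integral_comp_add_left f (a := -r) (b := r) z]
  congr 2 <;> ring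

lemma avg_eq_Ioc {r : ℝ} (hr : 0 ≤ r) (z : ℝ) :
    avgFn f z r = (1 / (2 * r)) * ∫ t in Set.Ioc (z - r) (z + r), f t := by
  rw [avg_translate, intervalIntegral.integral_of_le (by linarith)]

end Basic

section Abs

variable {f : ℝ → ℝ} (hf : Integrable f)

/-- `|f|` as a function. -/
noncomputable def absf (f : ℝ → ℝ) : ℝ → ℝ := fun t => |f t|

lemma absf_nonneg (t : ℝ) : 0 ≤ absf f t := abs_nonneg _

include hf in
lemma absf_int : Integrable (absf f) := hf.abs

lemma maxFn_eq (z : ℝ) :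
    maxFn f z = ⨆ (r : ℝ) (_ : 0 < r), ENNReal.ofReal (avgFn (absf f) z r) := rfl

lemma freqSet_eq (z : ℝ) :
    freqSet f z = {r : ℝ | 0 < r ∧ maxFn f z = ENNReal.ofReal (avgFn (absf f) z r)} := rfl

lemma avg_abs_nonneg {r : ℝ} (hr : 0 < r) (z : ℝ) : 0 ≤ avgFn (absf f) z r := by
  unfold avgFn
  apply mul_nonneg (by positivity)
  exact intervalIntegral.integral_nonneg (by linarith) (fun u _ => abs_nonneg _)

lemma exists_bound (hrange : (Set.range f).Finite) : ∃ B, 0 ≤ B ∧ ∀ t, absf f t ≤ B := by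
  have h : (Set.range (absf f)).Finite := by
    have : Set.range (absf f) ⊆ abs '' (Set.range f) := by
      rintro _ ⟨t, rfl⟩; exact ⟨f t, ⟨t, rfl⟩, rfl⟩
    exact (hrange.image _).subset this
  obtain ⟨B, hB⟩ := h.bddAbove
  exact ⟨B, le_trans (abs_nonneg (f 0)) (hB ⟨0, rfl⟩), fun t => hB ⟨t, rfl⟩⟩

end Abs

section MaxFn

variable {f : ℝ → ℝ} (hf : Integrable f) (hrange : (Set.range f).Finite)

include hf hrange in
lemma maxFn_ne_top (z : ℝ) : maxFn f z ≠ ⊤ := by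
  obtain ⟨B, hB0, hB⟩ := exists_bound hrange
  have h : maxFn f z ≤ ENNReal.ofReal B := by
    rw [maxFn_eq]
    refine iSup₂_le fun r hr => ENNReal.ofReal_le_ofReal ?_
    rw [avg_eq_Ioc _ hr.le]
    have hint : ∫ t in Set.Ioc (z - r) (z + r), absf f t ≤ B * (2 * r) := by
      have := MeasureTheory.setIntegral_mono_on (s := Set.Ioc (z - r) (z + r))
        (f := absf f) (g := fun _ => B) ((absf_int hf).integrableOn)
        (integrableOn_const (by simp [Real.volume_Ioc]))
        measurableSet_Ioc (fun t _ => hB t)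
      calc ∫ t in Set.Ioc (z - r) (z + r), absf f t ≤ ∫ _ in Set.Ioc (z - r) (z + r), B := this
        _ = (volume (Set.Ioc (z - r) (z + r))).toReal * B := by
            rw [MeasureTheory.setIntegral_const, smul_eq_mul, measureReal_def]
        _ = B * (2 * r) := by
            rw [Real.volume_Ioc, ENNReal.toReal_ofReal (by linarith)]; ring
    calc (1 / (2 * r)) * ∫ t in Set.Ioc (z - r) (z + r), absf f t
        ≤ (1 / (2 * r)) * (B * (2 * r)) := by
          apply mul_le_mul_of_nonneg_left hint (by positivity)
      _ = B := by field_simp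
  exact ne_top_of_le_ne_top ENNReal.ofReal_ne_top h

include hf hrange in
lemma avg_le_mtoReal {r : ℝ} (hr : 0 < r) (z : ℝ) :
    avgFn (absf f) z r ≤ (maxFn f z).toReal := by
  have h1 : ENNReal.ofReal (avgFn (absf f) z r) ≤ maxFn f z := by
    rw [maxFn_eq]; exact le_iSup₂ (f := fun (r : ℝ) (_ : 0 < r) =>
      ENNReal.ofReal (avgFn (absf f) z r)) r hr
  have := ENNReal.toReal_mono (maxFn_ne_top hf hrange z) h1
  rwa [ENNReal.toReal_ofReal (avg_abs_nonneg hr z)] at this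

lemma mtoReal_le {z c : ℝ} (hc : 0 ≤ c) (h : ∀ r, 0 < r → avgFn (absf f) z r ≤ c) :
    (maxFn f z).toReal ≤ c := by
  have : maxFn f z ≤ ENNReal.ofReal c := by
    rw [maxFn_eq]; exact iSup₂_le fun r hr => ENNReal.ofReal_le_ofReal (h r hr)
  exact ENNReal.toReal_le_of_le_ofReal hc this

lemma exists_avg_gt {z c : ℝ} (h : c < (maxFn f z).toReal) :
    ∃ r, 0 < r ∧ c < avgFn (absf f) z r := by
  rcases lt_or_ge c 0 with hc | hc
  · exact ⟨1, one_pos, lt_of_lt_of_le hc (avg_abs_nonneg one_pos z)⟩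
  · by_contra hcon
    push_neg at hcon
    exact absurd (mtoReal_le hc fun r hr => hcon r hr) (not_le.2 h)

include hf hrange in
lemma mem_freqSet_iff {r : ℝ} (hr : 0 < r) (z : ℝ) :
    r ∈ freqSet f z ↔ (maxFn f z).toReal = avgFn (absf f) z r := by
  rw [freqSet_eq]
  constructor
  · rintro ⟨-, h⟩
    rw [h, ENNReal.toReal_ofReal (avg_abs_nonneg hr z)]
  · intro h
    refine ⟨hr, ?_⟩
    conv_lhs => rw [← ENNReal.ofReal_toReal (maxFn_ne_top hf hrange z), h]

end MaxFn

section Bounds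

variable {g : ℝ → ℝ}

/-- If `g ≤ c` a.e. on the interval, the average is at most `c`. -/
lemma avg_le_of_ae_bound {y s c : ℝ} (hs : 0 < s) (hint : Integrable g)
    (hb : ∀ᵐ t, t ∈ Set.Ioo (y - s) (y + s) → g t ≤ c) :
    avgFn g y s ≤ c := by
  rw [avg_eq_Ioc g hs.le, MeasureTheory.integral_Ioc_eq_integral_Ioo]
  have h1 : ∫ t in Set.Ioo (y - s) (y + s), g t ≤ ∫ _ in Set.Ioo (y - s) (y + s), c := by
    apply MeasureTheory.setIntegral_mono_ae_restrict hint.integrableOn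
      (integrableOn_const (by simp [Real.volume_Ioo]))
    exact (ae_restrict_iff' measurableSet_Ioo).2 hb
  have h2 : ∫ _ in Set.Ioo (y - s) (y + s), c = 2 * s * c := by
    rw [MeasureTheory.setIntegral_const, measureReal_def, Real.volume_Ioo, smul_eq_mul,
      ENNReal.toReal_ofReal (by linarith)]
    ring_nf
  calc (1 / (2 * s)) * ∫ t in Set.Ioo (y - s) (y + s), g t
      ≤ (1 / (2 * s)) * (2 * s * c) := mul_le_mul_of_nonneg_left (h2 ▸ h1) (by positivity)
    _ = c := by field_simp

end Bounds

section Compare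

variable {f : ℝ → ℝ} (hf : Integrable f) (hrange : (Set.range f).Finite)

include hf hrange in
/-- Comparison: an off-center average is controlled by the maximal function at `x`. -/
lemma offcenter_le {x y r : ℝ} (hr : 0 < r) :
    r * avgFn (absf f) y r ≤ (r + |x - y|) * (maxFn f x).toReal := by
  set d := |x - y| with hd
  have hd0 : 0 ≤ d := abs_nonneg _
  set R := r + d with hR
  have hR0 : 0 < R := by positivity
  have hsub : Set.Ioc (y - r) (y + r) ⊆ Set.Ioc (x - R) (x + R) := by
    have h1 : x - y ≤ d := le_abs_self _
    have h2 : y - x ≤ d := by rw [hd, abs_sub_comm]; exact le_abs_self _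
    rintro t ⟨ht1, ht2⟩
    exact ⟨by linarith, by linarith⟩
  have hmono : ∫ t in Set.Ioc (y - r) (y + r), absf f t
      ≤ ∫ t in Set.Ioc (x - R) (x + R), absf f t := by
    apply MeasureTheory.setIntegral_mono_set ((absf_int hf).integrableOn)
      (Filter.Eventually.of_forall fun t => abs_nonneg _)
    exact (HasSubset.Subset.eventuallyLE hsub)
  have hA := avg_le_mtoReal hf hrange hR0 x
  rw [avg_eq_Ioc _ hR0.le] at hA
  rw [avg_eq_Ioc _ hr.le]
  have key : (1 / (2 * r)) * ∫ t in Set.Ioc (y - r) (y + r), absf f t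
      ≤ (R / r) * (maxFn f x).toReal := by
    calc (1 / (2 * r)) * ∫ t in Set.Ioc (y - r) (y + r), absf f t
        ≤ (1 / (2 * r)) * ∫ t in Set.Ioc (x - R) (x + R), absf f t :=
          mul_le_mul_of_nonneg_left hmono (by positivity)
      _ = (R / r) * ((1 / (2 * R)) * ∫ t in Set.Ioc (x - R) (x + R), absf f t) := by
          field_simp
      _ ≤ (R / r) * (maxFn f x).toReal := mul_le_mul_of_nonneg_left hA (by positivity)
  calc r * ((1 / (2 * r)) * ∫ t in Set.Ioc (y - r) (y + r), absf f t)
      ≤ r * ((R / r) * (maxFn f x).toReal) := mul_le_mul_of_nonneg_left key hr.le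
    _ = R * (maxFn f x).toReal := by field_simp
    _ = (r + |x - y|) * (maxFn f x).toReal := by rw [hR, hd]

end Compare

section Cont

variable {f : ℝ → ℝ} (hf : Integrable f) (hrange : (Set.range f).Finite)

include hf in
lemma avg_continuous (r : ℝ) : Continuous (fun y => avgFn (absf f) y r) := by
  have hii : ∀ a b : ℝ, IntervalIntegrable (absf f) volume a b :=
    fun a b => (absf_int hf).intervalIntegrable
  have hF : Continuous (fun u => ∫ t in (0:ℝ)..u, absf f t) :=
    intervalIntegral.continuous_primitive hii 0
  have hkey : ∀ y : ℝ, avgFn (absf f) y r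
      = (1 / (2 * r)) * ((∫ t in (0:ℝ)..(y + r), absf f t) - ∫ t in (0:ℝ)..(y - r), absf f t) := by
    intro y
    rw [avg_translate]
    congr 1
    rw [intervalIntegral.integral_interval_sub_left (hii 0 (y + r)) (hii 0 (y - r))]
  simp only [hkey]
  exact continuous_const.mul ((hF.comp (continuous_id.add continuous_const)).sub
    (hF.comp (continuous_id.sub continuous_const)))

include hf hrange in
lemma maxFn_lsc (x : ℝ) {ε : ℝ} (hε : 0 < ε) :
    ∃ δ > 0, ∀ y, |y - x| < δ → (maxFn f x).toReal - ε < (maxFn f y).toReal := by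
  rcases lt_or_ge ((maxFn f x).toReal - ε) 0 with hc | hc
  · exact ⟨1, one_pos, fun y _ => lt_of_lt_of_le hc ENNReal.toReal_nonneg⟩
  · have hlt : (maxFn f x).toReal - ε < (maxFn f x).toReal := by linarith
    obtain ⟨r, hr, hA⟩ := exists_avg_gt hlt
    have hcont := (avg_continuous hf r).continuousAt (x := x)
    rw [Metric.continuousAt_iff] at hcont
    obtain ⟨δ, hδ, hd⟩ := hcont (avgFn (absf f) x r - ((maxFn f x).toReal - ε)) (by linarith)
    refine ⟨δ, hδ, fun y hy => ?_⟩
    have := hd (by simpa [Real.dist_eq] using hy)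
    rw [Real.dist_eq, abs_lt] at this
    have hgt : (maxFn f x).toReal - ε < avgFn (absf f) y r := by linarith [this.1]
    exact lt_of_lt_of_le hgt (avg_le_mtoReal hf hrange hr y)

include hf hrange in
lemma disc_extract {x : ℝ}
    (hdisc : ¬ ContinuousAt (fun y => (maxFn f y).toReal) x) :
    ∃ ε > 0, ∀ δ > 0, ∃ y, |y - x| < δ ∧
      (maxFn f x).toReal + ε ≤ (maxFn f y).toReal := by
  rw [Metric.continuousAt_iff] at hdisc
  push_neg at hdisc
  obtain ⟨ε, hε, hwit⟩ := hdisc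
  obtain ⟨δ₁, hδ₁, hlsc⟩ := maxFn_lsc hf hrange x hε
  refine ⟨ε, hε, fun δ hδ => ?_⟩
  obtain ⟨y, hy, hdist⟩ := hwit (min δ δ₁) (lt_min hδ hδ₁)
  rw [Real.dist_eq] at hy hdist
  refine ⟨y, lt_of_lt_of_le hy (min_le_left _ _), ?_⟩
  have h2 := hlsc y (lt_of_lt_of_le hy (min_le_right _ _))
  rcases le_abs.1 hdist with h | h
  · linarith
  · linarith

end Cont

section Values

variable {f : ℝ → ℝ} (hf : Integrable f) (hrange : (Set.range f).Finite)

lemma absf_range_finite (hrange : (Set.range f).Finite) : (Set.range (absf f)).Finite := by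
  have : Set.range (absf f) ⊆ abs '' (Set.range f) := by
    rintro _ ⟨t, rfl⟩; exact ⟨f t, ⟨t, rfl⟩, rfl⟩
  exact (hrange.image _).subset this

include hf hrange in
lemma value_from_avg {x y s L δ : ℝ} (hs : 0 < s) (hL : 0 < L)
    (hA : L < avgFn (absf f) y s)
    (hsub : Set.Ioo (y - s) (y + s) ⊆ Set.Ioo (x - δ) (x + δ)) :
    ∃ w ∈ Set.range (absf f), L ≤ w ∧
      0 < volume ({t | absf f t = w} ∩ Set.Ioo (x - δ) (x + δ)) := by
  by_contra hcon
  push_neg at hcon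
  set Vfin := (absf_range_finite hrange).toFinset with hVfin
  set T := Vfin.filter (fun w => L ≤ w) with hT
  set N := ⋃ w ∈ (T : Set ℝ), ({t | absf f t = w} ∩ Set.Ioo (x - δ) (x + δ)) with hN
  have hNnull : volume N = 0 := by
    rw [hN, measure_biUnion_null_iff (T.countable_toSet)]
    intro w hw
    simp only [Finset.coe_filter, Set.mem_setOf_eq, hT] at hw
    have hwr : w ∈ Set.range (absf f) := by
      have := hw.1; rwa [hVfin, Set.Finite.mem_toFinset] at this
    have := hcon w hwr hw.2
    exact le_antisymm this (zero_le)
  set L' := ((insert (0:ℝ) (Vfin.filter (fun w => w < L))).max' (by simp)) with hL'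
  have hL'lt : L' < L := by
    rw [hL']
    apply Finset.max'_lt_iff _ _ |>.2
    intro b hb
    rcases Finset.mem_insert.1 hb with h | h
    · simpa [h] using hL
    · exact (Finset.mem_filter.1 h).2
  have hae : ∀ᵐ t, t ∈ Set.Ioo (y - s) (y + s) → absf f t ≤ L' := by
    have hcompl : ∀ᵐ t, t ∉ N := (MeasureTheory.measure_eq_zero_iff_ae_notMem (μ := volume)).1 hNnull
    filter_upwards [hcompl] with t hNt ht
    have hmem : absf f t ∈ Vfin := by
      rw [hVfin, Set.Finite.mem_toFinset]; exact ⟨t, rfl⟩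
    by_cases hcase : L ≤ absf f t
    · exfalso
      apply hNt
      rw [hN]
      refine Set.mem_biUnion (x := absf f t) ?_ ⟨rfl, hsub ht⟩
      simp only [hT, Finset.coe_filter, Set.mem_setOf_eq]
      exact ⟨hmem, hcase⟩
    · apply Finset.le_max'
      exact Finset.mem_insert.2 (Or.inr (Finset.mem_filter.2 ⟨hmem, not_le.1 hcase⟩))
  have := avg_le_of_ae_bound hs (absf_int hf) hae
  linarith

include hf hrange in
lemma exists_good_value {x : ℝ}
    (hdisc : ¬ ContinuousAt (fun y => (maxFn f y).toReal) x) :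
    ∃ v : ℝ, (maxFn f x).toReal < v ∧
      (∀ δ > 0, 0 < volume ({t | absf f t = v} ∩ Set.Ioo (x - δ) (x + δ))) ∧
      (∃ δ₀ > 0, ∀ᵐ t, t ∈ Set.Ioo (x - δ₀) (x + δ₀) → absf f t ≤ v) := by
  obtain ⟨ε, hε, hext⟩ := disc_extract hf hrange hdisc
  set m := (maxFn f x).toReal with hm
  have hm0 : 0 ≤ m := ENNReal.toReal_nonneg
  set L := m + ε / 2 with hL
  have hL0 : 0 < L := by positivity
  have hLm : m < L := by simp [hL]; linarith
  -- Step (a)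
  have stepA : ∀ δ > 0, ∃ w ∈ Set.range (absf f), L ≤ w ∧
      0 < volume ({t | absf f t = w} ∩ Set.Ioo (x - δ) (x + δ)) := by
    intro δ hδ
    set θ := min (δ / 2) ((δ / 2) * (L - m) / (2 * (m + 1))) with hθ
    have hθ0 : 0 < θ := by
      apply lt_min (by positivity)
      have : 0 < L - m := by linarith
      positivity
    obtain ⟨y, hy, hmy⟩ := hext θ hθ0
    have hLmy : L < (maxFn f y).toReal := by
      have : m + ε ≤ (maxFn f y).toReal := hmy
      simp only [hL]; linarith
    obtain ⟨s, hs, hA⟩ := exists_avg_gt hLmy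
    have hsθ : s + θ ≤ δ := by
      by_contra hcc
      push_neg at hcc
      have hθδ : θ ≤ δ / 2 := min_le_left _ _
      have hθsmall : θ ≤ (δ / 2) * (L - m) / (2 * (m + 1)) := min_le_right _ _
      have hsbig : δ / 2 < s := by linarith
      have hoff := offcenter_le hf hrange hs (x := x) (y := y)
      have hxy : |x - y| ≤ θ := by rw [abs_sub_comm]; exact hy.le
      have h1 : s * L < s * avgFn (absf f) y s := by
        apply mul_lt_mul_of_pos_left hA hs
      have h2 : (s + |x - y|) * m ≤ (s + θ) * m := by
        apply mul_le_mul_of_nonneg_right (by linarith) hm0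
      have hkey : s * L < (s + θ) * m := lt_of_lt_of_le (lt_of_lt_of_le h1 hoff) h2
      clear_value θ L m
      have hθm : θ * (2 * (m + 1)) ≤ (δ / 2) * (L - m) :=
        (le_div_iff₀ (by positivity)).1 hθsmall
      have c1 : s * (L - m) < θ * m := by nlinarith [hkey]
      have c2 : θ * m ≤ θ * (2 * (m + 1)) := by nlinarith [hθ0.le, hm0]
      have c3 : δ / 2 * (L - m) < s * (L - m) :=
        mul_lt_mul_of_pos_right hsbig (by linarith)
      linarith [hθm]
    have hsub : Set.Ioo (y - s) (y + s) ⊆ Set.Ioo (x - δ) (x + δ) := by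
      rintro t ⟨ht1, ht2⟩
      have h1 : x - y ≤ θ := le_trans (le_abs_self _) (by rw [abs_sub_comm]; exact hy.le)
      have h2 : y - x ≤ θ := le_trans (le_abs_self _) hy.le
      exact ⟨by linarith, by linarith⟩
    exact value_from_avg hf hrange hs hL0 hA hsub
  -- Step (b): pigeonhole
  set Vfin := (absf_range_finite hrange).toFinset with hVfin
  set Gd := Vfin.filter
    (fun w => L ≤ w ∧ ∀ δ > 0, 0 < volume ({t | absf f t = w} ∩ Set.Ioo (x - δ) (x + δ)))
    with hGd
  have hGdne : Gd.Nonempty := by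
    by_contra hemp
    rw [Finset.not_nonempty_iff_eq_empty] at hemp
    have hbad : ∀ w, ∃ δ, 0 < δ ∧ (w ∈ Set.range (absf f) → L ≤ w →
        volume ({t | absf f t = w} ∩ Set.Ioo (x - δ) (x + δ)) = 0) := by
      intro w
      by_cases hw : w ∈ Set.range (absf f) ∧ L ≤ w
      · have hnot : ¬ (∀ δ > 0, 0 < volume ({t | absf f t = w} ∩ Set.Ioo (x - δ) (x + δ))) := by
          intro hgood
          have : w ∈ Gd := by
            rw [hGd, Finset.mem_filter]
            exact ⟨by rw [hVfin, Set.Finite.mem_toFinset]; exact hw.1, hw.2, hgood⟩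
          simp [hemp] at this
        push_neg at hnot
        obtain ⟨δ, hδ, hz⟩ := hnot
        exact ⟨δ, hδ, fun _ _ => le_antisymm hz (zero_le)⟩
      · exact ⟨1, one_pos, fun h1 h2 => absurd ⟨h1, h2⟩ hw⟩
    choose d hd0 hd1 using hbad
    set Δ := insert (1:ℝ) ((Vfin.filter (fun w => L ≤ w)).image d) with hΔ
    have hΔne : Δ.Nonempty := ⟨1, Finset.mem_insert_self _ _⟩
    set δs := Δ.min' hΔne with hδs
    have hδspos : 0 < δs := by
      rw [hδs]
      apply (Finset.lt_min'_iff _ _).2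
      intro b hb
      rcases Finset.mem_insert.1 hb with h | h
      · simp [h]
      · obtain ⟨w, _, rfl⟩ := Finset.mem_image.1 h
        exact hd0 w
    obtain ⟨w, hwr, hwL, hwpos⟩ := stepA δs hδspos
    have hwV : w ∈ Vfin := by rw [hVfin, Set.Finite.mem_toFinset]; exact hwr
    have hmemΔ : d w ∈ Δ := by
      rw [hΔ]
      exact Finset.mem_insert.2 (Or.inr (Finset.mem_image.2
        ⟨w, Finset.mem_filter.2 ⟨hwV, hwL⟩, rfl⟩))
    have hle : δs ≤ d w := Finset.min'_le _ _ hmemΔ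
    have hnull := hd1 w hwr hwL
    have hmono : volume ({t | absf f t = w} ∩ Set.Ioo (x - δs) (x + δs)) ≤
        volume ({t | absf f t = w} ∩ Set.Ioo (x - d w) (x + d w)) := by
      apply measure_mono
      apply Set.inter_subset_inter_right
      apply Set.Ioo_subset_Ioo <;> linarith
    rw [hnull] at hmono
    exact absurd (le_antisymm hmono (zero_le)) (ne_of_gt hwpos)
  set v := Gd.max' hGdne with hv
  have hvGd : v ∈ Gd := Finset.max'_mem _ _
  rw [hGd, Finset.mem_filter] at hvGd
  obtain ⟨hvV, hvL, hvgood⟩ := hvGd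
  refine ⟨v, by linarith, hvgood, ?_⟩
  -- Step (c): find δ₀
  have hbad2 : ∀ u, ∃ δ, 0 < δ ∧ (u ∈ Vfin → v < u →
      volume ({t | absf f t = u} ∩ Set.Ioo (x - δ) (x + δ)) = 0) := by
    intro u
    by_cases hu : u ∈ Vfin ∧ v < u
    · have hnotGd : u ∉ Gd := by
        intro hmem
        exact absurd (Finset.le_max' _ _ hmem) (not_le.2 hu.2)
      have hnotgood : ¬ (L ≤ u ∧ ∀ δ > 0,
          0 < volume ({t | absf f t = u} ∩ Set.Ioo (x - δ) (x + δ))) := by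
        intro hc
        exact hnotGd (by rw [hGd, Finset.mem_filter]; exact ⟨hu.1, hc⟩)
      have hLu : L ≤ u := le_trans hvL hu.2.le
      have : ¬ ∀ δ > 0, 0 < volume ({t | absf f t = u} ∩ Set.Ioo (x - δ) (x + δ)) :=
        fun hc => hnotgood ⟨hLu, hc⟩
      push_neg at this
      obtain ⟨δ, hδ, hz⟩ := this
      exact ⟨δ, hδ, fun _ _ => le_antisymm hz (zero_le)⟩
    · exact ⟨1, one_pos, fun h1 h2 => absurd ⟨h1, h2⟩ hu⟩
  choose e he0 he1 using hbad2
  set T' := Vfin.filter (fun u => v < u) with hT'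
  set Δ₂ := insert (1:ℝ) (T'.image e) with hΔ₂
  have hΔ₂ne : Δ₂.Nonempty := ⟨1, Finset.mem_insert_self _ _⟩
  set δ₀ := Δ₂.min' hΔ₂ne with hδ₀
  have hδ₀pos : 0 < δ₀ := by
    rw [hδ₀]
    apply (Finset.lt_min'_iff _ _).2
    intro b hb
    rcases Finset.mem_insert.1 hb with h | h
    · simp [h]
    · obtain ⟨u, _, rfl⟩ := Finset.mem_image.1 h
      exact he0 u
  refine ⟨δ₀, hδ₀pos, ?_⟩
  set N := ⋃ u ∈ (T' : Set ℝ), ({t | absf f t = u} ∩ Set.Ioo (x - δ₀) (x + δ₀)) with hN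
  have hNnull : volume N = 0 := by
    rw [hN, measure_biUnion_null_iff (T'.countable_toSet)]
    intro u hu
    have huT' : u ∈ T' := hu
    have hle : δ₀ ≤ e u := Finset.min'_le _ _
      (Finset.mem_insert.2 (Or.inr (Finset.mem_image.2 ⟨u, huT', rfl⟩)))
    rw [hT', Finset.mem_filter] at huT'
    have hnull := he1 u huT'.1 huT'.2
    have hmono : volume ({t | absf f t = u} ∩ Set.Ioo (x - δ₀) (x + δ₀)) ≤
        volume ({t | absf f t = u} ∩ Set.Ioo (x - e u) (x + e u)) := by
      apply measure_mono
      apply Set.inter_subset_inter_right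
      apply Set.Ioo_subset_Ioo <;> linarith
    rw [hnull] at hmono
    exact le_antisymm hmono (zero_le)
  have hcompl : ∀ᵐ t, t ∉ N := (MeasureTheory.measure_eq_zero_iff_ae_notMem (μ := volume)).1 hNnull
  filter_upwards [hcompl] with t hNt ht
  by_contra hgt
  push_neg at hgt
  apply hNt
  rw [hN]
  refine Set.mem_biUnion (x := absf f t) ?_ ⟨rfl, ht⟩
  have : absf f t ∈ T' := by
    rw [hT', Finset.mem_filter]
    exact ⟨by rw [hVfin, Set.Finite.mem_toFinset]; exact ⟨t, rfl⟩, hgt⟩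
  exact this

end Values

section Lebesgue

lemma avg_eq_average {g : ℝ → ℝ} {ρ : ℝ} (hρ : 0 < ρ) (z : ℝ) :
    avgFn g z ρ = ⨍ t in Metric.closedBall z ρ, g t := by
  rw [MeasureTheory.setAverage_eq, Real.closedBall_eq_Icc,
    MeasureTheory.integral_Icc_eq_integral_Ioc, avg_eq_Ioc g hρ.le, measureReal_def, Real.volume_Icc,
    ENNReal.toReal_ofReal (by linarith), smul_eq_mul]
  congr 1
  field_simp
  ring_nf
  exact (mul_inv_cancel₀ hρ.ne').symm

lemma lebesgue_points {g : ℝ → ℝ} (hg : Integrable g) :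
    ∀ᵐ z, Filter.Tendsto (fun ρ => avgFn g z ρ) (𝓝[>] (0:ℝ)) (𝓝 (g z)) := by
  have h := IsUnifLocDoublingMeasure.ae_tendsto_average (μ := (volume : Measure ℝ))
    hg.locallyIntegrable 1
  filter_upwards [h] with z hz
  have hev : ∀ᶠ j in 𝓝[>] (0:ℝ), z ∈ Metric.closedBall z (1 * j) := by
    filter_upwards [self_mem_nhdsWithin] with j hj
    exact Metric.mem_closedBall_self (by simpa using (le_of_lt hj))
  have ht := hz (fun _ : ℝ => z) (fun j => j) tendsto_id hev
  apply ht.congr'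
  filter_upwards [self_mem_nhdsWithin] with j hj
  exact (avg_eq_average hj z).symm

end Lebesgue

section Propagate

variable {f : ℝ → ℝ} (hf : Integrable f) (hrange : (Set.range f).Finite)

include hf hrange in
lemma freq_zero_of_attained {z ρ v : ℝ} (hρ : 0 < ρ)
    (hmem : ρ ∈ freqSet f z) (havg : avgFn (absf f) z ρ = v)
    (hb : ∀ᵐ t, t ∈ Set.Ioo (z - ρ) (z + ρ) → absf f t ≤ v) :
    freqFn f z = 0 := by
  have hIoo : ∫ t in Set.Ioo (z - ρ) (z + ρ), absf f t = 2 * ρ * v := by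
    rw [avg_eq_Ioc _ hρ.le, MeasureTheory.integral_Ioc_eq_integral_Ioo] at havg
    field_simp at havg
    linarith
  have hae_eq : ∀ᵐ t ∂(volume.restrict (Set.Ioo (z - ρ) (z + ρ))), absf f t = v := by
    have hnn : 0 ≤ᵐ[volume.restrict (Set.Ioo (z - ρ) (z + ρ))] fun t => v - absf f t := by
      apply (ae_restrict_iff' measurableSet_Ioo).2
      filter_upwards [hb] with t ht hmem'
      have := ht hmem'
      simp only [Pi.zero_apply]
      linarith
    have hint : Integrable (fun t => v - absf f t)
        (volume.restrict (Set.Ioo (z - ρ) (z + ρ))) := by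
      apply Integrable.sub
      · exact integrableOn_const (by simp [Real.volume_Ioo])
      · exact (absf_int hf).integrableOn
    have hzero : ∫ t in Set.Ioo (z - ρ) (z + ρ), (v - absf f t) = 0 := by
      rw [MeasureTheory.integral_sub (integrableOn_const (C := v) (s := Set.Ioo (z - ρ) (z + ρ)) (μ := volume) (by simp [Real.volume_Ioo]))
        ((absf_int hf).integrableOn), hIoo, MeasureTheory.setIntegral_const,
        measureReal_def, Real.volume_Ioo, ENNReal.toReal_ofReal (by linarith), smul_eq_mul]
      ring
    have := (MeasureTheory.integral_eq_zero_iff_of_nonneg_ae hnn hint).1 hzero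
    filter_upwards [this] with t ht
    have : v - absf f t = 0 := ht
    linarith
  have hsmall : ∀ s', 0 < s' → s' < ρ → s' ∈ freqSet f z := by
    intro s' hs'0 hs'ρ
    have hsub : Set.Ioc (z - s') (z + s') ⊆ Set.Ioo (z - ρ) (z + ρ) := by
      rintro t ⟨ht1, ht2⟩; exact ⟨by linarith, by linarith⟩
    have hres : ∀ᵐ t ∂(volume.restrict (Set.Ioc (z - s') (z + s'))), absf f t = v :=
      MeasureTheory.ae_restrict_of_ae_restrict_of_subset hsub hae_eq
    have hint_eq : ∫ t in Set.Ioc (z - s') (z + s'), absf f t = 2 * s' * v := by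
      rw [MeasureTheory.setIntegral_congr_ae measurableSet_Ioc
        ((ae_restrict_iff' measurableSet_Ioc).1 hres)]
      rw [MeasureTheory.setIntegral_const, measureReal_def, Real.volume_Ioc,
        ENNReal.toReal_ofReal (by linarith), smul_eq_mul]
      ring
    have havg' : avgFn (absf f) z s' = v := by
      rw [avg_eq_Ioc _ hs'0.le, hint_eq]
      field_simp
    refine ⟨hs'0, ?_⟩
    show maxFn f z = ENNReal.ofReal (avgFn (absf f) z s')
    rw [havg']
    have h1 : maxFn f z = ENNReal.ofReal (avgFn (absf f) z ρ) := hmem.2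
    rw [havg] at h1
    exact h1
  have hne : (freqSet f z).Nonempty := ⟨ρ, hmem⟩
  unfold freqFn
  rw [if_pos hne]
  have hbdd : BddBelow (freqSet f z) := ⟨0, fun e he => he.1.le⟩
  apply le_antisymm
  · by_contra hpos
    push_neg at hpos
    set s' := min (sInf (freqSet f z) / 2) (ρ / 2) with hs'
    have hs'0 : 0 < s' := lt_min (by linarith) (by linarith)
    have hs'ρ : s' < ρ := lt_of_le_of_lt (min_le_right _ _) (by linarith)
    have hle := csInf_le hbdd (hsmall s' hs'0 hs'ρ)
    have : s' ≤ sInf (freqSet f z) / 2 := min_le_left _ _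
    linarith
  · exact le_csInf hne fun e he => he.1.le

end Propagate


theorem discontinuity_of_maximal_gives_zero_frequency (f : ℝ → ℝ)
    (hf : Integrable f) (hmeas : Measurable f) (hrange : (Set.range f).Finite)
    (x : ℝ) (hdisc : ¬ ContinuousAt (fun y => (maxFn f y).toReal) x) :
    ∀ r : ℝ, 0 < r → ∃ y ∈ Set.Ioo (x - r) (x + r), freqFn f y = 0 := by
  intro r hr
  by_contra hcon
  push_neg at hcon
  obtain ⟨v, hvm, hvpos, δ₀, hδ₀, hvb⟩ := exists_good_value hf hrange hdisc
  set m := (maxFn f x).toReal with hm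
  have hm0 : 0 ≤ m := ENNReal.toReal_nonneg
  have hv0 : 0 < v := lt_of_le_of_lt hm0 hvm
  set η := min (min (r / 2) (δ₀ / 2)) ((δ₀ / 2) * (v - m) / (2 * (m + 1))) with hη
  have hη0 : 0 < η := by
    apply lt_min (lt_min (by linarith) (by linarith))
    have h1 : 0 < v - m := by linarith
    positivity
  have hηr : η ≤ r / 2 := le_trans (min_le_left _ _) (min_le_left _ _)
  have hηδ : η ≤ δ₀ / 2 := le_trans (min_le_left _ _) (min_le_right _ _)
  have hηv : η ≤ (δ₀ / 2) * (v - m) / (2 * (m + 1)) := min_le_right _ _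
  have hpos := hvpos η hη0
  set S := {t | absf f t = v} ∩ Set.Ioo (x - η) (x + η) with hS
  have hae := lebesgue_points (absf_int hf)
  set Bad := {z | ¬ Filter.Tendsto (fun ρ => avgFn (absf f) z ρ) (𝓝[>] (0:ℝ))
    (𝓝 (absf f z))} with hBad
  have hBadnull : volume Bad = 0 := MeasureTheory.ae_iff.1 hae
  have hSdiff : 0 < volume (S \ Bad) := by
    rw [MeasureTheory.measure_diff_null hBadnull]
    exact hpos
  obtain ⟨z, hzSB⟩ := MeasureTheory.nonempty_of_measure_ne_zero (ne_of_gt hSdiff)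
  obtain ⟨⟨hzv, hzIoo⟩, hzBad⟩ := hzSB
  have hzv' : absf f z = v := hzv
  have hzT : Filter.Tendsto (fun ρ => avgFn (absf f) z ρ) (𝓝[>] (0:ℝ)) (𝓝 v) := by
    have := not_not.1 hzBad
    rwa [hzv'] at this
  obtain ⟨hz1, hz2⟩ := hzIoo
  have hzin : z ∈ Set.Ioo (x - r) (x + r) := ⟨by linarith, by linarith⟩
  have hzne := hcon z hzin
  have hne : (freqSet f z).Nonempty := by
    by_contra h
    exact hzne (by unfold freqFn; rw [if_neg h])
  obtain ⟨ρ, hρmem⟩ := hne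
  have hρ0 : 0 < ρ := hρmem.1
  have hmzρ : (maxFn f z).toReal = avgFn (absf f) z ρ :=
    (mem_freqSet_iff hf hrange hρ0 z).1 hρmem
  have hub : ∀ s, 0 < s → s ≤ δ₀ / 2 → avgFn (absf f) z s ≤ v := by
    intro s hs0 hsδ
    apply avg_le_of_ae_bound hs0 (absf_int hf)
    filter_upwards [hvb] with t htb htIoo
    obtain ⟨ht1, ht2⟩ := htIoo
    exact htb ⟨by linarith, by linarith⟩
  have hvle : v ≤ (maxFn f z).toReal := by
    apply le_of_tendsto hzT
    filter_upwards [self_mem_nhdsWithin] with ρ' hρ'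
    exact avg_le_mtoReal hf hrange hρ' z
  by_cases hcase : ρ ≤ δ₀ / 2
  · have h1 : avgFn (absf f) z ρ ≤ v := hub ρ hρ0 hcase
    have h2 : avgFn (absf f) z ρ = v := le_antisymm h1 (by rw [hmzρ] at hvle; exact hvle)
    have hb' : ∀ᵐ t, t ∈ Set.Ioo (z - ρ) (z + ρ) → absf f t ≤ v := by
      filter_upwards [hvb] with t htb htIoo
      obtain ⟨ht1, ht2⟩ := htIoo
      exact htb ⟨by linarith, by linarith⟩
    exact hzne (freq_zero_of_attained hf hrange hρ0 hρmem h2 hb')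
  · push_neg at hcase
    have hoff := offcenter_le hf hrange hρ0 (x := x) (y := z)
    have hxz : |x - z| ≤ η := by
      rw [abs_sub_comm]
      exact (abs_lt.2 ⟨by linarith, by linarith⟩).le
    have havgv : v ≤ avgFn (absf f) z ρ := by rw [hmzρ] at hvle; exact hvle
    have hρv : ρ * v ≤ (ρ + η) * m :=
      calc ρ * v ≤ ρ * avgFn (absf f) z ρ := mul_le_mul_of_nonneg_left havgv hρ0.le
        _ ≤ (ρ + |x - z|) * m := hoff
        _ ≤ (ρ + η) * m := mul_le_mul_of_nonneg_right (by linarith) hm0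
    have hηm : η * (2 * (m + 1)) ≤ (δ₀ / 2) * (v - m) :=
      (le_div_iff₀ (by positivity)).1 hηv
    clear_value η m
    have c1 : ρ * (v - m) ≤ η * m := by nlinarith [hρv]
    have c2 : η * m ≤ η * (2 * (m + 1)) := by nlinarith [hη0.le, hm0]
    have c3 : δ₀ / 2 * (v - m) < ρ * (v - m) :=
      mul_lt_mul_of_pos_right hcase (by linarith)
    linarith
end

section
/- Let f ∈ L¹(ℝ) be a simple function. If x is a point of discontinuity of the Hardy–Littlewood maximal function Mf, then for every r > 0 there exists y ∈ (x−r, x+r) such that y is not a Lebesgue point of f. -/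
open MeasureTheory Filter Set Topology
open scoped Classical
open scoped ENNReal NNReal

/-- `x` is a Lebesgue point of `f`. -/
def IsLebesguePoint (f : ℝ → ℝ) (x : ℝ) : Prop :=
  ∃ c : ℝ, Tendsto (fun r : ℝ => (1 / (2 * r)) * ∫ t in (-r)..r, |f (x + t) - c|)
    (nhdsWithin 0 (Set.Ioi 0)) (nhds 0)

lemma avg_eq (f : ℝ → ℝ) (z s : ℝ) :
    avgFn (fun y => |f y|) z s = (1 / (2 * s)) * ∫ u in (z - s)..(z + s), |f u| := by
  unfold avgFn
  rw [show z - s = z + -s by ring,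
    ← intervalIntegral.integral_comp_add_left (a := -s) (b := s) (fun u => |f u|) z]

lemma hasDerivAt_primitive {f : ℝ → ℝ} (hf : Integrable f) {φ : ℝ → ℝ}
    (hφf : Integrable fun t => φ (f t)) {y cc : ℝ}
    (hφ : ∀ u : ℝ, |φ u - φ cc| ≤ |u - cc|)
    (hy : Tendsto (fun r : ℝ => (1 / (2 * r)) * ∫ t in (-r)..r, |f (y + t) - cc|)
      (nhdsWithin 0 (Set.Ioi 0)) (nhds 0)) :
    HasDerivAt (fun z => ∫ t in (0:ℝ)..z, φ (f t)) (φ cc) y := by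
  rw [hasDerivAt_iff_tendsto_slope]
  set F : ℝ → ℝ := fun z => ∫ t in (0:ℝ)..z, φ (f t) with hF
  have key : ∀ z : ℝ, z ≠ y →
      |slope F y z - φ cc|
        ≤ 2 * ((1 / (2 * |z - y|)) * ∫ t in (-|z - y|)..(|z - y|), |f (y + t) - cc|) := by
    intro z hz
    set δ := |z - y| with hδ
    have hδ0 : 0 < δ := abs_pos.2 (sub_ne_zero.2 hz)
    have hzy := abs_le.1 (le_of_eq hδ.symm)
    have e1 : F z - F y = ∫ t in y..z, φ (f t) :=
      intervalIntegral.integral_interval_sub_left hφf.intervalIntegrable hφf.intervalIntegrable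
    have e2 : slope F y z - φ cc = (∫ t in y..z, (φ (f t) - φ cc)) / (z - y) := by
      rw [slope_def_field, e1,
        intervalIntegral.integral_sub hφf.intervalIntegrable intervalIntegrable_const,
        intervalIntegral.integral_const, smul_eq_mul]
      have hne : z - y ≠ 0 := sub_ne_zero.2 hz
      field_simp
    have hint1 : IntervalIntegrable (fun t => |φ (f t) - φ cc|) volume (y - δ) (y + δ) :=
      (hφf.intervalIntegrable.sub intervalIntegrable_const).abs
    have hint2 : IntervalIntegrable (fun t => |f t - cc|) volume (y - δ) (y + δ) :=
      (hf.intervalIntegrable.sub intervalIntegrable_const).abs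
    have hsub : Set.uIoc y z ⊆ Set.uIoc (y - δ) (y + δ) := by
      intro t ht
      rcases Set.mem_uIoc.1 ht with ⟨h1, h2⟩ | ⟨h1, h2⟩ <;>
        · rw [Set.uIoc_of_le (by linarith : y - δ ≤ y + δ)]
          constructor <;> linarith
    have h3 : |∫ t in y..z, (φ (f t) - φ cc)| ≤ ∫ t in (y - δ)..(y + δ), |f t - cc| := by
      have s1 : |∫ t in y..z, (φ (f t) - φ cc)| ≤ abs (∫ t in y..z, |φ (f t) - φ cc|) := by
        simpa [Real.norm_eq_abs] using
          intervalIntegral.norm_integral_le_abs_integral_norm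
            (f := fun t => φ (f t) - φ cc) (a := y) (b := z) (μ := volume)
      have s2 : abs (∫ t in y..z, |φ (f t) - φ cc|)
          ≤ abs (∫ t in (y - δ)..(y + δ), |φ (f t) - φ cc|) :=
        intervalIntegral.abs_integral_mono_interval hsub
          (Filter.Eventually.of_forall fun t => abs_nonneg _) hint1
      have s3 : abs (∫ t in (y - δ)..(y + δ), |φ (f t) - φ cc|)
          = ∫ t in (y - δ)..(y + δ), |φ (f t) - φ cc| :=
        abs_of_nonneg (intervalIntegral.integral_nonneg (by linarith) fun t _ => abs_nonneg _)
      have s4 : (∫ t in (y - δ)..(y + δ), |φ (f t) - φ cc|)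
          ≤ ∫ t in (y - δ)..(y + δ), |f t - cc| :=
        intervalIntegral.integral_mono_on (by linarith) hint1 hint2 fun t _ => hφ (f t)
      linarith
    have e3 : (∫ t in (y - δ)..(y + δ), |f t - cc|) = ∫ t in (-δ)..δ, |f (y + t) - cc| := by
      rw [show y - δ = y + -δ by ring,
        ← intervalIntegral.integral_comp_add_left (a := -δ) (b := δ) (fun u => |f u - cc|) y]
    rw [e2, abs_div]
    have h5 : |∫ t in y..z, (φ (f t) - φ cc)| / |z - y|
        ≤ (∫ t in (-δ)..δ, |f (y + t) - cc|) / δ := by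
      rw [← hδ]
      gcongr
      rw [← e3]; exact h3
    have h6 : (∫ t in (-δ)..δ, |f (y + t) - cc|) / δ
        = 2 * ((1 / (2 * δ)) * ∫ t in (-δ)..δ, |f (y + t) - cc|) := by
      field_simp
    rw [← hδ] at h5 ⊢
    rw [h6] at h5
    exact h5
  have habs : Tendsto (fun z : ℝ => |z - y|) (𝓝[≠] y) (𝓝[>] 0) := by
    apply tendsto_nhdsWithin_of_tendsto_nhds_of_eventually_within
    · have h0 : Tendsto (fun z : ℝ => |z - y|) (𝓝 y) (𝓝 |y - y|) :=
        ((continuous_id.sub continuous_const).abs.tendsto y)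
      simpa using h0.mono_left nhdsWithin_le_nhds
    · filter_upwards [self_mem_nhdsWithin] with z hz
      exact mem_Ioi.2 (abs_pos.2 (sub_ne_zero.2 hz))
  have h2 : Tendsto (fun z : ℝ =>
      2 * ((1 / (2 * |z - y|)) * ∫ t in (-|z - y|)..(|z - y|), |f (y + t) - cc|))
      (𝓝[≠] y) (𝓝 (2 * 0)) := (hy.comp habs).const_mul 2
  rw [mul_zero] at h2
  have hb : ∀ᶠ z in 𝓝[≠] y, ‖slope F y z - φ cc‖
      ≤ 2 * ((1 / (2 * |z - y|)) * ∫ t in (-|z - y|)..(|z - y|), |f (y + t) - cc|) := by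
    filter_upwards [self_mem_nhdsWithin] with z hz
    simpa [Real.norm_eq_abs] using key z hz
  have h5 : Tendsto (fun z => slope F y z - φ cc) (𝓝[≠] y) (𝓝 0) :=
    squeeze_zero_norm' hb h2
  have h6 := h5.add_const (φ cc)
  simpa using h6

lemma const_mem_range {f : ℝ → ℝ} (hf : Integrable f) (hrange : (Set.range f).Finite) {y cc : ℝ}
    (hy : Tendsto (fun r : ℝ => (1 / (2 * r)) * ∫ t in (-r)..r, |f (y + t) - cc|)
      (nhdsWithin 0 (Set.Ioi 0)) (nhds 0)) : cc ∈ Set.range f := by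
  by_contra hc
  set s : Finset ℝ := hrange.toFinset.image fun v => |v - cc| with hs
  have hsne : s.Nonempty := by
    refine Finset.Nonempty.image ?_ _
    rw [Set.Finite.toFinset_nonempty]
    exact ⟨f 0, 0, rfl⟩
  set δ := s.min' hsne with hδ
  have hδpos : 0 < δ := by
    have hmem := s.min'_mem hsne
    obtain ⟨v, hv, hveq⟩ := Finset.mem_image.1 hmem
    rw [Set.Finite.mem_toFinset] at hv
    have hvne : v ≠ cc := by rintro rfl; exact hc hv
    have : (0:ℝ) < |v - cc| := abs_pos.2 (sub_ne_zero.2 hvne)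
    rw [hδ, ← hveq]
    exact this
  have hbound : ∀ t : ℝ, δ ≤ |f t - cc| := by
    intro t
    refine s.min'_le _ ?_
    exact Finset.mem_image.2 ⟨f t, (Set.Finite.mem_toFinset hrange).2 ⟨t, rfl⟩, rfl⟩
  have hev : ∀ᶠ r in 𝓝[>] (0:ℝ), δ ≤ (1 / (2 * r)) * ∫ t in (-r)..r, |f (y + t) - cc| := by
    filter_upwards [self_mem_nhdsWithin] with r hr
    have hr0 : (0:ℝ) < r := hr
    have hint : IntervalIntegrable (fun t => |f (y + t) - cc|) volume (-r) r :=
      (((hf.comp_add_left y).intervalIntegrable).sub intervalIntegrable_const).abs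
    have hmono : (∫ t in (-r)..r, δ) ≤ ∫ t in (-r)..r, |f (y + t) - cc| :=
      intervalIntegral.integral_mono_on (by linarith) intervalIntegrable_const hint
        fun t _ => hbound (y + t)
    rw [intervalIntegral.integral_const, smul_eq_mul] at hmono
    have h2 : (2 * r) * δ ≤ ∫ t in (-r)..r, |f (y + t) - cc| := by
      have : (r - -r) * δ = (2 * r) * δ := by ring
      linarith [hmono, this.symm ▸ hmono]
    calc δ = (1 / (2 * r)) * ((2 * r) * δ) := by field_simp
      _ ≤ (1 / (2 * r)) * ∫ t in (-r)..r, |f (y + t) - cc| := by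
          apply mul_le_mul_of_nonneg_left h2 (by positivity)
  have hle : δ ≤ 0 := ge_of_tendsto hy hev
  linarith

lemma toReal_sup' {a b : ℝ≥0∞} (ha : a ≠ ⊤) (hb : b ≠ ⊤) :
    (a ⊔ b).toReal = max a.toReal b.toReal := by
  rcases le_total a b with h | h
  · rw [sup_eq_right.2 h, max_eq_right (ENNReal.toReal_mono hb h)]
  · rw [sup_eq_left.2 h, max_eq_left (ENNReal.toReal_mono ha h)]

lemma toReal_dist_le {a b : ℝ≥0∞} {d : ℝ} (ha : a ≠ ⊤) (hb : b ≠ ⊤) (hd : 0 ≤ d)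
    (h1 : a ≤ b + ENNReal.ofReal d) (h2 : b ≤ a + ENNReal.ofReal d) :
    |a.toReal - b.toReal| ≤ d := by
  rw [abs_sub_le_iff]
  constructor
  · have h3 := ENNReal.toReal_mono (ENNReal.add_ne_top.2 ⟨hb, ENNReal.ofReal_ne_top⟩) h1
    rw [ENNReal.toReal_add hb ENNReal.ofReal_ne_top, ENNReal.toReal_ofReal hd] at h3
    linarith
  · have h3 := ENNReal.toReal_mono (ENNReal.add_ne_top.2 ⟨ha, ENNReal.ofReal_ne_top⟩) h2
    rw [ENNReal.toReal_add ha ENNReal.ofReal_ne_top, ENNReal.toReal_ofReal hd] at h3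
    linarith

theorem discontinuity_of_maximal_gives_non_lebesgue_point (f : ℝ → ℝ)
    (hf : Integrable f) (hmeas : Measurable f) (hrange : (Set.range f).Finite)
    (x : ℝ) (hdisc : ¬ ContinuousAt (fun y => (maxFn f y).toReal) x) :
    ∀ r : ℝ, 0 < r → ∃ y ∈ Set.Ioo (x - r) (x + r), ¬ IsLebesguePoint f y := by
  intro r hr
  by_contra hcon
  push_neg at hcon
  apply hdisc
  have hx : x ∈ Set.Ioo (x - r) (x + r) := by constructor <;> linarith
  simp only [IsLebesguePoint] at hcon
  choose! c hc using hcon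
  -- the primitive of f has derivative c y at each y in the interval
  set J := Set.Ioo (x - r) (x + r) with hJ
  have hder : ∀ y ∈ J, HasDerivAt (fun z => ∫ t in (0:ℝ)..z, f t) (c y) y := by
    intro y hy
    exact hasDerivAt_primitive hf (φ := fun u => u) hf (fun u => le_rfl) (hc y hy)
  have hcrange : ∀ y ∈ J, c y ∈ Set.range f :=
    fun y hy => const_mem_range hf hrange (hc y hy)
  -- the Lebesgue constants are all equal on J, by Darboux's theorem
  have hmono : ∀ y₁ ∈ J, ∀ y₂ ∈ J, y₁ < y₂ → c y₁ = c y₂ := by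
    intro y₁ h₁ y₂ h₂ h12
    by_contra hne
    have hIcc : Set.Icc y₁ y₂ ⊆ J := fun t ht =>
      ⟨lt_of_lt_of_le h₁.1 ht.1, lt_of_le_of_lt ht.2 h₂.2⟩
    have hderW : ∀ t ∈ Set.Icc y₁ y₂,
        HasDerivWithinAt (fun z => ∫ t in (0:ℝ)..z, f t) (c t) (Set.Icc y₁ y₂) t :=
      fun t ht => (hder t (hIcc ht)).hasDerivWithinAt
    rcases lt_or_gt_of_ne hne with h | h
    · obtain ⟨w, hw⟩ := ((Set.Ioo_infinite h).diff hrange).nonempty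
      obtain ⟨t, ht, hct⟩ := exists_hasDerivWithinAt_eq_of_gt_of_lt h12.le hderW hw.1.1 hw.1.2
      exact hw.2 (hct ▸ hcrange t (hIcc (Set.Ioo_subset_Icc_self ht)))
    · obtain ⟨w, hw⟩ := ((Set.Ioo_infinite h).diff hrange).nonempty
      obtain ⟨t, ht, hct⟩ := exists_hasDerivWithinAt_eq_of_lt_of_gt h12.le hderW hw.1.2 hw.1.1
      exact hw.2 (hct ▸ hcrange t (hIcc (Set.Ioo_subset_Icc_self ht)))
  have hconst : ∀ y ∈ J, c y = c x := by
    intro y hy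
    rcases lt_trichotomy y x with h | h | h
    · exact hmono y hy x hx h
    · rw [h]
    · exact (hmono x hx y hy h).symm
  -- the primitive of |f| has derivative |c x| everywhere on J
  have habs2 : ∀ y ∈ J, HasDerivAt (fun z => ∫ t in (0:ℝ)..z, |f t|) |c x| y := by
    intro y hy
    have h1 : HasDerivAt (fun z => ∫ t in (0:ℝ)..z, |f t|) |c y| y :=
      hasDerivAt_primitive hf (φ := fun u => |u|) hf.abs
        (fun u => abs_abs_sub_abs_le_abs_sub _ _) (hc y hy)
    rwa [hconst y hy] at h1
  -- hence on subintervals of J the integral of |f| is proportional to length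
  have hkey : ∀ u w : ℝ, u ∈ J → w ∈ J → (∫ t in u..w, |f t|) = |c x| * (w - u) := by
    intro u w hu hw
    have hg : ∀ z ∈ J,
        HasDerivWithinAt (fun z => (∫ t in (0:ℝ)..z, |f t|) - |c x| * z) 0 J z := by
      intro z hz
      have h2 := (habs2 z hz).sub ((hasDerivAt_id z).const_mul (|c x|))
      have h3 := h2.hasDerivWithinAt (s := J)
      simp only [mul_one, sub_self] at h3
      exact h3
    have hb := Convex.norm_image_sub_le_of_norm_hasDerivWithin_le (C := 0) hg
        (fun z _ => by simp) (convex_Ioo _ _) hu hw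
    rw [zero_mul] at hb
    have h0 := norm_le_zero_iff.1 hb
    have h1 : (∫ t in (0:ℝ)..w, |f t|) - (∫ t in (0:ℝ)..u, |f t|) = ∫ t in u..w, |f t| :=
      intervalIntegral.integral_interval_sub_left hf.abs.intervalIntegrable
        hf.abs.intervalIntegrable
    have h2 : ((∫ t in (0:ℝ)..w, |f t|) - |c x| * w) - ((∫ t in (0:ℝ)..u, |f t|) - |c x| * u)
        = 0 := h0
    have h3 : |c x| * (w - u) = |c x| * w - |c x| * u := by ring
    linarith [h1, h2, h3]
  -- a uniform bound on |f|
  obtain ⟨C, hC⟩ : ∃ C : ℝ, ∀ t : ℝ, |f t| ≤ C := by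
    obtain ⟨C, hCub⟩ := (hrange.image fun u => |u|).bddAbove
    exact ⟨C, fun t => hCub ⟨f t, ⟨t, rfl⟩, rfl⟩⟩
  have hC0 : 0 ≤ C := le_trans (abs_nonneg _) (hC 0)
  set ρ := r / 2 with hρ
  have hρ0 : 0 < ρ := by rw [hρ]; linarith
  set v := c x with hv
  -- basic facts about averages
  have havg_nonneg : ∀ z s : ℝ, 0 < s → 0 ≤ avgFn (fun y => |f y|) z s := by
    intro z s hs
    have h1 : 0 ≤ ∫ u in (-s)..s, |f (z + u)| :=
      intervalIntegral.integral_nonneg (by linarith) fun u _ => abs_nonneg _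
    unfold avgFn
    exact mul_nonneg (by positivity) h1
  have havg_le : ∀ z s : ℝ, 0 < s → avgFn (fun y => |f y|) z s ≤ C := by
    intro z s hs
    unfold avgFn
    have hint : IntervalIntegrable (fun u => |f (z + u)|) volume (-s) s :=
      ((hf.comp_add_left z).abs).intervalIntegrable
    have h2 : (∫ u in (-s)..s, |f (z + u)|) ≤ ∫ u in (-s)..s, (C:ℝ) :=
      intervalIntegral.integral_mono_on (by linarith) hint intervalIntegrable_const
        fun u _ => hC _
    have h3 : (∫ u in (-s)..s, (C:ℝ)) = 2 * s * C := by
      rw [intervalIntegral.integral_const, smul_eq_mul]; ring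
    calc (1 / (2 * s)) * ∫ u in (-s)..s, |f (z + u)|
        ≤ (1 / (2 * s)) * (2 * s * C) := by
          apply mul_le_mul_of_nonneg_left _ (by positivity)
          rw [← h3]; exact h2
      _ = C := by field_simp
  have havg_const : ∀ z s : ℝ, |z - x| ≤ ρ / 2 → 0 < s → s ≤ ρ / 2 →
      avgFn (fun y => |f y|) z s = |v| := by
    intro z s hz hs0 hs
    obtain ⟨hz1, hz2⟩ := abs_le.1 hz
    have h1 : z - s ∈ J := by constructor <;> linarith [hρ]
    have h2 : z + s ∈ J := by constructor <;> linarith [hρ]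
    rw [avg_eq f z s, hkey (z - s) (z + s) h1 h2, show (z + s) - (z - s) = 2 * s by ring]
    field_simp
  -- the truncated maximal function
  set N : ℝ → ℝ≥0∞ := fun z =>
    ⨆ (s : ℝ) (_ : ρ / 2 ≤ s), ENNReal.ofReal (avgFn (fun y => |f y|) z s) with hN
  have hNle : ∀ z, N z ≤ ENNReal.ofReal C := by
    intro z
    refine iSup₂_le fun s hs => ?_
    exact ENNReal.ofReal_le_ofReal (havg_le z s (lt_of_lt_of_le (by linarith) hs))
  have hNtop : ∀ z, N z ≠ ⊤ :=
    fun z => ne_top_of_le_ne_top ENNReal.ofReal_ne_top (hNle z)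
  have hsplit : ∀ z : ℝ, |z - x| ≤ ρ / 2 → maxFn f z = ENNReal.ofReal |v| ⊔ N z := by
    intro z hz
    apply le_antisymm
    · unfold maxFn
      refine iSup₂_le fun s hs => ?_
      by_cases hcase : s ≤ ρ / 2
      · rw [havg_const z s hz hs hcase]
        exact le_sup_left
      · refine le_sup_of_le_right ?_
        exact le_iSup₂ (f := fun (s : ℝ) (_ : ρ / 2 ≤ s) =>
          ENNReal.ofReal (avgFn (fun y => |f y|) z s)) s (le_of_not_ge hcase)
    · refine sup_le ?_ ?_
      · have h1 : ENNReal.ofReal |v| = ENNReal.ofReal (avgFn (fun y => |f y|) z (ρ / 2)) := by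
          rw [havg_const z (ρ / 2) hz (by linarith) le_rfl]
        rw [h1]
        unfold maxFn
        exact le_iSup₂ (f := fun (s : ℝ) (_ : 0 < s) =>
          ENNReal.ofReal (avgFn (fun y => |f y|) z s)) (ρ / 2) (by linarith)
      · unfold maxFn
        refine iSup₂_le fun s hs => ?_
        exact le_iSup₂ (f := fun (s : ℝ) (_ : 0 < s) =>
          ENNReal.ofReal (avgFn (fun y => |f y|) z s)) s (lt_of_lt_of_le (by linarith) hs)
  -- N is Lipschitz
  have key2 : ∀ a b : ℝ, abs (∫ t in a..b, |f t|) ≤ C * |b - a| := by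
    intro a b
    have h2 := intervalIntegral.norm_integral_le_of_norm_le_const (C := C)
      (f := fun t => |f t|) (a := a) (b := b)
      (fun t _ => by rw [Real.norm_eq_abs, abs_abs]; exact hC t)
    rwa [Real.norm_eq_abs] at h2
  have hNlip : ∀ z z' : ℝ, N z ≤ N z' + ENNReal.ofReal (2 * C / ρ * |z - z'|) := by
    intro z z'
    refine iSup₂_le fun s hs => ?_
    have hs0 : 0 < s := lt_of_lt_of_le (by linarith) hs
    have hd0 : (0:ℝ) ≤ 2 * C / ρ * |z - z'| :=
      mul_nonneg (div_nonneg (by linarith) hρ0.le) (abs_nonneg _)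
    have hint : ∀ a b : ℝ, IntervalIntegrable (fun t => |f t|) volume a b :=
      fun a b => hf.abs.intervalIntegrable
    have e2 : (∫ t in (z - s)..(z + s), |f t|) - (∫ t in (z' - s)..(z' + s), |f t|)
        = (∫ t in (z - s)..(z' - s), |f t|) + (∫ t in (z' + s)..(z + s), |f t|) := by
      have i1 := intervalIntegral.integral_add_adjacent_intervals
        (a := z - s) (b := z' - s) (c := z' + s) (μ := volume)
        (f := fun t => |f t|) (hint _ _) (hint _ _)
      have i2 := intervalIntegral.integral_add_adjacent_intervals
        (a := z - s) (b := z' + s) (c := z + s) (μ := volume)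
        (f := fun t => |f t|) (hint _ _) (hint _ _)
      linarith
    have e4 : avgFn (fun y => |f y|) z s - avgFn (fun y => |f y|) z' s
        ≤ 1 / (2 * s) * (2 * C * |z - z'|) := by
      rw [avg_eq f z s, avg_eq f z' s, ← mul_sub, e2]
      have h1 := key2 (z - s) (z' - s)
      have h2 := key2 (z' + s) (z + s)
      have h4 := abs_add_le (∫ t in (z - s)..(z' - s), |f t|) (∫ t in (z' + s)..(z + s), |f t|)
      have h5 : |z' - s - (z - s)| = |z - z'| := by
        rw [show z' - s - (z - s) = -(z - z') by ring, abs_neg]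
      have h6 : |z + s - (z' + s)| = |z - z'| := by
        rw [show z + s - (z' + s) = z - z' by ring]
      rw [h5] at h1; rw [h6] at h2
      have h7 := le_abs_self ((∫ t in (z - s)..(z' - s), |f t|)
        + ∫ t in (z' + s)..(z + s), |f t|)
      have h8 : (0:ℝ) ≤ 1 / (2 * s) := by positivity
      apply mul_le_mul_of_nonneg_left _ h8
      linarith
    have e5 : 1 / (2 * s) * (2 * C * |z - z'|) ≤ 2 * C / ρ * |z - z'| := by
      have h9 : 1 / (2 * s) ≤ 1 / ρ := one_div_le_one_div_of_le hρ0 (by linarith)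
      have h10 : (0:ℝ) ≤ 2 * C * |z - z'| := by positivity
      calc 1 / (2 * s) * (2 * C * |z - z'|) ≤ 1 / ρ * (2 * C * |z - z'|) :=
            mul_le_mul_of_nonneg_right h9 h10
        _ = 2 * C / ρ * |z - z'| := by ring
    have e6 : avgFn (fun y => |f y|) z s
        ≤ avgFn (fun y => |f y|) z' s + 2 * C / ρ * |z - z'| := by linarith
    calc ENNReal.ofReal (avgFn (fun y => |f y|) z s)
        ≤ ENNReal.ofReal (avgFn (fun y => |f y|) z' s + 2 * C / ρ * |z - z'|) :=
          ENNReal.ofReal_le_ofReal e6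
      _ = ENNReal.ofReal (avgFn (fun y => |f y|) z' s)
          + ENNReal.ofReal (2 * C / ρ * |z - z'|) :=
          ENNReal.ofReal_add (havg_nonneg z' s hs0) hd0
      _ ≤ N z' + ENNReal.ofReal (2 * C / ρ * |z - z'|) := by
          gcongr
          exact le_iSup₂ (f := fun (s : ℝ) (_ : ρ / 2 ≤ s) =>
            ENNReal.ofReal (avgFn (fun y => |f y|) z' s)) s hs
  -- conclude continuity
  have hlip : LipschitzWith (Real.toNNReal (2 * C / ρ)) (fun z => (N z).toReal) := by
    apply LipschitzWith.of_dist_le_mul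
    intro z z'
    rw [Real.dist_eq, Real.dist_eq]
    have hd : (0:ℝ) ≤ 2 * C / ρ * |z - z'| :=
      mul_nonneg (div_nonneg (by linarith) hρ0.le) (abs_nonneg _)
    have h2' : N z' ≤ N z + ENNReal.ofReal (2 * C / ρ * |z - z'|) := by
      have h3' := hNlip z' z
      rwa [abs_sub_comm z' z] at h3'
    have h3 := toReal_dist_le (hNtop z) (hNtop z') hd (hNlip z z') h2'
    rw [Real.coe_toNNReal _ (div_nonneg (by linarith) hρ0.le)]
    exact h3
  have hcont2 : ContinuousAt (fun z => max |v| ((N z).toReal)) x :=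
    continuousAt_const.max hlip.continuous.continuousAt
  have heq : (fun z => max |v| ((N z).toReal)) =ᶠ[𝓝 x] fun z => (maxFn f z).toReal := by
    have hball : ∀ᶠ z in 𝓝 x, |z - x| ≤ ρ / 2 := by
      filter_upwards [Metric.ball_mem_nhds x (show (0:ℝ) < ρ / 2 by linarith)] with z hz
      rw [Metric.mem_ball, Real.dist_eq] at hz
      exact hz.le
    filter_upwards [hball] with z hz
    rw [hsplit z hz, toReal_sup' ENNReal.ofReal_ne_top (hNtop z),
      ENNReal.toReal_ofReal (abs_nonneg _)]
  exact hcont2.congr heq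
end

section
/- Let A ⊆ ℝ be a Lebesgue measurable set with 0 < |A| < ∞ and let f = χ_A be its characteristic function. If x ∈ ℝ is not a Lebesgue point of f, then for every r > 0 there exists y ∈ (x−r, x+r) such that the Hardy–Littlewood maximal function Mf is discontinuous at y. -/
open MeasureTheory Filter Set Topology
open scoped Classical

noncomputable def mA (A : Set ℝ) (y t : ℝ) : ℝ :=
  (volume (A ∩ Set.Ioo (y - t) (y + t))).toReal

lemma mA_nonneg (A : Set ℝ) (y t : ℝ) : 0 ≤ mA A y t := ENNReal.toReal_nonneg

lemma mA_fin (A : Set ℝ) (y t : ℝ) : volume (A ∩ Set.Ioo (y - t) (y + t)) ≠ ⊤ := by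
  refine ne_top_of_le_ne_top ?_ (measure_mono inter_subset_right)
  simp [Real.volume_Ioo]

lemma mA_le (A : Set ℝ) (y t : ℝ) (ht : 0 ≤ t) : mA A y t ≤ 2 * t := by
  have h1 : volume (A ∩ Set.Ioo (y - t) (y + t)) ≤ ENNReal.ofReal (2 * t) := by
    refine le_trans (measure_mono inter_subset_right) ?_
    rw [Real.volume_Ioo]
    apply le_of_eq; congr 1; ring
  calc mA A y t ≤ (ENNReal.ofReal (2 * t)).toReal :=
        ENNReal.toReal_mono ENNReal.ofReal_ne_top h1
    _ ≤ 2 * t := by rw [ENNReal.toReal_ofReal (by linarith)]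

lemma mA_le_V (A : Set ℝ) (hAfin : volume A ≠ ⊤) (y t : ℝ) :
    mA A y t ≤ (volume A).toReal :=
  ENNReal.toReal_mono hAfin (measure_mono inter_subset_left)

lemma mA_mono (A : Set ℝ) (y : ℝ) {s t : ℝ} (h : s ≤ t) : mA A y s ≤ mA A y t := by
  apply ENNReal.toReal_mono (mA_fin A y t)
  exact measure_mono (inter_subset_inter_right _ (Ioo_subset_Ioo (by linarith) (by linarith)))

lemma mA_lip (A : Set ℝ) (y : ℝ) {s t : ℝ} (h : s ≤ t) (hs : 0 ≤ s) :
    mA A y t ≤ mA A y s + 2 * (t - s) := by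
  have hsub : A ∩ Set.Ioo (y - t) (y + t) ⊆
      (A ∩ Set.Ioo (y - s) (y + s)) ∪ (Set.Ioc (y - t) (y - s) ∪ Set.Ico (y + s) (y + t)) := by
    rintro z ⟨hzA, hz1, hz2⟩
    rcases le_or_gt z (y - s) with h1 | h1
    · exact Or.inr (Or.inl ⟨hz1, h1⟩)
    rcases lt_or_ge z (y + s) with h2 | h2
    · exact Or.inl ⟨hzA, h1, h2⟩
    · exact Or.inr (Or.inr ⟨h2, hz2⟩)
  have hm : volume (A ∩ Set.Ioo (y - t) (y + t)) ≤
      volume (A ∩ Set.Ioo (y - s) (y + s)) + (ENNReal.ofReal (t - s) + ENNReal.ofReal (t - s)) := by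
    refine le_trans (measure_mono hsub) (le_trans (measure_union_le _ _) ?_)
    gcongr
    refine le_trans (measure_union_le _ _) ?_
    rw [Real.volume_Ioc, Real.volume_Ico]
    apply le_of_eq
    congr 1 <;> congr 1 <;> ring
  have := ENNReal.toReal_mono (by
    refine ENNReal.add_ne_top.2 ⟨mA_fin A y s, ?_⟩
    finiteness) hm
  rw [ENNReal.toReal_add (mA_fin A y s) (by finiteness), ENNReal.toReal_add (by finiteness) (by finiteness), ENNReal.toReal_ofReal (by linarith)] at this
  unfold mA; linarith [this]

lemma mA_contOn (A : Set ℝ) (y : ℝ) : ContinuousOn (mA A y) (Set.Ici 0) := by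
  have : LipschitzOnWith 2 (mA A y) (Set.Ici 0) := by
    rw [lipschitzOnWith_iff_dist_le_mul]
    intro s hs t ht
    rw [Real.dist_eq, Real.dist_eq]
    rcases le_total t s with h | h
    · have h1 := mA_lip A y h ht
      have h2 := mA_mono A y h
      rw [abs_of_nonneg (by linarith), abs_of_nonneg (by linarith)]
      push_cast; linarith
    · have h1 := mA_lip A y h hs
      have h2 := mA_mono A y h
      rw [abs_of_nonpos (by linarith), abs_of_nonpos (by linarith)]
      push_cast; linarith
  exact this.continuousOn

lemma measure_inter_Ioc (A : Set ℝ) (a b : ℝ) :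
    volume (A ∩ Set.Ioc a b) = volume (A ∩ Set.Ioo a b) := by
  refine le_antisymm ?_ (measure_mono (inter_subset_inter_right _ Set.Ioo_subset_Ioc_self))
  have : A ∩ Set.Ioc a b ⊆ (A ∩ Set.Ioo a b) ∪ {b} := by
    rintro z ⟨hz, h1, h2⟩
    rcases lt_or_eq_of_le h2 with h | h
    · exact Or.inl ⟨hz, h1, h⟩
    · exact Or.inr (by simp [h])
  refine le_trans (measure_mono this) (le_trans (measure_union_le _ _) ?_)
  simp

lemma measure_inter_Icc (A : Set ℝ) (a b : ℝ) :
    volume (A ∩ Set.Icc a b) = volume (A ∩ Set.Ioo a b) := by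
  refine le_antisymm ?_ (measure_mono (inter_subset_inter_right _ Set.Ioo_subset_Icc_self))
  have : A ∩ Set.Icc a b ⊆ (A ∩ Set.Ioo a b) ∪ ({a} ∪ {b}) := by
    rintro z ⟨hz, h1, h2⟩
    rcases eq_or_lt_of_le h1 with h | h
    · exact Or.inr (Or.inl (by simp [h.symm]))
    rcases eq_or_lt_of_le h2 with h' | h'
    · exact Or.inr (Or.inr (by simp [h']))
    · exact Or.inl ⟨hz, h, h'⟩
  refine le_trans (measure_mono this) (le_trans (measure_union_le _ _) ?_)
  refine le_trans (add_le_add_right (measure_union_le _ _) _) ?_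
  simp

lemma density_ae (A : Set ℝ) (hA : MeasurableSet A) :
    ∀ᵐ y : ℝ, Tendsto (fun t => mA A y t / (2 * t)) (𝓝[>] 0)
      (𝓝 (Set.indicator A (fun _ => (1:ℝ)) y)) := by
  filter_upwards [Besicovitch.ae_tendsto_measure_inter_div_of_measurableSet volume hA] with y hy
  have hne : Set.indicator A (fun _ => (1:ENNReal)) y ≠ ⊤ := by
    by_cases h : y ∈ A <;> simp [Set.indicator_apply, h]
  have h1 : Tendsto (fun t => (volume (A ∩ Metric.closedBall y t) / volume (Metric.closedBall y t)).toReal)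
      (𝓝[>] 0) (𝓝 ((Set.indicator A (fun _ => (1:ENNReal)) y).toReal)) := by
    refine (ENNReal.tendsto_toReal hne).comp ?_
    convert hy using 2
    rfl
  have h2 : (Set.indicator A (fun _ => (1:ENNReal)) y).toReal = Set.indicator A (fun _ => (1:ℝ)) y := by
    by_cases h : y ∈ A <;> simp [Set.indicator_apply, h]
  rw [h2] at h1
  refine Tendsto.congr' ?_ h1
  filter_upwards [self_mem_nhdsWithin] with t ht
  have ht : (0:ℝ) < t := ht
  rw [ENNReal.toReal_div, Real.closedBall_eq_Icc, Real.volume_Icc, measure_inter_Icc,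
    ENNReal.toReal_ofReal (by linarith), show y + t - (y - t) = 2 * t by ring]
  rfl

lemma mA_full (A : Set ℝ) (hA : MeasurableSet A) (y : ℝ) {s t : ℝ} (h : mA A y t = 2 * t) (hs : 0 < s) (hst : s ≤ t) :
    mA A y s = 2 * s := by
  have hIt : volume (Set.Ioo (y - t) (y + t)) = ENNReal.ofReal (2 * t) := by
    rw [Real.volume_Ioo]; congr 1; ring
  have h1 : volume (A ∩ Set.Ioo (y - t) (y + t)) = volume (Set.Ioo (y - t) (y + t)) := by
    refine le_antisymm (measure_mono inter_subset_right) ?_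
    rw [hIt, ← ENNReal.ofReal_toReal (mA_fin A y t)]
    apply ENNReal.ofReal_le_ofReal
    rw [show (volume (A ∩ Set.Ioo (y - t) (y + t))).toReal = mA A y t from rfl, h]
  have h2 : volume (Set.Ioo (y - t) (y + t) \ A) = 0 := by
    have : Set.Ioo (y - t) (y + t) \ A = Set.Ioo (y - t) (y + t) \ (A ∩ Set.Ioo (y - t) (y + t)) := by
      ext z; simp only [Set.mem_diff, Set.mem_inter_iff]; tauto
    rw [this, measure_diff inter_subset_right
      (hA.inter measurableSet_Ioo).nullMeasurableSet (mA_fin A y t), h1]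
    simp
  have h3 : volume (A ∩ Set.Ioo (y - s) (y + s)) = volume (Set.Ioo (y - s) (y + s)) := by
    refine le_antisymm (measure_mono inter_subset_right) ?_
    have hsub : Set.Ioo (y - s) (y + s) ⊆ (A ∩ Set.Ioo (y - s) (y + s)) ∪ (Set.Ioo (y - t) (y + t) \ A) := by
      intro z hz
      by_cases hzA : z ∈ A
      · exact Or.inl ⟨hzA, hz⟩
      · exact Or.inr ⟨Set.Ioo_subset_Ioo (by linarith) (by linarith) hz, hzA⟩
    refine le_trans (measure_mono hsub) (le_trans (measure_union_le _ _) ?_)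
    rw [h2, add_zero]
  rw [mA, h3, Real.volume_Ioo, ENNReal.toReal_ofReal (by linarith)]
  ring

section main
variable {A : Set ℝ} (hA : MeasurableSet A) {f : ℝ → ℝ}
  (hfdef : f = Set.indicator A (fun _ => (1 : ℝ)))

include hfdef in
lemma f_shift (y : ℝ) : (fun s => f (y + s)) = ((fun s => y + s) ⁻¹' A).indicator (fun _ => (1:ℝ)) := by
  ext s
  by_cases h : y + s ∈ A <;> simp [hfdef, Set.indicator_apply, h]

include hA hfdef in
lemma f_intble (y a b : ℝ) : IntervalIntegrable (fun s => f (y + s)) volume a b := by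
  rw [f_shift hfdef]
  apply IntegrableOn.intervalIntegrable
  have h1 : IntegrableOn (fun _ => (1:ℝ)) (Set.uIcc a b) volume :=
    integrableOn_const isCompact_uIcc.measure_lt_top.ne
  exact h1.integrable.indicator (hA.preimage (measurable_const_add y))

include hA hfdef in
lemma integral_f (y t : ℝ) (ht : 0 < t) :
    (∫ s in (-t)..t, f (y + s)) = mA A y t := by
  rw [hfdef]
  rw [intervalIntegral.integral_comp_add_left (Set.indicator A fun _ => (1:ℝ)) y]
  rw [intervalIntegral.integral_of_le (by linarith : y + -t ≤ y + t)]
  rw [MeasureTheory.integral_indicator hA, MeasureTheory.setIntegral_const,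
    measureReal_def, Measure.restrict_apply hA, measure_inter_Ioc, smul_eq_mul, mul_one]
  have : y + -t = y - t := by ring
  rw [this]; rfl

include hA hfdef in
lemma integral_f1 (y t : ℝ) (ht : 0 < t) :
    (∫ s in (-t)..t, |f (y + s) - 1|) = 2 * t - mA A y t := by
  have heq : (fun s => |f (y + s) - 1|) = (fun s => 1 - f (y + s)) := by
    ext s
    by_cases h : y + s ∈ A <;> simp [hfdef, Set.indicator_apply, h] <;> norm_num
  rw [heq, intervalIntegral.integral_sub intervalIntegrable_const (f_intble hA hfdef y _ _),
    integral_f hA hfdef y t ht, intervalIntegral.integral_const, smul_eq_mul, mul_one]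
  ring_nf

include hfdef in
lemma abs_f : (fun z => |f z|) = f := by
  ext z
  by_cases h : z ∈ A <;> simp [hfdef, Set.indicator_apply, h]

include hA hfdef in
lemma avg_eq_s6 (y t : ℝ) (ht : 0 < t) : avgFn f y t = mA A y t / (2 * t) := by
  rw [avgFn, integral_f hA hfdef y t ht]
  ring

include hA hfdef in
lemma maxFn_eq_s6 (y : ℝ) :
    maxFn f y = ⨆ (t : ℝ) (_ : 0 < t), ENNReal.ofReal (mA A y t / (2 * t)) := by
  rw [maxFn, abs_f hfdef]
  congr 1; ext t; congr 1; ext ht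
  rw [avg_eq_s6 hA hfdef y t ht]

include hA hfdef in
lemma maxFn_le_one (y : ℝ) : maxFn f y ≤ 1 := by
  rw [maxFn_eq_s6 hA hfdef]
  refine iSup_le fun t => iSup_le fun ht => ?_
  rw [← ENNReal.ofReal_one]
  apply ENNReal.ofReal_le_ofReal
  rw [div_le_one (by linarith)]
  simpa using mA_le A y t ht.le

include hA hfdef in
lemma u_le_of (y c : ℝ) (hc : 0 ≤ c) (h : ∀ t, 0 < t → mA A y t / (2 * t) ≤ c) :
    (maxFn f y).toReal ≤ c := by
  have h1 : maxFn f y ≤ ENNReal.ofReal c := by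
    rw [maxFn_eq_s6 hA hfdef]
    exact iSup_le fun t => iSup_le fun ht => ENNReal.ofReal_le_ofReal (h t ht)
  calc (maxFn f y).toReal ≤ (ENNReal.ofReal c).toReal :=
        ENNReal.toReal_mono ENNReal.ofReal_ne_top h1
    _ = c := ENNReal.toReal_ofReal hc

include hA hfdef in
lemma u_le_one (y : ℝ) : (maxFn f y).toReal ≤ 1 :=
  u_le_of hA hfdef y 1 zero_le_one fun t ht => by
    rw [div_le_one (by linarith)]; simpa using mA_le A y t ht.le

include hA hfdef in
lemma u_ge (y t : ℝ) (ht : 0 < t) : mA A y t / (2 * t) ≤ (maxFn f y).toReal := by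
  have h1 : ENNReal.ofReal (mA A y t / (2 * t)) ≤ maxFn f y := by
    rw [maxFn_eq_s6 hA hfdef]
    exact le_iSup_of_le t (le_iSup_of_le ht le_rfl)
  have h2 := ENNReal.toReal_mono (lt_of_le_of_lt (maxFn_le_one hA hfdef y) (by norm_num)).ne h1
  rwa [ENNReal.toReal_ofReal (div_nonneg (mA_nonneg A y t) (by linarith))] at h2

include hA hfdef in
lemma u_nonneg (y : ℝ) : 0 ≤ (maxFn f y).toReal := ENNReal.toReal_nonneg

include hA hfdef in
lemma gap_bound (hAfin : volume A ≠ ⊤) {p q y d : ℝ} (hd : 0 < d) (hy : y ∈ Set.Ioo p q)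
    (hdy : d ≤ y - p ∨ d ≤ q - y) (hnull : volume (A ∩ Set.Ioo p q) = 0) :
    (maxFn f y).toReal ≤ 1 - min (1/2) (d / (d + (volume A).toReal)) := by
  set V := (volume A).toReal with hVdef
  have hV : 0 ≤ V := ENNReal.toReal_nonneg
  set c := min (1/2) (d / (d + V)) with hcdef
  have hc1 : c ≤ 1/2 := min_le_left _ _
  have hc2 : c ≤ d / (d + V) := min_le_right _ _
  have hc0 : 0 ≤ c := le_min (by norm_num) (div_nonneg hd.le (by linarith))
  have hcd : c * (d + V) ≤ d := by
    rw [← le_div_iff₀ (by linarith)]; exact hc2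
  obtain ⟨hy1, hy2⟩ := hy
  set g1 := y - p with hg1
  set g2 := q - y with hg2
  have hg1p : 0 < g1 := by simp [hg1]; linarith
  have hg2p : 0 < g2 := by simp [hg2]; linarith
  apply u_le_of hA hfdef y _ (by linarith)
  intro t ht
  -- key measure estimate
  have hkey : mA A y t ≤ max (t - g1) 0 + max (t - g2) 0 := by
    have hsub : A ∩ Set.Ioo (y - t) (y + t) ⊆
        Set.Ioc (y - t) p ∪ (A ∩ Set.Ioo p q ∪ Set.Ico q (y + t)) := by
      rintro z ⟨hzA, hz1, hz2⟩
      rcases le_or_gt z p with h1 | h1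
      · exact Or.inl ⟨hz1, h1⟩
      rcases lt_or_ge z q with h2 | h2
      · exact Or.inr (Or.inl ⟨hzA, h1, h2⟩)
      · exact Or.inr (Or.inr ⟨h2, hz2⟩)
    have hm : volume (A ∩ Set.Ioo (y - t) (y + t)) ≤
        ENNReal.ofReal (t - g1) + ENNReal.ofReal (t - g2) := by
      refine le_trans (measure_mono hsub) (le_trans (measure_union_le _ _) ?_)
      have e1 : volume (Set.Ioc (y - t) p) = ENNReal.ofReal (t - g1) := by
        rw [Real.volume_Ioc]; congr 1; rw [hg1]; ring
      have e2 : volume (A ∩ Set.Ioo p q ∪ Set.Ico q (y + t)) ≤ ENNReal.ofReal (t - g2) := by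
        refine le_trans (measure_union_le _ _) ?_
        rw [hnull, Real.volume_Ico, zero_add]
        apply le_of_eq; congr 1; rw [hg2]; ring
      rw [e1]; exact add_le_add_right e2 _
    have := ENNReal.toReal_mono (by finiteness) hm
    rw [ENNReal.toReal_add ENNReal.ofReal_ne_top ENNReal.ofReal_ne_top,
      ENNReal.toReal_ofReal', ENNReal.toReal_ofReal'] at this
    exact this
  have hbound : mA A y t ≤ t + max (t - d) 0 := by
    rcases hdy with hdy | hdy
    · have h1 : max (t - g1) 0 ≤ max (t - d) 0 := by
        apply max_le_max _ le_rfl; simp [hg1] at hdy ⊢; linarith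
      have h2 : max (t - g2) 0 ≤ t := by
        apply max_le (by linarith) ht.le
      linarith [hkey]
    · have h1 : max (t - g2) 0 ≤ max (t - d) 0 := by
        apply max_le_max _ le_rfl; simp [hg2] at hdy ⊢; linarith
      have h2 : max (t - g1) 0 ≤ t := by
        apply max_le (by linarith) ht.le
      linarith [hkey]
  have hmV : mA A y t ≤ V := mA_le_V A hAfin y t
  have hm0 : 0 ≤ mA A y t := mA_nonneg A y t
  rw [div_le_iff₀ (by linarith)]
  rcases le_or_gt t d with h | h
  · have : max (t - d) 0 = 0 := max_eq_right (by linarith)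
    rw [this] at hbound
    nlinarith
  · have : max (t - d) 0 = t - d := max_eq_left (by linarith)
    rw [this] at hbound
    rcases le_or_gt (2 * t) (d + V) with h' | h'
    · nlinarith
    · nlinarith [(by nlinarith : (2 * t - (d + V)) * (1 - c) ≥ 0)]

include hA hfdef in
lemma u_eq_one_of_density_one {y : ℝ}
    (hy : Tendsto (fun t => mA A y t / (2 * t)) (𝓝[>] 0) (𝓝 1)) :
    (maxFn f y).toReal = 1 := by
  refine le_antisymm (u_le_one hA hfdef y) ?_
  by_contra hlt
  push_neg at hlt
  have h1 : ∀ᶠ t in 𝓝[>] (0:ℝ), (maxFn f y).toReal < mA A y t / (2 * t) :=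
    hy.eventually (eventually_gt_nhds hlt)
  obtain ⟨t, hlt', ht⟩ := (h1.and self_mem_nhdsWithin).exists
  exact absurd (u_ge hA hfdef y t ht) (not_le.2 hlt')

include hA hfdef in
lemma u_lt_one_of_density_zero (hAfin : volume A ≠ ⊤) {y : ℝ}
    (hy : Tendsto (fun t => mA A y t / (2 * t)) (𝓝[>] 0) (𝓝 0)) :
    (maxFn f y).toReal < 1 := by
  have h1 : ∀ᶠ t in 𝓝[>] (0:ℝ), mA A y t / (2 * t) < 1/2 :=
    hy.eventually (eventually_lt_nhds (by norm_num))
  rw [eventually_nhdsWithin_iff, Metric.eventually_nhds_iff] at h1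
  obtain ⟨ε, hε, hball⟩ := h1
  set t₀ := ε / 2 with ht₀def
  have ht₀ : 0 < t₀ := by positivity
  have hsmall : ∀ t, 0 < t → t ≤ t₀ → mA A y t / (2 * t) < 1/2 := by
    intro t ht1 ht2
    refine hball ?_ ht1
    rw [Real.dist_eq, sub_zero, abs_of_pos ht1]
    calc t ≤ ε / 2 := ht2
      _ < ε := by linarith
  set V := (volume A).toReal with hVdef
  have hV : 0 ≤ V := ENNReal.toReal_nonneg
  set T := max t₀ V with hTdef
  have hT0 : t₀ ≤ T := le_max_left _ _
  have hTV : V ≤ T := le_max_right _ _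
  have hTpos : 0 < T := lt_of_lt_of_le ht₀ hT0
  have hcont : ContinuousOn (fun t => mA A y t / (2 * t)) (Set.Icc t₀ T) := by
    apply ContinuousOn.div
    · exact (mA_contOn A y).mono fun z hz => le_trans ht₀.le hz.1
    · exact (continuous_const.mul continuous_id).continuousOn
    · intro z hz
      have h0 : 0 < z := lt_of_lt_of_le ht₀ hz.1
      exact ne_of_gt (by linarith)
  obtain ⟨ts, hts, hmax⟩ := isCompact_Icc.exists_isMaxOn (Set.nonempty_Icc.2 hT0) hcont
  set M := mA A y ts / (2 * ts) with hMdef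
  have htspos : 0 < ts := lt_of_lt_of_le ht₀ hts.1
  have hMlt : M < 1 := by
    by_contra hM
    push_neg at hM
    have hfull : mA A y ts = 2 * ts := by
      have h2 := mA_le A y ts htspos.le
      have h3 : 2 * ts ≤ mA A y ts := (one_le_div (by linarith)).mp hM
      linarith
    have := mA_full A hA y hfull ht₀ hts.1
    have h4 := hsmall t₀ ht₀ le_rfl
    rw [this] at h4
    rw [div_self (by linarith)] at h4
    norm_num at h4
  have hMax : max M (1/2) < 1 := max_lt hMlt (by norm_num)
  refine lt_of_le_of_lt ?_ hMax
  apply u_le_of hA hfdef y _ (le_trans (by norm_num) (le_max_right M (1/2)))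
  intro t ht
  rcases le_or_gt t t₀ with h | h
  · exact le_trans (hsmall t ht h).le (le_max_right _ _)
  rcases le_or_gt t T with h' | h'
  · exact le_trans (hmax ⟨h.le, h'⟩) (le_max_left _ _)
  · refine le_trans ?_ (le_max_right M (1/2))
    rw [div_le_iff₀ (by linarith)]
    have := mA_le_V A hAfin y t
    nlinarith

include hA hfdef in
lemma lebesgue_of_density_one {y : ℝ}
    (hy : Tendsto (fun t => mA A y t / (2 * t)) (𝓝[>] 0) (𝓝 1)) :
    IsLebesguePoint f y := by
  refine ⟨1, ?_⟩
  have h1 : Tendsto (fun t : ℝ => 1 - mA A y t / (2 * t)) (𝓝[>] 0) (𝓝 0) := by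
    have := (tendsto_const_nhds (x := (1:ℝ)) (f := 𝓝[>] (0:ℝ))).sub hy
    simpa using this
  refine Tendsto.congr' ?_ h1
  filter_upwards [self_mem_nhdsWithin] with r hr
  have hr : (0:ℝ) < r := hr
  rw [integral_f1 hA hfdef y r hr]
  field_simp

include hA hfdef in
lemma lebesgue_of_density_zero {y : ℝ}
    (hy : Tendsto (fun t => mA A y t / (2 * t)) (𝓝[>] 0) (𝓝 0)) :
    IsLebesguePoint f y := by
  refine ⟨0, ?_⟩
  refine Tendsto.congr' ?_ hy
  filter_upwards [self_mem_nhdsWithin] with r hr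
  have hr : (0:ℝ) < r := hr
  have heq : ∀ s : ℝ, |f (y + s) - 0| = f (y + s) := fun s => by
    rw [sub_zero]; exact congrFun (abs_f hfdef) _
  simp only [heq]
  rw [integral_f hA hfdef y r hr]
  field_simp

end main

set_option maxHeartbeats 2000000 in
theorem non_lebesgue_point_gives_discontinuity_of_maximal (A : Set ℝ)
    (hA : MeasurableSet A) (hA0 : 0 < volume A) (hAfin : volume A ≠ ⊤)
    (f : ℝ → ℝ) (hfdef : f = Set.indicator A (fun _ => (1 : ℝ)))
    (x : ℝ) (hx : ¬ IsLebesguePoint f x) :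
    ∀ r : ℝ, 0 < r →
      ∃ y ∈ Set.Ioo (x - r) (x + r), ¬ ContinuousAt (fun z => (maxFn f z).toReal) y := by
  intro r hr
  by_contra hcont
  push_neg at hcont
  set u : ℝ → ℝ := fun z => (maxFn f z).toReal with hudef
  have hone : ∀ᵐ w : ℝ, w ∈ A → Tendsto (fun t => mA A w t / (2 * t)) (𝓝[>] 0) (𝓝 1) := by
    filter_upwards [density_ae A hA] with w hw hwA
    rwa [Set.indicator_of_mem hwA] at hw
  have hzero : ∀ᵐ w : ℝ, w ∉ A → Tendsto (fun t => mA A w t / (2 * t)) (𝓝[>] 0) (𝓝 0) := by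
    filter_upwards [density_ae A hA] with w hw hwA
    rwa [Set.indicator_of_notMem hwA] at hw
  have hx1 : ¬ Tendsto (fun t => mA A x t / (2 * t)) (𝓝[>] 0) (𝓝 1) :=
    fun h => hx (lebesgue_of_density_one hA hfdef h)
  have hx0 : ¬ Tendsto (fun t => mA A x t / (2 * t)) (𝓝[>] 0) (𝓝 0) :=
    fun h => hx (lebesgue_of_density_zero hA hfdef h)
  have hxI : x ∈ Set.Ioo (x - r) (x + r) := ⟨by linarith, by linarith⟩
  rcases lt_or_eq_of_le (u_le_one hA hfdef x) with hux | hux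
  · -- u x < 1 : A is null near x, density 0, Lebesgue point, contradiction
    have h1 : ∀ᶠ z in 𝓝 x, u z < 1 := (hcont x hxI).eventually (eventually_lt_nhds hux)
    rw [Metric.eventually_nhds_iff] at h1
    obtain ⟨η, hη, hball⟩ := h1
    have hnull : volume (A ∩ Set.Ioo (x - η) (x + η)) = 0 := by
      rw [measure_eq_zero_iff_ae_notMem]
      filter_upwards [hone] with w hw
      rintro ⟨hwA, hw1, hw2⟩
      have huw : u w = 1 := u_eq_one_of_density_one hA hfdef (hw hwA)
      have : u w < 1 := hball (by rw [Real.dist_eq, abs_lt]; constructor <;> linarith)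
      rw [huw] at this; exact absurd this (lt_irrefl 1)
    have htend : Tendsto (fun t => mA A x t / (2 * t)) (𝓝[>] 0) (𝓝 0) := by
      have hev : ∀ᶠ t in 𝓝[>] (0:ℝ), mA A x t / (2 * t) = 0 := by
        filter_upwards [Ioo_mem_nhdsGT_of_mem (Set.left_mem_Ico.2 hη)] with t ht
        have h0 : mA A x t ≤ 0 := by
          have := ENNReal.toReal_mono (by rw [hnull]; exact ENNReal.zero_ne_top)
            (measure_mono (inter_subset_inter_right A
              (Set.Ioo_subset_Ioo (by linarith [ht.2] : x - η ≤ x - t)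
                (by linarith [ht.2] : x + t ≤ x + η))))
          rw [show (volume (A ∩ Set.Ioo (x - η) (x + η))).toReal = 0 by rw [hnull]; rfl] at this
          exact this
        have h0' := mA_nonneg A x t
        rw [le_antisymm h0 h0', zero_div]
      exact Tendsto.congr' (hev.mono fun t ht => ht.symm) tendsto_const_nhds
    exact hx0 htend
  · -- u x = 1
    rw [Metric.tendsto_nhdsWithin_nhds] at hx1
    push_neg at hx1
    obtain ⟨ε, hε, hsmall⟩ := hx1
    obtain ⟨s, hs0, hsr, hDs⟩ : ∃ s : ℝ, 0 < s ∧ s < r ∧ mA A x s / (2 * s) ≤ 1 - ε := by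
      obtain ⟨s, hsIoi, hsd, hsD⟩ := hsmall r hr
      have hs0' : (0:ℝ) < s := hsIoi
      refine ⟨s, hs0', ?_, ?_⟩
      · rwa [Real.dist_eq, sub_zero, abs_of_pos hsIoi] at hsd
      · have hle1 : mA A x s / (2 * s) ≤ 1 := by
          rw [div_le_one (by linarith)]
          simpa using mA_le A x s hsIoi.le
        rw [Real.dist_eq, abs_of_nonpos (by linarith)] at hsD
        linarith
    -- find a bad point z near x
    have hschange : volume (A ∩ Set.Ioo (x - s) (x + s)) < ENNReal.ofReal (2 * s) := by
      have h1 : volume (A ∩ Set.Ioo (x - s) (x + s)) = ENNReal.ofReal (mA A x s) :=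
        (ENNReal.ofReal_toReal (mA_fin A x s)).symm
      rw [h1]
      apply ENNReal.ofReal_lt_ofReal_iff (by linarith) |>.2
      have : mA A x s ≤ (1 - ε) * (2 * s) := by
        rw [div_le_iff₀ (by linarith)] at hDs; linarith
      nlinarith
    have hBpos : 0 < volume (Set.Ioo (x - s) (x + s) \ A) := by
      have hsets : Set.Ioo (x - s) (x + s) \ (A ∩ Set.Ioo (x - s) (x + s)) =
          Set.Ioo (x - s) (x + s) \ A := by
        ext w
        simp only [Set.mem_diff, Set.mem_inter_iff]
        tauto
      have h2 : volume (Set.Ioo (x - s) (x + s)) - volume (A ∩ Set.Ioo (x - s) (x + s)) ≤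
          volume (Set.Ioo (x - s) (x + s) \ A) := hsets ▸ le_measure_diff
      refine lt_of_lt_of_le ?_ h2
      rw [tsub_pos_iff_lt, Real.volume_Ioo, show x + s - (x - s) = 2 * s by ring]
      exact hschange
    have hxae : ∀ᵐ w : ℝ, w ≠ x := by
      rw [ae_iff]
      have : {w : ℝ | ¬ w ≠ x} = {x} := by ext w; simp
      rw [this]; exact measure_singleton x
    obtain ⟨z, hzB, hztend, hzx⟩ : ∃ z, z ∈ Set.Ioo (x - s) (x + s) \ A ∧
        Tendsto (fun t => mA A z t / (2 * t)) (𝓝[>] 0) (𝓝 0) ∧ z ≠ x := by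
      by_contra hno
      push_neg at hno
      have : ∀ᵐ w : ℝ, w ∉ Set.Ioo (x - s) (x + s) \ A := by
        filter_upwards [hzero, hxae] with w hw hwx hwB
        exact hwx (hno w hwB (hw hwB.2))
      rw [← measure_eq_zero_iff_ae_notMem] at this
      rw [this] at hBpos; exact lt_irrefl 0 hBpos
    obtain ⟨⟨hz1, hz2⟩, hzA⟩ := hzB
    have huz : u z < 1 := u_lt_one_of_density_zero hA hfdef hAfin hztend
    set V := (volume A).toReal with hVdef
    have hV : 0 ≤ V := ENNReal.toReal_nonneg
    rcases lt_or_gt_of_ne hzx with hlt | hgt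
    · -- z < x
      have hIccI : Set.Icc z x ⊆ Set.Ioo (x - r) (x + r) := fun w hw =>
        ⟨by nlinarith [hw.1, hz1], by nlinarith [hw.2]⟩
      set S := {w : ℝ | w ∈ Set.Icc z x ∧ 1 ≤ u w} with hSdef
      have hxS : x ∈ S := ⟨⟨hlt.le, le_rfl⟩, by rw [← hux]⟩
      have hSbdd : BddBelow S := ⟨z, fun w hw => hw.1.1⟩
      have hSclosed : IsClosed S := by
        rw [← isSeqClosed_iff_isClosed]
        intro ws w hws hlim
        have hIcc : w ∈ Set.Icc z x :=
          isClosed_Icc.mem_of_tendsto hlim (Filter.Eventually.of_forall fun n => (hws n).1)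
        refine ⟨hIcc, ge_of_tendsto (((hcont w (hIccI hIcc)).tendsto).comp hlim)
          (Filter.Eventually.of_forall fun n => (hws n).2)⟩
      set a := sInf S with hadef
      have haS : a ∈ S := hSclosed.csInf_mem ⟨x, hxS⟩ hSbdd
      have hza : z < a := by
        rcases lt_or_eq_of_le haS.1.1 with h | h
        · exact h
        · exfalso; rw [← h] at haS; exact absurd haS.2 (not_le.2 huz)
      set lam := a - z with hlamdef
      have hlam : 0 < lam := by simp [hlamdef]; linarith
      have hgap : volume (A ∩ Set.Ioo z a) = 0 := by
        rw [measure_eq_zero_iff_ae_notMem]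
        filter_upwards [hone] with w hw
        rintro ⟨hwA, hw1, hw2⟩
        have huw : u w = 1 := u_eq_one_of_density_one hA hfdef (hw hwA)
        have hwS : w ∉ S := fun hwS => absurd (csInf_le hSbdd hwS) (not_le.2 hw2)
        have hwIcc : w ∈ Set.Icc z x := ⟨hw1.le, le_trans hw2.le haS.1.2⟩
        exact hwS ⟨hwIcc, le_of_eq huw.symm⟩
      -- sequence approaching a from inside the gap
      have hyn : Tendsto (fun n : ℕ => a - (lam / 2) * (1 / (n + 1))) atTop (𝓝 a) := by
        have h1 : Tendsto (fun n : ℕ => (lam / 2) * (1 / (n + 1))) atTop (𝓝 0) := by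
          have := tendsto_one_div_add_atTop_nhds_zero_nat.const_mul (lam / 2)
          simpa using this
        have := tendsto_const_nhds (x := a) (f := atTop (α := ℕ)) |>.sub h1
        simpa using this
      have hbound : ∀ n : ℕ, u (a - (lam / 2) * (1 / (n + 1))) ≤
          1 - min (1/2) ((lam / 2) / (lam / 2 + V)) := by
        intro n
        have hn1 : (0:ℝ) < 1 / (n + 1) := by positivity
        have hn2 : (1:ℝ) / (n + 1) ≤ 1 := by
          rw [div_le_one (by positivity)]; simp
        have hy1 : z < a - (lam / 2) * (1 / (n + 1)) := by nlinarith
        have hy2 : a - (lam / 2) * (1 / (n + 1)) < a := by nlinarith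
        refine gap_bound hA hfdef hAfin (by linarith) ⟨hy1, hy2⟩ (Or.inl ?_) hgap
        nlinarith
      have hua : u a = 1 := le_antisymm (u_le_one hA hfdef a) haS.2
      have hlim : Tendsto (fun n : ℕ => u (a - (lam / 2) * (1 / (n + 1)))) atTop (𝓝 (u a)) :=
        ((hcont a (hIccI haS.1)).tendsto).comp hyn
      have hle := le_of_tendsto hlim (Filter.Eventually.of_forall hbound)
      rw [hua] at hle
      have hc : 0 < min (1/2) ((lam / 2) / (lam / 2 + V)) :=
        lt_min (by norm_num) (by positivity)
      linarith
    · -- z > x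
      have hIccI : Set.Icc x z ⊆ Set.Ioo (x - r) (x + r) := fun w hw =>
        ⟨by nlinarith [hw.1], by nlinarith [hw.2, hz2]⟩
      set S := {w : ℝ | w ∈ Set.Icc x z ∧ 1 ≤ u w} with hSdef
      have hxS : x ∈ S := ⟨⟨le_rfl, hgt.le⟩, by rw [← hux]⟩
      have hSbdd : BddAbove S := ⟨z, fun w hw => hw.1.2⟩
      have hSclosed : IsClosed S := by
        rw [← isSeqClosed_iff_isClosed]
        intro ws w hws hlim
        have hIcc : w ∈ Set.Icc x z :=
          isClosed_Icc.mem_of_tendsto hlim (Filter.Eventually.of_forall fun n => (hws n).1)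
        refine ⟨hIcc, ge_of_tendsto (((hcont w (hIccI hIcc)).tendsto).comp hlim)
          (Filter.Eventually.of_forall fun n => (hws n).2)⟩
      set a := sSup S with hadef
      have haS : a ∈ S := hSclosed.csSup_mem ⟨x, hxS⟩ hSbdd
      have hza : a < z := by
        rcases lt_or_eq_of_le haS.1.2 with h | h
        · exact h
        · exfalso; rw [h] at haS; exact absurd haS.2 (not_le.2 huz)
      set lam := z - a with hlamdef
      have hlam : 0 < lam := by simp [hlamdef]; linarith
      have hgap : volume (A ∩ Set.Ioo a z) = 0 := by
        rw [measure_eq_zero_iff_ae_notMem]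
        filter_upwards [hone] with w hw
        rintro ⟨hwA, hw1, hw2⟩
        have huw : u w = 1 := u_eq_one_of_density_one hA hfdef (hw hwA)
        have hwS : w ∉ S := fun hwS => absurd (le_csSup hSbdd hwS) (not_le.2 hw1)
        have hwIcc : w ∈ Set.Icc x z := ⟨le_trans haS.1.1 hw1.le, hw2.le⟩
        exact hwS ⟨hwIcc, le_of_eq huw.symm⟩
      have hyn : Tendsto (fun n : ℕ => a + (lam / 2) * (1 / (n + 1))) atTop (𝓝 a) := by
        have h1 : Tendsto (fun n : ℕ => (lam / 2) * (1 / (n + 1))) atTop (𝓝 0) := by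
          have := tendsto_one_div_add_atTop_nhds_zero_nat.const_mul (lam / 2)
          simpa using this
        have := tendsto_const_nhds (x := a) (f := atTop (α := ℕ)) |>.add h1
        simpa using this
      have hbound : ∀ n : ℕ, u (a + (lam / 2) * (1 / (n + 1))) ≤
          1 - min (1/2) ((lam / 2) / (lam / 2 + V)) := by
        intro n
        have hn1 : (0:ℝ) < 1 / (n + 1) := by positivity
        have hn2 : (1:ℝ) / (n + 1) ≤ 1 := by
          rw [div_le_one (by positivity)]; simp
        have hy1 : a < a + (lam / 2) * (1 / (n + 1)) := by nlinarith
        have hy2 : a + (lam / 2) * (1 / (n + 1)) < z := by nlinarith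
        refine gap_bound hA hfdef hAfin (by linarith) ⟨hy1, hy2⟩ (Or.inr ?_) hgap
        nlinarith
      have hua : u a = 1 := le_antisymm (u_le_one hA hfdef a) haS.2
      have hlim : Tendsto (fun n : ℕ => u (a + (lam / 2) * (1 / (n + 1)))) atTop (𝓝 (u a)) :=
        ((hcont a (hIccI haS.1)).tendsto).comp hyn
      have hle := le_of_tendsto hlim (Filter.Eventually.of_forall hbound)
      rw [hua] at hle
      have hc : 0 < min (1/2) ((lam / 2) / (lam / 2 + V)) :=
        lt_min (by norm_num) (by positivity)
      linarith
end

section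
/- Let f ∈ L¹(ℝ) and let x ∈ ℝ. If Tf(x) > 0, then the infimum is attained: Tf(x) ∈ E_{f,x}, i.e., Mf(x) = A_{Tf(x)}|f|(x). -/
open MeasureTheory Filter Set Topology
open scoped Classical

theorem frequency_infimum_attained (f : ℝ → ℝ) (hf : Integrable f) (x : ℝ)
    (hpos : 0 < freqFn f x) :
    freqFn f x ∈ freqSet f x ∧
      maxFn f x = ENNReal.ofReal (avgFn (fun y => |f y|) x (freqFn f x)) := by
  by_cases hne : (freqSet f x).Nonempty
  swap
  · simp [freqFn, hne] at hpos
  have hT : freqFn f x = sInf (freqSet f x) := by simp [freqFn, hne]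
  set T := freqFn f x with hTdef
  have hTpos : 0 < T := hpos
  have hbdd : BddBelow (freqSet f x) := ⟨0, fun r hr => hr.1.le⟩
  -- sequence in freqSet tending to sInf
  obtain ⟨u, -, hu_tendsto, hu_mem⟩ := exists_seq_tendsto_sInf hne hbdd
  rw [← hT] at hu_tendsto
  -- continuity of avg at T
  have hg : Integrable (fun y => |f (x + y)|) := (hf.comp_add_left x).abs
  have hcont : ContinuousAt (fun r => avgFn (fun y => |f y|) x r) T := by
    have h1 : Continuous fun r : ℝ => ∫ y in (0:ℝ)..r, |f (x + y)| :=
      hg.continuous_primitive 0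
    have h2 : Continuous fun r : ℝ => ∫ y in (-r)..r, |f (x + y)| := by
      have heq : ∀ r : ℝ, (∫ y in (-r)..r, |f (x + y)|) =
          (∫ y in (0:ℝ)..r, |f (x + y)|) - ∫ y in (0:ℝ)..(-r), |f (x + y)| := fun r =>
        (intervalIntegral.integral_interval_sub_left hg.intervalIntegrable
          hg.intervalIntegrable).symm
      simp only [heq]
      exact h1.sub (h1.comp continuous_neg)
    have hinv : ContinuousAt (fun r : ℝ => 1 / (2 * r)) T := by
      apply ContinuousAt.div continuousAt_const (by fun_prop)
      positivity
    exact hinv.mul h2.continuousAt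
  have hconst : ∀ n, ENNReal.ofReal (avgFn (fun y => |f y|) x (u n)) = maxFn f x :=
    fun n => ((hu_mem n).2).symm
  have hlim : Tendsto (fun n => ENNReal.ofReal (avgFn (fun y => |f y|) x (u n))) atTop
      (𝓝 (ENNReal.ofReal (avgFn (fun y => |f y|) x T))) :=
    (ENNReal.continuous_ofReal.continuousAt.comp hcont).tendsto.comp hu_tendsto
  have : maxFn f x = ENNReal.ofReal (avgFn (fun y => |f y|) x T) := by
    refine tendsto_nhds_unique ?_ hlim
    simp only [hconst]
    exact tendsto_const_nhds
  exact ⟨⟨hTpos, this⟩, this⟩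
end

section
/- Let f ∈ L¹(ℝ) and let x ∈ ℝ. If Tf(x) = 0, then there exists a sequence (r_n)_{n∈ℕ} of positive real numbers such that r_n → 0 and A_{r_n}|f|(x) → Mf(x) as n → ∞ (convergence of A_{r_n}|f|(x) to Mf(x) being in [0,∞]). -/
open MeasureTheory Filter Set Topology
open scoped Classical

section Aux

variable (f : ℝ → ℝ) (x : ℝ)

lemma aux_integrable (hf : Integrable f) : Integrable (fun y => |f (x + y)|) :=
  (hf.comp_add_left x).abs

lemma avg_nonneg {r : ℝ} (hr : 0 < r) : 0 ≤ avgFn (fun y => |f y|) x r := by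
  have h1 : (0:ℝ) ≤ 1 / (2 * r) := by positivity
  have h2 : (0:ℝ) ≤ ∫ y in (-r)..r, |f (x + y)| :=
    intervalIntegral.integral_nonneg (by linarith) (fun y _ => abs_nonneg _)
  exact mul_nonneg h1 h2

lemma avg_le_bound (hf : Integrable f) {r : ℝ} (hr : 0 < r) :
    avgFn (fun y => |f y|) x r ≤ (∫ y, |f (x + y)|) / (2 * r) := by
  have hG := aux_integrable f x hf
  have h1 : (∫ y in (-r)..r, |f (x + y)|) ≤ ∫ y, |f (x + y)| := by
    rw [intervalIntegral.integral_of_le (by linarith : -r ≤ r)]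
    exact setIntegral_le_integral hG (Filter.Eventually.of_forall fun y => abs_nonneg _)
  have h2 : (0:ℝ) ≤ 1 / (2 * r) := by positivity
  calc avgFn (fun y => |f y|) x r = (1 / (2 * r)) * ∫ y in (-r)..r, |f (x + y)| := rfl
    _ ≤ (1 / (2 * r)) * ∫ y, |f (x + y)| := mul_le_mul_of_nonneg_left h1 h2
    _ = (∫ y, |f (x + y)|) / (2 * r) := by ring

lemma avg_continuousOn (hf : Integrable f) :
    ContinuousOn (fun r => avgFn (fun y => |f y|) x r) (Set.Ioi 0) := by
  have hG := aux_integrable f x hf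
  have hF : Continuous fun t => ∫ y in (0:ℝ)..t, |f (x + y)| :=
    hG.continuous_primitive 0
  have heq : ∀ r : ℝ, avgFn (fun y => |f y|) x r
      = (1 / (2 * r)) * ((∫ y in (0:ℝ)..r, |f (x + y)|)
          - ∫ y in (0:ℝ)..(-r), |f (x + y)|) := by
    intro r
    have h1 : (∫ y in (-r)..(0:ℝ), |f (x + y)|) + ∫ y in (0:ℝ)..r, |f (x + y)|
        = ∫ y in (-r)..r, |f (x + y)| :=
      intervalIntegral.integral_add_adjacent_intervals hG.intervalIntegrable
        hG.intervalIntegrable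
    have h2 : (∫ y in (-r)..(0:ℝ), |f (x + y)|)
        = - ∫ y in (0:ℝ)..(-r), |f (x + y)| :=
      intervalIntegral.integral_symm _ _
    show (1 / (2 * r)) * ∫ y in (-r)..r, |f (x + y)| = _
    rw [← h1, h2]; ring
  have hc1 : ContinuousOn (fun r : ℝ => 1 / (2 * r)) (Set.Ioi 0) := by
    apply ContinuousOn.div continuousOn_const (by fun_prop)
    intro r hr
    have : (0:ℝ) < r := hr
    positivity
  have hc2 : Continuous fun r : ℝ =>
      (∫ y in (0:ℝ)..r, |f (x + y)|) - ∫ y in (0:ℝ)..(-r), |f (x + y)| :=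
    hF.sub (hF.comp continuous_neg)
  exact (hc1.mul hc2.continuousOn).congr fun r _ => heq r

/-- If the supremum over small radii is strictly below the maximal function,
then the maximal value is attained. -/
lemma attained_of_small_sup_lt (hf : Integrable f) {ε : ℝ} (hε : 0 < ε)
    (hlt : (⨆ r ∈ Set.Ioo 0 ε, ENNReal.ofReal (avgFn (fun y => |f y|) x r)) < maxFn f x) :
    (freqSet f x).Nonempty := by
  set A : ℝ → ℝ := fun r => avgFn (fun y => |f y|) x r with hA
  set C : ℝ := ∫ y, |f (x + y)| with hC
  have hC0 : 0 ≤ C := integral_nonneg fun y => abs_nonneg _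
  -- split the supremum
  have hsplit : maxFn f x
      = (⨆ r ∈ Set.Ioo 0 ε, ENNReal.ofReal (A r))
        ⊔ (⨆ r ∈ Set.Ici ε, ENNReal.ofReal (A r)) := by
    have hset : Set.Ioi (0:ℝ) = Set.Ioo 0 ε ∪ Set.Ici ε := by
      ext r
      constructor
      · intro hr
        rcases lt_or_ge r ε with h | h
        · exact Or.inl ⟨hr, h⟩
        · exact Or.inr h
      · rintro (⟨h1, _⟩ | h)
        · exact h1
        · exact lt_of_lt_of_le hε h
    have h0 : maxFn f x = ⨆ r ∈ Set.Ioi (0:ℝ), ENNReal.ofReal (A r) := rfl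
    rw [h0, hset, iSup_union]
  have hb : maxFn f x = ⨆ r ∈ Set.Ici ε, ENNReal.ofReal (A r) := by
    have h2 : (⨆ r ∈ Set.Ici ε, ENNReal.ofReal (A r)) ≤ maxFn f x := by
      rw [hsplit]; exact le_sup_right
    rcases lt_or_ge (⨆ r ∈ Set.Ici ε, ENNReal.ofReal (A r)) (maxFn f x) with h | h
    · exfalso
      have : maxFn f x < maxFn f x := by
        conv_lhs => rw [hsplit]
        exact sup_lt_iff.mpr ⟨hlt, h⟩
      exact lt_irrefl _ this
    · exact le_antisymm h h2
  -- the restricted supremum as a real supremum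
  have hι : Nonempty (Set.Ici ε) := ⟨⟨ε, le_refl ε⟩⟩
  have hbdd : BddAbove (Set.range fun r : Set.Ici ε => A r) := by
    refine ⟨C / (2 * ε), ?_⟩
    rintro v ⟨⟨r, hr⟩, rfl⟩
    have hεr : ε ≤ r := hr
    have hrpos : 0 < r := lt_of_lt_of_le hε hεr
    calc A r ≤ C / (2 * r) := avg_le_bound f x hf hrpos
      _ ≤ C / (2 * ε) := div_le_div_of_nonneg_left hC0 (by linarith) (by linarith)
  set S : ℝ := ⨆ r : Set.Ici ε, A r with hS
  have hofS : ENNReal.ofReal S = ⨆ r : Set.Ici ε, ENNReal.ofReal (A r) :=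
    Monotone.map_ciSup_of_continuousAt
      ENNReal.continuous_ofReal.continuousAt
      (fun a b h => ENNReal.ofReal_le_ofReal h) hbdd
  have hmax_eq : maxFn f x = ENNReal.ofReal S := by
    rw [hb, hofS, iSup_subtype]
  have hmax_pos : 0 < maxFn f x := lt_of_le_of_lt zero_le hlt
  have hSpos : 0 < S := by
    by_contra h
    push_neg at h
    rw [hmax_eq, ENNReal.ofReal_eq_zero.mpr h] at hmax_pos
    exact lt_irrefl _ hmax_pos
  -- choose R beyond which averages are small
  set R : ℝ := max ε (C / S + 1) with hR
  have hεR : ε ≤ R := le_max_left _ _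
  have hRpos : 0 < R := lt_of_lt_of_le hε hεR
  have hCRS : C / (2 * R) < S := by
    rw [div_lt_iff₀ (by linarith)]
    have h2 : C / S + 1 ≤ R := le_max_right _ _
    have h4 : C ≤ (R - 1) * S := by
      have h5 : C / S ≤ R - 1 := by linarith
      calc C = C / S * S := by field_simp
        _ ≤ (R - 1) * S := mul_le_mul_of_nonneg_right h5 hSpos.le
    nlinarith
  -- max on the compact interval [ε, R]
  obtain ⟨r₀, hr₀mem, hr₀max⟩ :=
    (isCompact_Icc (a := ε) (b := R)).exists_isMaxOn (Set.nonempty_Icc.mpr hεR)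
      ((avg_continuousOn f x hf).mono (fun r hr => lt_of_lt_of_le hε hr.1))
  have hr₀pos : 0 < r₀ := lt_of_lt_of_le hε hr₀mem.1
  have hle : A r₀ ≤ S := le_ciSup hbdd (⟨r₀, hr₀mem.1⟩ : Set.Ici ε)
  have hkey : S ≤ max (A r₀) (C / (2 * R)) := by
    apply ciSup_le
    rintro ⟨r, hr⟩
    rcases le_or_gt r R with h | h
    · exact le_max_of_le_left (hr₀max ⟨hr, h⟩)
    · refine le_max_of_le_right ?_
      have hrpos : 0 < r := hRpos.trans h
      calc A r ≤ C / (2 * r) := avg_le_bound f x hf hrpos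
        _ ≤ C / (2 * R) := div_le_div_of_nonneg_left hC0 (by linarith) (by linarith)
  have hge : S ≤ A r₀ := by
    rcases le_max_iff.mp hkey with h | h
    · exact h
    · exact absurd (h.trans_lt hCRS) (lt_irrefl S)
  exact ⟨r₀, hr₀pos, by rw [hmax_eq]; exact congrArg ENNReal.ofReal (le_antisymm hle hge).symm⟩

end Aux

theorem frequency_zero_gives_small_radii (f : ℝ → ℝ) (hf : Integrable f) (x : ℝ)
    (hzero : freqFn f x = 0) :
    ∃ r : ℕ → ℝ, (∀ n, 0 < r n) ∧ Tendsto r atTop (nhds 0) ∧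
      Tendsto (fun n => ENNReal.ofReal (avgFn (fun y => |f y|) x (r n)))
        atTop (nhds (maxFn f x)) := by
  by_cases hne : (freqSet f x).Nonempty
  · -- the infimum of the frequency set is 0
    have hinf : sInf (freqSet f x) = 0 := by
      rwa [freqFn, if_pos hne] at hzero
    have hbdd : BddBelow (freqSet f x) := ⟨0, fun r hr => hr.1.le⟩
    have hchoice : ∀ n : ℕ, ∃ r ∈ freqSet f x, r < 1 / (n + 1) := by
      intro n
      have hpos : (0:ℝ) < 1 / (n + 1) := by positivity
      exact (csInf_lt_iff hbdd hne).mp (by rw [hinf]; exact hpos)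
    choose r hrmem hrlt using hchoice
    refine ⟨r, fun n => (hrmem n).1, ?_, ?_⟩
    · apply squeeze_zero (fun n => (hrmem n).1.le) (fun n => (hrlt n).le)
      exact tendsto_one_div_add_atTop_nhds_zero_nat
    · have heq : ∀ n, ENNReal.ofReal (avgFn (fun y => |f y|) x (r n)) = maxFn f x :=
        fun n => ((hrmem n).2).symm
      simp only [heq]
      exact tendsto_const_nhds
  · -- the maximal value is never attained
    have hpos : 0 < maxFn f x := by
      rcases eq_or_lt_of_le (zero_le : (0:ENNReal) ≤ maxFn f x) with h | h
      · exfalso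
        apply hne
        refine ⟨1, one_pos, ?_⟩
        have h1 : ENNReal.ofReal (avgFn (fun y => |f y|) x 1) ≤ maxFn f x := by
          refine le_iSup₂_of_le 1 one_pos le_rfl
        rw [← h] at h1 ⊢
        exact (le_antisymm h1 zero_le).symm
      · exact h
    -- the supremum over any interval of small radii equals maxFn
    have hsup : ∀ n : ℕ, (⨆ r ∈ Set.Ioo (0:ℝ) (1 / (n + 1)),
        ENNReal.ofReal (avgFn (fun y => |f y|) x r)) = maxFn f x := by
      intro n
      have hεpos : (0:ℝ) < 1 / (n + 1) := by positivity
      rcases lt_or_ge (⨆ r ∈ Set.Ioo (0:ℝ) (1 / (n + 1)),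
          ENNReal.ofReal (avgFn (fun y => |f y|) x r)) (maxFn f x) with h | h
      · exact absurd (attained_of_small_sup_lt f x hf hεpos h) hne
      · refine le_antisymm ?_ h
        apply iSup₂_le
        intro r hr
        exact le_iSup₂_of_le r hr.1 le_rfl
    obtain ⟨u, hu_mono, hu_mem, hu_tendsto⟩ := exists_seq_strictMono_tendsto' hpos
    have hchoice : ∀ n : ℕ, ∃ ρ : ℝ, ρ ∈ Set.Ioo (0:ℝ) (1 / (n + 1)) ∧
        u n < ENNReal.ofReal (avgFn (fun y => |f y|) x ρ) := by
      intro n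
      have h1 : u n < ⨆ r ∈ Set.Ioo (0:ℝ) (1 / (n + 1)),
          ENNReal.ofReal (avgFn (fun y => |f y|) x r) := by
        rw [hsup n]; exact (hu_mem n).2
      obtain ⟨ρ, hρ⟩ := lt_iSup_iff.mp h1
      obtain ⟨hρ1, hρ2⟩ := lt_iSup_iff.mp hρ
      exact ⟨ρ, hρ1, hρ2⟩
    choose r hrmem hrlt using hchoice
    refine ⟨r, fun n => (hrmem n).1, ?_, ?_⟩
    · apply squeeze_zero (fun n => (hrmem n).1.le) (fun n => (hrmem n).2.le)
      exact tendsto_one_div_add_atTop_nhds_zero_nat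
    · refine tendsto_of_tendsto_of_tendsto_of_le_of_le hu_tendsto tendsto_const_nhds
        (fun n => (hrlt n).le) (fun n => ?_)
      exact le_iSup₂_of_le (r n) (hrmem n).1 le_rfl
end

section
/- Let f ∈ L¹(ℝ). For every x ∈ ℝ and every l ∈ ℕ the limit T_l f(x) := lim_{k→∞} T_{k,l}f(x) exists as a real number, and moreover lim_{l→∞} T_l f(x) = Tf(x) for every x ∈ ℝ. -/
open MeasureTheory Filter Set Topology
open scoped Classical

/-- The auxiliary set `E_{f,x,k,l}` of rational radii. -/
def freqSetKL (f : ℝ → ℝ) (x : ℝ) (k l : ℕ) : Set ℝ :=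
  {r : ℝ | (∃ q : ℚ, (q : ℝ) = r) ∧ (2:ℝ) ^ (-(l : ℤ)) ≤ r ∧
    maxFn f x ≤ ENNReal.ofReal (avgFn (fun y => |f y|) x r) +
      ENNReal.ofReal ((2:ℝ) ^ (-(k : ℤ)))}

/-- The auxiliary frequency function `T_{k,l} f`. -/
noncomputable def freqFnKL (f : ℝ → ℝ) (k l : ℕ) (x : ℝ) : ℝ :=
  if (freqSetKL f x k l).Nonempty then sInf (freqSetKL f x k l) else 0

/-- Candidate limit set: radii `≥ 2⁻ˡ` where the maximal value is attained. -/
def auxCset (f : ℝ → ℝ) (x : ℝ) (l : ℕ) : Set ℝ :=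
  {r : ℝ | (2:ℝ) ^ (-(l : ℤ)) ≤ r ∧
    avgFn (fun y => |f y|) x r = (maxFn f x).toReal}

/-- The limit function `T_l f`. -/
noncomputable def auxT (f : ℝ → ℝ) (l : ℕ) (x : ℝ) : ℝ :=
  if maxFn f x ≠ ⊤ ∧ (auxCset f x l).Nonempty then sInf (auxCset f x l) else 0

lemma two_zpow_pos (l : ℕ) : (0:ℝ) < (2:ℝ) ^ (-(l : ℤ)) := by positivity

lemma two_zpow_tendsto : Tendsto (fun k : ℕ => (2:ℝ) ^ (-(k : ℤ))) atTop (nhds 0) := by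
  have h : ∀ k : ℕ, (2:ℝ) ^ (-(k : ℤ)) = (1/2 : ℝ) ^ k := by
    intro k
    rw [zpow_neg, zpow_natCast, one_div, inv_pow]
  simp only [h]
  exact tendsto_pow_atTop_nhds_zero_of_lt_one (by norm_num) (by norm_num)

lemma auxMaster (f : ℝ → ℝ) (hf : Integrable f) (x : ℝ) :
    (∀ l : ℕ, Tendsto (fun k : ℕ => freqFnKL f k l x) atTop (nhds (auxT f l x))) ∧
      Tendsto (fun l : ℕ => auxT f l x) atTop (nhds (freqFn f x)) := by
  have hh : Integrable (fun y => |f (x + y)|) :=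
    (((measurePreserving_add_left volume x).integrable_comp hf.aestronglyMeasurable).2 hf).abs
  set h : ℝ → ℝ := fun y => |f (x + y)| with hhdef
  set φ : ℝ → ℝ := fun r => avgFn (fun y => |f y|) x r with hφdef
  have hφav : ∀ r : ℝ, avgFn (fun y => |f y|) x r = φ r := fun r => rfl
  have hφeq : ∀ r : ℝ, φ r = (1 / (2 * r)) * ∫ y in (-r)..r, h y := fun r => rfl
  have hFcont : Continuous fun r : ℝ => ∫ y in (-r)..r, h y := by
    have hG : Continuous fun b : ℝ => ∫ y in (0:ℝ)..b, h y := hh.continuous_primitive 0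
    have heq : (fun r : ℝ => ∫ y in (-r)..r, h y)
        = fun r => (∫ y in (0:ℝ)..r, h y) - ∫ y in (0:ℝ)..(-r), h y := by
      funext r
      have := intervalIntegral.integral_add_adjacent_intervals (a := (0:ℝ)) (b := -r) (c := r)
        (hh.intervalIntegrable) (hh.intervalIntegrable)
      linarith
    rw [heq]; exact hG.sub (hG.comp continuous_neg)
  have hcont : ContinuousOn φ (Ioi 0) := by
    intro r hr
    apply ContinuousAt.continuousWithinAt
    have h2r : (2:ℝ) * r ≠ 0 := by have : (0:ℝ) < r := hr; positivity
    have h1 : ContinuousAt (fun r : ℝ => 1 / (2 * r)) r :=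
      ContinuousAt.div continuousAt_const (by fun_prop) h2r
    have : ContinuousAt (fun r : ℝ => (1 / (2 * r)) * ∫ y in (-r)..r, h y) r :=
      h1.mul hFcont.continuousAt
    exact this.congr (Eventually.of_forall fun s => (hφeq s).symm)
  have hnn : ∀ r : ℝ, 0 < r → 0 ≤ φ r := by
    intro r hr
    rw [hφeq]
    apply mul_nonneg (by positivity)
    exact intervalIntegral.integral_nonneg (by linarith) fun y _ => abs_nonneg _
  set I : ℝ := ∫ y, h y with hIdef
  have hI0 : 0 ≤ I := integral_nonneg fun y => abs_nonneg _
  have hφle' : ∀ r : ℝ, 0 < r → φ r ≤ I / (2 * r) := by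
    intro r hr
    have hF : (∫ y in (-r)..r, h y) ≤ I := by
      rw [intervalIntegral.integral_of_le (by linarith : -r ≤ r)]
      exact setIntegral_le_integral hh (Eventually.of_forall fun y => abs_nonneg _)
    rw [hφeq, one_div, inv_mul_eq_div]
    gcongr
  by_cases hM : maxFn f x = ⊤
  · -- infinite maximal value: everything is empty / zero
    have hKL0 : ∀ k l : ℕ, freqFnKL f k l x = 0 := by
      intro k l
      rw [freqFnKL, if_neg]
      rintro ⟨r, -, -, hineq⟩
      rw [hM, top_le_iff] at hineq
      have : ENNReal.ofReal (avgFn (fun y => |f y|) x r) +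
          ENNReal.ofReal ((2:ℝ) ^ (-(k : ℤ))) ≠ ⊤ := by finiteness
      exact this hineq
    have hT0 : ∀ l : ℕ, auxT f l x = 0 := by
      intro l; rw [auxT, if_neg]; simp [hM]
    have hfreq0 : freqFn f x = 0 := by
      rw [freqFn, if_neg]
      rintro ⟨r, -, hr2⟩
      rw [hM] at hr2
      exact ENNReal.ofReal_ne_top hr2.symm
    constructor
    · intro l
      simp only [hKL0, hT0]
      exact tendsto_const_nhds
    · simp only [hT0, hfreq0]
      exact tendsto_const_nhds
  · -- finite maximal value
    set M' : ℝ := (maxFn f x).toReal with hM'def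
    have hM'0 : 0 ≤ M' := ENNReal.toReal_nonneg
    have hMof : ENNReal.ofReal M' = maxFn f x := ENNReal.ofReal_toReal hM
    have hofle : ∀ r : ℝ, 0 < r → ENNReal.ofReal (φ r) ≤ maxFn f x := by
      intro r hr
      rw [maxFn]
      exact le_iSup₂ (f := fun (r : ℝ) (_ : 0 < r) =>
        ENNReal.ofReal (avgFn (fun y => |f y|) x r)) r hr
    have hle : ∀ r : ℝ, 0 < r → φ r ≤ M' := by
      intro r hr
      have h1 := hofle r hr
      rw [← hMof] at h1
      exact (ENNReal.ofReal_le_ofReal_iff hM'0).1 h1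
    have hmemS : ∀ (k l : ℕ) (r : ℝ), r ∈ freqSetKL f x k l ↔
        (∃ q : ℚ, (q:ℝ) = r) ∧ (2:ℝ) ^ (-(l:ℤ)) ≤ r ∧ M' ≤ φ r + (2:ℝ) ^ (-(k:ℤ)) := by
      intro k l r
      simp only [freqSetKL, mem_setOf_eq, hφav]
      constructor
      · rintro ⟨hq, hl, hineq⟩
        have hr : 0 < r := lt_of_lt_of_le (two_zpow_pos l) hl
        refine ⟨hq, hl, ?_⟩
        rw [← ENNReal.ofReal_add (hnn r hr) (two_zpow_pos k).le, ← hMof] at hineq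
        exact (ENNReal.ofReal_le_ofReal_iff
          (add_nonneg (hnn r hr) (two_zpow_pos k).le)).1 hineq
      · rintro ⟨hq, hl, hineq⟩
        have hr : 0 < r := lt_of_lt_of_le (two_zpow_pos l) hl
        refine ⟨hq, hl, ?_⟩
        rw [← ENNReal.ofReal_add (hnn r hr) (two_zpow_pos k).le, ← hMof]
        exact ENNReal.ofReal_le_ofReal hineq
    have hfreqC : freqSet f x = {r : ℝ | 0 < r ∧ φ r = M'} := by
      ext r
      simp only [freqSet, mem_setOf_eq, hφav]
      constructor
      · rintro ⟨hr, heq⟩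
        refine ⟨hr, ?_⟩
        rw [← hMof] at heq
        exact ((ENNReal.ofReal_eq_ofReal_iff hM'0 (hnn r hr)).1 heq).symm
      · rintro ⟨hr, heq⟩
        exact ⟨hr, by rw [← hMof, heq]⟩
    have hCseteq : ∀ l : ℕ, auxCset f x l = {r : ℝ | (2:ℝ) ^ (-(l:ℤ)) ≤ r ∧ φ r = M'} := by
      intro l; rfl
    have hpart1 : ∀ l : ℕ, Tendsto (fun k : ℕ => freqFnKL f k l x) atTop
        (nhds (auxT f l x)) := by
      intro l
      have hLpos : 0 < (2:ℝ) ^ (-(l:ℤ)) := two_zpow_pos l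
      by_cases hCl : (auxCset f x l).Nonempty
      · have hTval : auxT f l x = sInf (auxCset f x l) := if_pos ⟨hM, hCl⟩
        have hbddCl : BddBelow (auxCset f x l) :=
          ⟨(2:ℝ) ^ (-(l:ℤ)), fun r hr => by rw [hCseteq] at hr; exact hr.1⟩
        have hclosedCl : IsClosed (auxCset f x l) := by
          rw [hCseteq]
          have heq : {r : ℝ | (2:ℝ) ^ (-(l:ℤ)) ≤ r ∧ φ r = M'}
              = Ici ((2:ℝ) ^ (-(l:ℤ))) ∩ φ ⁻¹' {M'} := by
            ext r; simp [mem_setOf_eq]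
          rw [heq]
          exact (hcont.mono fun r hr => lt_of_lt_of_le hLpos hr).preimage_isClosed_of_isClosed
            isClosed_Ici isClosed_singleton
        have hρmem : sInf (auxCset f x l) ∈ auxCset f x l := hclosedCl.csInf_mem hCl hbddCl
        set ρ : ℝ := sInf (auxCset f x l) with hρdef
        rw [hCseteq] at hρmem
        obtain ⟨hρL, hρφ⟩ := hρmem
        have hρpos : 0 < ρ := lt_of_lt_of_le hLpos hρL
        have hcρ : ContinuousAt φ ρ := hcont.continuousAt (Ioi_mem_nhds hρpos)
        have hub : ∀ (k : ℕ) (ε : ℝ), 0 < ε →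
            ∃ q : ℝ, q ∈ freqSetKL f x k l ∧ q < ρ + ε := by
          intro k ε hε
          have hck : M' - (2:ℝ) ^ (-(k:ℤ)) < φ ρ := by
            rw [hρφ]; have := two_zpow_pos k; linarith
          have hev : φ ⁻¹' (Ioi (M' - (2:ℝ) ^ (-(k:ℤ)))) ∈ nhds ρ := hcρ (Ioi_mem_nhds hck)
          obtain ⟨δ, hδ0, hδ⟩ := Metric.mem_nhds_iff.1 hev
          obtain ⟨q, hq1, hq2⟩ := exists_rat_btwn (show ρ < ρ + min δ ε by
            have := lt_min hδ0 hε; linarith)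
          have hqball : (q:ℝ) ∈ Metric.ball ρ δ := by
            rw [Metric.mem_ball, Real.dist_eq, abs_of_pos (by linarith)]
            have := min_le_left δ ε; linarith
          have hqφ : M' - (2:ℝ) ^ (-(k:ℤ)) < φ q := hδ hqball
          refine ⟨q, (hmemS k l q).2 ⟨⟨q, rfl⟩, by linarith, by linarith⟩, ?_⟩
          have := min_le_right δ ε; linarith
        have hlb : ∀ ε : ℝ, 0 < ε →
            ∀ᶠ k : ℕ in atTop, ∀ s ∈ freqSetKL f x k l, ρ - ε < s := by
          intro ε hε
          by_cases hcase : ρ - ε < (2:ℝ) ^ (-(l:ℤ))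
          · filter_upwards with k s hs
            have := ((hmemS k l s).1 hs).2.1
            linarith
          · push_neg at hcase
            have hIcc : Icc ((2:ℝ) ^ (-(l:ℤ))) (ρ - ε) ⊆ Ioi 0 :=
              fun r hr => lt_of_lt_of_le hLpos hr.1
            obtain ⟨r₀, hr₀mem, hr₀max⟩ := isCompact_Icc.exists_isMaxOn
              ⟨(2:ℝ) ^ (-(l:ℤ)), left_mem_Icc.2 hcase⟩ (hcont.mono hIcc)
            have hr₀pos : 0 < r₀ := hIcc hr₀mem
            have hr₀lt : φ r₀ < M' := by
              rcases lt_or_eq_of_le (hle r₀ hr₀pos) with hlt | heq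
              · exact hlt
              · exfalso
                have hmem : r₀ ∈ auxCset f x l := by rw [hCseteq]; exact ⟨hr₀mem.1, heq⟩
                have h1 : ρ ≤ r₀ := csInf_le hbddCl hmem
                have h2 := hr₀mem.2
                linarith
            have hδev := two_zpow_tendsto.eventually_lt_const
              (show (0:ℝ) < M' - φ r₀ by linarith)
            filter_upwards [hδev] with k hk s hs
            obtain ⟨-, hsL, hsφ⟩ := (hmemS k l s).1 hs
            by_contra hcon
            push_neg at hcon
            have : φ s ≤ φ r₀ := hr₀max ⟨hsL, by linarith⟩
            linarith
        rw [hTval]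
        rw [Metric.tendsto_atTop]
        intro ε hε
        have hε2 : 0 < ε / 2 := by linarith
        obtain ⟨K, hK⟩ := eventually_atTop.1 (hlb (ε/2) hε2)
        refine ⟨K, fun k hk => ?_⟩
        obtain ⟨q, hqS, hqlt⟩ := hub k (ε/2) hε2
        have hSne : (freqSetKL f x k l).Nonempty := ⟨q, hqS⟩
        have hval : freqFnKL f k l x = sInf (freqSetKL f x k l) := if_pos hSne
        have hbddS : BddBelow (freqSetKL f x k l) :=
          ⟨(2:ℝ) ^ (-(l:ℤ)), fun s hs => ((hmemS k l s).1 hs).2.1⟩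
        have hup : sInf (freqSetKL f x k l) ≤ q := csInf_le hbddS hqS
        have hlo : ρ - ε/2 ≤ sInf (freqSetKL f x k l) :=
          le_csInf hSne fun s hs => (hK k hk s hs).le
        rw [hval, Real.dist_eq, abs_sub_lt_iff]
        constructor <;> linarith
      · have hTval : auxT f l x = 0 := if_neg fun hcond => hCl hcond.2
        have hM'pos : 0 < M' := by
          rcases lt_or_eq_of_le hM'0 with hlt | heq
          · exact hlt
          · exfalso
            apply hCl
            refine ⟨(2:ℝ) ^ (-(l:ℤ)), ?_⟩
            rw [hCseteq]
            refine ⟨le_refl _, le_antisymm (hle _ hLpos) ?_⟩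
            rw [← heq]
            exact hnn _ hLpos
        set R : ℝ := max ((2:ℝ) ^ (-(l:ℤ))) (I / M' + 1) with hRdef
        have hLR : (2:ℝ) ^ (-(l:ℤ)) ≤ R := le_max_left _ _
        have hRpos : 0 < R := lt_of_lt_of_le hLpos hLR
        have hIR : I / (2 * R) < M' := by
          rw [div_lt_iff₀ (by positivity)]
          have h1 : I / M' + 1 ≤ R := le_max_right _ _
          have h2 : M' * (I / M') = I := by field_simp
          nlinarith
        obtain ⟨r₀, hr₀mem, hr₀max⟩ := isCompact_Icc.exists_isMaxOn
          ⟨(2:ℝ) ^ (-(l:ℤ)), left_mem_Icc.2 hLR⟩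
          (hcont.mono fun r hr => lt_of_lt_of_le hLpos hr.1)
        have hr₀pos : 0 < r₀ := lt_of_lt_of_le hLpos hr₀mem.1
        have hr₀lt : φ r₀ < M' := by
          rcases lt_or_eq_of_le (hle r₀ hr₀pos) with hlt | heq
          · exact hlt
          · exact absurd ⟨r₀, by rw [hCseteq]; exact ⟨hr₀mem.1, heq⟩⟩ hCl
        have hδpos : 0 < min (M' - φ r₀) (M' - I / (2 * R)) :=
          lt_min (by linarith) (by linarith)
        have hev := two_zpow_tendsto.eventually_lt_const hδpos
        have hevempty : ∀ᶠ k : ℕ in atTop, freqFnKL f k l x = 0 := by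
          filter_upwards [hev] with k hk
          apply if_neg
          rintro ⟨s, hs⟩
          obtain ⟨-, hsL, hsφ⟩ := (hmemS k l s).1 hs
          have hspos : 0 < s := lt_of_lt_of_le hLpos hsL
          rcases le_or_gt s R with hsR | hsR
          · have h1 : φ s ≤ φ r₀ := hr₀max ⟨hsL, hsR⟩
            have h2 := min_le_left (M' - φ r₀) (M' - I / (2 * R))
            linarith
          · have h1 : φ s ≤ I / (2 * s) := hφle' s hspos
            have h2 : I / (2 * s) ≤ I / (2 * R) := by gcongr
            have h3 := min_le_right (M' - φ r₀) (M' - I / (2 * R))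
            linarith
        rw [hTval]
        exact Tendsto.congr' (hevempty.mono fun k hk => hk.symm) tendsto_const_nhds
    have hpart2 : Tendsto (fun l : ℕ => auxT f l x) atTop (nhds (freqFn f x)) := by
      by_cases hC : (freqSet f x).Nonempty
      · have hfv : freqFn f x = sInf (freqSet f x) := if_pos hC
        have hbddC : BddBelow (freqSet f x) :=
          ⟨0, fun r hr => by rw [hfreqC] at hr; exact hr.1.le⟩
        have hρ0 : 0 ≤ sInf (freqSet f x) :=
          le_csInf hC fun r hr => by rw [hfreqC] at hr; exact hr.1.le
        rcases lt_or_eq_of_le hρ0 with hρpos | hρzero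
        · set ρ : ℝ := sInf (freqSet f x) with hρdef
          have hCeq2 : freqSet f x = {r : ℝ | ρ ≤ r ∧ φ r = M'} := by
            ext r
            constructor
            · intro hr
              refine ⟨csInf_le hbddC hr, ?_⟩
              rw [hfreqC] at hr
              exact hr.2
            · intro hr
              rw [hfreqC]
              exact ⟨lt_of_lt_of_le hρpos hr.1, hr.2⟩
          have hclosedC : IsClosed (freqSet f x) := by
            rw [hCeq2]
            have heq : {r : ℝ | ρ ≤ r ∧ φ r = M'} = Ici ρ ∩ φ ⁻¹' {M'} := by
              ext r; simp [mem_setOf_eq]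
            rw [heq]
            exact (hcont.mono fun r hr => lt_of_lt_of_le hρpos hr).preimage_isClosed_of_isClosed
              isClosed_Ici isClosed_singleton
          have hρmem : ρ ∈ freqSet f x := hclosedC.csInf_mem hC hbddC
          have hρφ : φ ρ = M' := by rw [hfreqC] at hρmem; exact hρmem.2
          have hev : ∀ᶠ l : ℕ in atTop, (2:ℝ) ^ (-(l:ℤ)) ≤ ρ :=
            two_zpow_tendsto.eventually_le_const hρpos
          rw [hfv]
          refine Tendsto.congr' ?_ tendsto_const_nhds
          filter_upwards [hev] with l hl
          have hmem : ρ ∈ auxCset f x l := by rw [hCseteq]; exact ⟨hl, hρφ⟩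
          have hne : (auxCset f x l).Nonempty := ⟨ρ, hmem⟩
          have hTv : auxT f l x = sInf (auxCset f x l) := if_pos ⟨hM, hne⟩
          have hbdd : BddBelow (auxCset f x l) :=
            ⟨(2:ℝ) ^ (-(l:ℤ)), fun r hr => by rw [hCseteq] at hr; exact hr.1⟩
          have h1 : sInf (auxCset f x l) ≤ ρ := csInf_le hbdd hmem
          have h2 : ρ ≤ sInf (auxCset f x l) := by
            refine le_csInf hne fun b hb => ?_
            rw [hCseteq] at hb
            refine csInf_le hbddC ?_
            rw [hfreqC]
            exact ⟨lt_of_lt_of_le (two_zpow_pos l) hb.1, hb.2⟩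
          rw [hTv]
          linarith
        · rw [hfv, ← hρzero]
          rw [Metric.tendsto_atTop]
          intro ε hε
          obtain ⟨c, hcC, hcε⟩ := exists_lt_of_csInf_lt hC (by rw [← hρzero]; exact hε)
          have hcpos : 0 < c := by rw [hfreqC] at hcC; exact hcC.1
          have hcφ : φ c = M' := by rw [hfreqC] at hcC; exact hcC.2
          obtain ⟨N, hN⟩ := eventually_atTop.1 (two_zpow_tendsto.eventually_le_const hcpos)
          refine ⟨N, fun l hl => ?_⟩
          have hmem : c ∈ auxCset f x l := by rw [hCseteq]; exact ⟨hN l hl, hcφ⟩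
          have hne : (auxCset f x l).Nonempty := ⟨c, hmem⟩
          have hTv : auxT f l x = sInf (auxCset f x l) := if_pos ⟨hM, hne⟩
          have hbdd : BddBelow (auxCset f x l) :=
            ⟨(2:ℝ) ^ (-(l:ℤ)), fun r hr => by rw [hCseteq] at hr; exact hr.1⟩
          have h1 : sInf (auxCset f x l) ≤ c := csInf_le hbdd hmem
          have h2 : 0 ≤ sInf (auxCset f x l) := by
            refine le_csInf hne fun b hb => ?_
            rw [hCseteq] at hb
            exact (lt_of_lt_of_le (two_zpow_pos l) hb.1).le
          rw [hTv, Real.dist_eq, sub_zero, abs_of_nonneg h2]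
          linarith
      · have hfv : freqFn f x = 0 := if_neg hC
        have hT0 : ∀ l : ℕ, auxT f l x = 0 := by
          intro l
          apply if_neg
          rintro ⟨-, r, hr⟩
          apply hC
          rw [hCseteq] at hr
          refine ⟨r, ?_⟩
          rw [hfreqC]
          exact ⟨lt_of_lt_of_le (two_zpow_pos l) hr.1, hr.2⟩
        rw [hfv]
        simp only [hT0]
        exact tendsto_const_nhds
    exact ⟨hpart1, hpart2⟩

theorem auxiliary_frequency_converges (f : ℝ → ℝ) (hf : Integrable f) :
    ∃ T : ℕ → ℝ → ℝ,
      (∀ l : ℕ, ∀ x : ℝ, Tendsto (fun k : ℕ => freqFnKL f k l x) atTop (nhds (T l x))) ∧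
      (∀ x : ℝ, Tendsto (fun l : ℕ => T l x) atTop (nhds (freqFn f x))) := by
  exact ⟨auxT f, fun l x => (auxMaster f hf x).1 l, fun x => (auxMaster f hf x).2⟩
end

section
/- Define f₃ : ℝ → ℝ by f₃(x) = 1/n² if 2ⁿ ≤ x ≤ 2ⁿ + 1 for some n ∈ ℕ, n ≥ 1, and f₃(x) = 0 otherwise. Then f₃ ∈ L¹(ℝ), and there exists N ∈ ℕ such that for all n ≥ N and all x with 2ⁿ < x < 2ⁿ + 1 one has Tf₃(x) = 0. -/
open MeasureTheory Filter Set Topology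
open scoped Classical

/-- The function `f₃` equal to `1/n²` on `[2ⁿ, 2ⁿ+1]` for `n ≥ 1` and `0` elsewhere. -/
noncomputable def fThree : ℝ → ℝ := fun x =>
  ∑' n : ℕ, Set.indicator (Set.Icc ((2:ℝ) ^ (n + 1)) ((2:ℝ) ^ (n + 1) + 1))
    (fun _ => 1 / ((n : ℝ) + 1) ^ 2) x


lemma block_disjoint {m n : ℕ} (hmn : m ≠ n) {x : ℝ}
    (hx : x ∈ Set.Icc ((2:ℝ) ^ (n + 1)) ((2:ℝ) ^ (n + 1) + 1)) :
    x ∉ Set.Icc ((2:ℝ) ^ (m + 1)) ((2:ℝ) ^ (m + 1) + 1) := by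
  obtain ⟨h1, h2⟩ := hx
  rcases lt_or_gt_of_ne hmn with h | h
  · -- m < n : upper end of block m is below 2^(n+1) ≤ x
    intro hc
    have hle : (2:ℝ) ^ (m + 1) ≤ 2 ^ n :=
      pow_le_pow_right₀ (by norm_num) (by omega)
    have h2n : (1:ℝ) < 2 ^ n := by
      have : (2:ℝ)^1 ≤ 2^n := pow_le_pow_right₀ (by norm_num) (by omega)
      linarith
    have hps : (2:ℝ) ^ (n+1) = 2 ^ n * 2 := pow_succ 2 n
    have : (2:ℝ) ^ (m+1) + 1 < 2 ^ (n+1) := by linarith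
    linarith [hc.2]
  · -- n < m : 2^(m+1) ≥ 2^(n+2) > 2^(n+1)+1 ≥ x
    intro hc
    have hle : (2:ℝ) ^ (n + 2) ≤ 2 ^ (m+1) :=
      pow_le_pow_right₀ (by norm_num) (by omega)
    have h2n : (2:ℝ) ≤ 2 ^ (n+1) := by
      have : (2:ℝ)^1 ≤ 2^(n+1) := pow_le_pow_right₀ (by norm_num) (by omega)
      linarith
    have hps : (2:ℝ) ^ (n+2) = 2 ^ (n+1) * 2 := pow_succ 2 (n+1)
    have : (2:ℝ) ^ (n+1) + 1 < 2 ^ (n+2) := by linarith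
    linarith [hc.1]

lemma fThree_eq_single {n : ℕ} {x : ℝ}
    (hx : x ∈ Set.Icc ((2:ℝ) ^ (n + 1)) ((2:ℝ) ^ (n + 1) + 1)) :
    fThree x = 1 / ((n : ℝ) + 1) ^ 2 := by
  unfold fThree
  rw [tsum_eq_single n]
  · exact Set.indicator_of_mem hx _
  · intro m hmn
    exact Set.indicator_of_notMem (block_disjoint hmn hx) _

lemma fThree_eq_zero {x : ℝ}
    (hx : ∀ n : ℕ, x ∉ Set.Icc ((2:ℝ) ^ (n + 1)) ((2:ℝ) ^ (n + 1) + 1)) :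
    fThree x = 0 := by
  unfold fThree
  have : ∀ n : ℕ, Set.indicator (Set.Icc ((2:ℝ) ^ (n + 1)) ((2:ℝ) ^ (n + 1) + 1))
      (fun _ => 1 / ((n : ℝ) + 1) ^ 2) x = 0 := fun n =>
    Set.indicator_of_notMem (hx n) _
  simp only [this, tsum_zero]

lemma fThree_nonneg (x : ℝ) : 0 ≤ fThree x :=
  tsum_nonneg fun n => Set.indicator_nonneg (fun _ _ => by positivity) x

noncomputable def GG : ℝ → ENNReal := fun x =>
  ∑' n : ℕ, Set.indicator (Set.Icc ((2:ℝ) ^ (n + 1)) ((2:ℝ) ^ (n + 1) + 1))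
    (fun _ => ENNReal.ofReal (1 / ((n : ℝ) + 1) ^ 2)) x

lemma GG_meas : Measurable GG := by
  unfold GG
  exact Measurable.ennreal_tsum fun n => measurable_const.indicator measurableSet_Icc

noncomputable def TT : ℝ := ∑' n : ℕ, 1 / ((n : ℝ) + 1) ^ 2

lemma summable_TT : Summable (fun n : ℕ => 1 / ((n : ℝ) + 1) ^ 2) := by
  have h := (Real.summable_one_div_nat_pow (p := 2)).2 (by norm_num)
  have := (summable_nat_add_iff (f := fun n : ℕ => 1 / (n : ℝ) ^ 2) 1).2 h
  refine this.congr fun n => by push_cast; ring_nf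

lemma TT_le_two : TT ≤ 2 := by
  have hs : HasSum (fun n : ℕ => (1:ℝ) / (n : ℝ) ^ 2) (Real.pi ^ 2 / 6) := hasSum_zeta_two
  have hs2 : HasSum (fun n : ℕ => (1:ℝ) / ((n:ℝ) + 1) ^ 2) (Real.pi ^ 2 / 6) := by
    have h2 := (hasSum_nat_add_iff' (f := fun n : ℕ => (1:ℝ) / (n : ℝ) ^ 2) (g := Real.pi ^ 2 / 6) 1).2 hs
    simp only [Finset.range_one, Finset.sum_singleton, Nat.cast_zero] at h2
    norm_num at h2
    exact h2.congr_fun fun n => by push_cast; ring_nf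
  rw [TT, hs2.tsum_eq]
  nlinarith [Real.pi_lt_d2, Real.pi_pos]

lemma TT_nonneg : 0 ≤ TT := tsum_nonneg fun n => by positivity

lemma ofReal_fThree (x : ℝ) : ENNReal.ofReal (fThree x) = GG x := by
  by_cases h : ∃ n : ℕ, x ∈ Set.Icc ((2:ℝ) ^ (n + 1)) ((2:ℝ) ^ (n + 1) + 1)
  · obtain ⟨n, hn⟩ := h
    rw [fThree_eq_single hn]
    have : GG x = ENNReal.ofReal (1 / ((n : ℝ) + 1) ^ 2) := by
      unfold GG
      rw [tsum_eq_single n]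
      · exact Set.indicator_of_mem hn _
      · intro m hmn
        exact Set.indicator_of_notMem (block_disjoint hmn hn) _
    rw [this]
  · push_neg at h
    rw [fThree_eq_zero h]
    have : GG x = 0 := by
      unfold GG
      have : ∀ n : ℕ, Set.indicator (Set.Icc ((2:ℝ) ^ (n + 1)) ((2:ℝ) ^ (n + 1) + 1))
          (fun _ => ENNReal.ofReal (1 / ((n : ℝ) + 1) ^ 2)) x = 0 := fun n =>
        Set.indicator_of_notMem (h n) _
      simp only [this, tsum_zero]
    rw [this, ENNReal.ofReal_zero]

lemma fThree_meas : Measurable fThree := by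
  have : fThree = fun x => (GG x).toReal := by
    funext x
    rw [← ofReal_fThree, ENNReal.toReal_ofReal (fThree_nonneg x)]
  rw [this]
  exact GG_meas.ennreal_toReal

lemma lintegral_GG : ∫⁻ x, GG x = ENNReal.ofReal TT := by
  unfold GG
  rw [lintegral_tsum fun n => (measurable_const.indicator measurableSet_Icc).aemeasurable]
  have h1 : ∀ n : ℕ, (∫⁻ x, Set.indicator (Set.Icc ((2:ℝ) ^ (n + 1)) ((2:ℝ) ^ (n + 1) + 1))
      (fun _ => ENNReal.ofReal (1 / ((n : ℝ) + 1) ^ 2)) x) = ENNReal.ofReal (1 / ((n : ℝ) + 1) ^ 2) := by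
    intro n
    rw [lintegral_indicator_const measurableSet_Icc, Real.volume_Icc]
    norm_num
  simp only [h1]
  rw [TT, ENNReal.ofReal_tsum_of_nonneg (fun n => by positivity) summable_TT]

lemma fThree_integrable : Integrable fThree := by
  constructor
  · exact fThree_meas.aestronglyMeasurable
  · rw [hasFiniteIntegral_iff_ofReal (Eventually.of_forall fThree_nonneg)]
    have : ∀ x : ℝ, ENNReal.ofReal (fThree x) = GG x := ofReal_fThree
    simp only [this]
    rw [lintegral_GG]
    exact ENNReal.ofReal_lt_top

lemma integral_fThree : ∫ x, fThree x = TT := by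
  have h := ofReal_integral_eq_lintegral_ofReal fThree_integrable
    (Eventually.of_forall fThree_nonneg)
  simp only [ofReal_fThree] at h
  rw [lintegral_GG] at h
  exact (ENNReal.ofReal_eq_ofReal_iff (integral_nonneg fThree_nonneg) TT_nonneg).1 h





lemma abs_fThree : (fun y => |fThree y|) = fThree :=
  funext fun y => abs_of_nonneg (fThree_nonneg y)

lemma avg_shift (x r : ℝ) :
    avgFn fThree x r = (1 / (2 * r)) * ∫ t in (x - r)..(x + r), fThree t := by
  unfold avgFn
  rw [intervalIntegral.integral_comp_add_left fThree x]
  rw [show x + -r = x - r by ring]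

lemma nat_ineq (m : ℕ) (hm : 7 ≤ m) : ((m : ℝ) + 1) ^ 2 + 1 ≤ 2 ^ m := by
  have h : ∀ k : ℕ, 7 ≤ k → (k + 1) ^ 2 + 1 ≤ 2 ^ k := by
    intro k hk
    induction k, hk using Nat.le_induction with
    | base => norm_num
    | succ k hk ih =>
      have : (k + 2) ^ 2 + 1 ≤ 2 * ((k + 1) ^ 2 + 1) := by nlinarith
      calc (k + 2) ^ 2 + 1 ≤ 2 * ((k + 1) ^ 2 + 1) := this
        _ ≤ 2 * 2 ^ k := by omega
        _ = 2 ^ (k + 1) := by ring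
  have := h m hm
  have : ((m + 1) ^ 2 + 1 : ℕ) ≤ (2 ^ m : ℕ) := this
  calc ((m : ℝ) + 1) ^ 2 + 1 = (((m + 1) ^ 2 + 1 : ℕ) : ℝ) := by push_cast; ring
    _ ≤ ((2 ^ m : ℕ) : ℝ) := by exact_mod_cast this
    _ = 2 ^ m := by push_cast; ring

lemma main_lemma (m : ℕ) (hm : 7 ≤ m) (x : ℝ)
    (hx1 : (2:ℝ) ^ (m + 1) < x) (hx2 : x < (2:ℝ) ^ (m + 1) + 1) :
    freqFn fThree x = 0 := by
  set c : ℝ := 1 / ((m : ℝ) + 1) ^ 2 with hc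
  have hc0 : 0 < c := by positivity
  set d : ℝ := min (x - 2 ^ (m + 1)) (2 ^ (m + 1) + 1 - x) with hd
  have hd0 : 0 < d := lt_min (by linarith) (by linarith)
  have hdle : ∀ r : ℝ, r ≤ d → 2 ^ (m + 1) ≤ x - r ∧ x + r ≤ 2 ^ (m + 1) + 1 := by
    intro r hr
    have h1 := min_le_left (x - 2 ^ (m + 1)) (2 ^ (m + 1) + 1 - x)
    have h2 := min_le_right (x - 2 ^ (m + 1)) (2 ^ (m + 1) + 1 - x)
    constructor <;> [linarith; linarith]
  -- exact value of averages at small radii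
  have havg_eq : ∀ r : ℝ, 0 < r → r ≤ d → avgFn fThree x r = c := by
    intro r hr hrd
    obtain ⟨h1, h2⟩ := hdle r hrd
    rw [avg_shift]
    have hco : ∀ t ∈ Set.uIcc (x - r) (x + r), fThree t = c := by
      intro t ht
      rw [Set.uIcc_of_le (by linarith)] at ht
      exact fThree_eq_single ⟨by linarith [ht.1], by linarith [ht.2]⟩
    rw [intervalIntegral.integral_congr hco, intervalIntegral.integral_const,
      smul_eq_mul]
    field_simp
    ring
  -- upper bound on all averages
  have havg_le : ∀ r : ℝ, 0 < r → avgFn fThree x r ≤ c := by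
    intro r hr
    rw [avg_shift]
    have h2r : (0:ℝ) < 2 * r := by linarith
    rcases le_or_gt r (2 ^ m - 1) with hcase | hcase
    · -- small radius: pointwise bound by c
      have hps2 : (2:ℝ) ^ (m + 1) = 2 ^ m * 2 := pow_succ 2 m
      have hps3 : (2:ℝ) ^ (m + 2) = 2 ^ (m + 1) * 2 := pow_succ 2 (m + 1)
      have h1m : (1:ℝ) ≤ 2 ^ m := one_le_pow₀ (by norm_num)
      have hpt : ∀ t ∈ Set.Icc (x - r) (x + r), fThree t ≤ c := by
        intro t ht
        have ht1 : (2:ℝ) ^ m + 1 < t := by linarith [ht.1]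
        have ht2 : t < (2:ℝ) ^ (m + 2) := by linarith [ht.2]
        by_cases hb : t ∈ Set.Icc ((2:ℝ) ^ (m + 1)) ((2:ℝ) ^ (m + 1) + 1)
        · rw [fThree_eq_single hb]
        · rw [fThree_eq_zero ?_]
          · positivity
          · intro k
            rcases lt_trichotomy k m with hk | hk | hk
            · intro hkc
              have hle : (2:ℝ) ^ (k + 1) ≤ 2 ^ m :=
                pow_le_pow_right₀ (by norm_num) (by omega)
              have := hkc.2
              linarith
            · rw [hk]; exact hb
            · intro hkc
              have hle : (2:ℝ) ^ (m + 2) ≤ 2 ^ (k + 1) :=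
                pow_le_pow_right₀ (by norm_num) (by omega)
              have := hkc.1
              linarith
      have hint : (∫ t in (x - r)..(x + r), fThree t) ≤ ∫ t in (x - r)..(x + r), c :=
        intervalIntegral.integral_mono_on (by linarith)
          fThree_integrable.intervalIntegrable intervalIntegrable_const hpt
      rw [intervalIntegral.integral_const, smul_eq_mul] at hint
      calc (1 / (2 * r)) * ∫ t in (x - r)..(x + r), fThree t
          ≤ (1 / (2 * r)) * ((x + r - (x - r)) * c) :=
            mul_le_mul_of_nonneg_left hint (by positivity)
        _ = c := by field_simp; ring
    · -- large radius: use total mass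
      have hTT : (∫ t in (x - r)..(x + r), fThree t) ≤ TT := by
        rw [intervalIntegral.integral_of_le (by linarith)]
        calc (∫ t in Set.Ioc (x - r) (x + r), fThree t) ≤ ∫ t, fThree t :=
              setIntegral_le_integral fThree_integrable (Eventually.of_forall fThree_nonneg)
          _ = TT := integral_fThree
      have hr_big : ((m : ℝ) + 1) ^ 2 ≤ r := by
        have := nat_ineq m hm
        linarith
      have hm2 : (0:ℝ) < ((m : ℝ) + 1) ^ 2 := by positivity
      calc (1 / (2 * r)) * ∫ t in (x - r)..(x + r), fThree t
          ≤ (1 / (2 * r)) * TT := mul_le_mul_of_nonneg_left hTT (by positivity)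
        _ ≤ (1 / (2 * r)) * 2 := mul_le_mul_of_nonneg_left TT_le_two (by positivity)
        _ = 1 / r := by field_simp
        _ ≤ c := by
            rw [hc]
            rw [div_le_div_iff₀ (by linarith) hm2]
            nlinarith
  -- the maximal function equals c
  have hmax : maxFn fThree x = ENNReal.ofReal c := by
    unfold maxFn
    rw [abs_fThree]
    apply le_antisymm
    · exact iSup₂_le fun r hr => ENNReal.ofReal_le_ofReal (havg_le r hr)
    · have h := le_iSup₂ (f := fun (r : ℝ) (_ : 0 < r) =>
        ENNReal.ofReal (avgFn fThree x r)) d hd0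
      rwa [havg_eq d hd0 le_rfl] at h
  -- membership in freqSet for all small radii
  have hmem : ∀ r : ℝ, 0 < r → r ≤ d → r ∈ freqSet fThree x := by
    intro r hr hrd
    refine ⟨hr, ?_⟩
    rw [abs_fThree, havg_eq r hr hrd, hmax]
  have hne : (freqSet fThree x).Nonempty := ⟨d, hmem d hd0 le_rfl⟩
  have hbdd : BddBelow (freqSet fThree x) := ⟨0, fun y hy => hy.1.le⟩
  have hinf0 : sInf (freqSet fThree x) = 0 := by
    apply le_antisymm
    · apply le_of_forall_pos_le_add
      intro ε hε
      have hmin : min ε d ∈ freqSet fThree x :=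
        hmem _ (lt_min hε hd0) (min_le_right _ _)
      have := csInf_le hbdd hmin
      have h2 := min_le_left ε d
      linarith
    · exact le_csInf hne fun y hy => hy.1.le
  rw [freqFn, if_pos hne, hinf0]

theorem sparse_function_zero_frequency :
    Integrable fThree ∧
      ∃ N : ℕ, ∀ n : ℕ, N ≤ n → ∀ x : ℝ,
        (2:ℝ) ^ n < x → x < (2:ℝ) ^ n + 1 → freqFn fThree x = 0 := by
  refine ⟨fThree_integrable, 8, ?_⟩
  intro n hn x hx1 hx2
  obtain ⟨m, rfl⟩ : ∃ m, n = m + 1 := ⟨n - 1, by omega⟩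
  exact main_lemma m (by omega) x hx1 hx2
end
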